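/- arXiv:1308.3279 — 11 statements merged into one kernel-verified Lean document; each statement's English description precedes it below -/
import Mathlib

section
/- Let I be a finite set, and for α ∈ I let C_α and Z_α be ℕ-valued random variables, with the Z_α mutually independent. Let w : I → ℤ be a deterministic weight function, let T = Σ_{α∈I} w(α) Z_α, and let t ∈ ℤ be such that P(T = t) > 0. Suppose the process (C_α)_{α∈I} is equal in distribution to ((Z_α)_{α∈I} | T = t). For B ⊆ I, write C_B = (C_α)_{α∈B}, Z_B = (Z_α)_{α∈B}, and R_B = Σ_{α∈B} w(α) Z_α. Then d_TV(C_B, Z_B) = d_TV((R_B | T = t), R_B). -/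
open MeasureTheory ProbabilityTheory

/-- Total variation distance between two (sub)probability mass functions on a
countable space: `d_TV(p,q) = (1/2) Σ_s |p s - q s|`. -/
noncomputable def dTV {S : Type*} (p q : S → ℝ) : ℝ := (1 / 2) * ∑' s, |p s - q s|

/-!
Write `T = R_B + S` with `S = Σ_{α ∉ B} w(α) Z_α`, which is independent of `Z_B`. Then
`P(Z_B = b | T = t) = P(Z_B = b) ψ(R_B(b))` with `ψ(r) = P(S = t - r) / P(T = t)`: the likelihood
ratio of `C_B` against `Z_B` depends on `b` only through `R_B(b)`, and summing over the fibres of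
`R_B` shows that the same ratio `ψ(r)` relates `(R_B | T = t)` to `R_B`. Hence the terms
`P(Z_B = b) |ψ(R_B(b)) - 1|` of `d_TV(C_B, Z_B)`, grouped by the value of `R_B(b)`, are exactly the
terms `P(R_B = r) |ψ(r) - 1|` of `d_TV((R_B | T = t), R_B)`.
-/

open scoped ENNReal

section Fibres

variable {Ω β γ : Type*} [MeasurableSpace Ω] [MeasurableSpace β] [Countable β]
  [MeasurableSingletonClass β] {X : Ω → β}

lemma measure_comp_eq_tsum_fibre (μ : Measure Ω) (hX : Measurable X) (f : β → γ) (r : γ) :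
    μ {ω | f (X ω) = r} = ∑' b : f ⁻¹' {r}, μ {ω | X ω = b} :=
  (tsum_measure_preimage_singleton (s := f ⁻¹' {r}) (Set.to_countable _)
    fun b _ => hX (measurableSet_singleton b)).symm

lemma measure_comp_eq_of_forall_measure_eq {μ ν : Measure Ω} {Y : Ω → β}
    (hX : Measurable X) (hY : Measurable Y) (h : ∀ b, μ {ω | X ω = b} = ν {ω | Y ω = b})
    (f : β → γ) (r : γ) : μ {ω | f (X ω) = r} = ν {ω | f (Y ω) = r} := by
  rw [measure_comp_eq_tsum_fibre μ hX, measure_comp_eq_tsum_fibre ν hY]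
  exact tsum_congr fun b => h b

lemma measure_comp_eq_mul_of_forall_measure_eq_mul {μ ν : Measure Ω} (hX : Measurable X)
    (f : β → γ) (ψ : γ → ℝ≥0∞) (h : ∀ b, ν {ω | X ω = b} = μ {ω | X ω = b} * ψ (f b))
    (r : γ) : ν {ω | f (X ω) = r} = μ {ω | f (X ω) = r} * ψ r := by
  rw [measure_comp_eq_tsum_fibre ν hX, measure_comp_eq_tsum_fibre μ hX, ← ENNReal.tsum_mul_right]
  exact tsum_congr fun b => by rw [h, (b.2 : f b = r)]

lemma tsum_measure_mul_comp (μ : Measure Ω) (hX : Measurable X) (f : β → γ)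
    (φ : γ → ℝ≥0∞) :
    ∑' b, μ {ω | X ω = b} * φ (f b) = ∑' r, μ {ω | f (X ω) = r} * φ r := by
  rw [← ENNReal.tsum_fiberwise _ f]
  refine tsum_congr fun r => ?_
  rw [measure_comp_eq_tsum_fibre μ hX, ← ENNReal.tsum_mul_right]
  exact tsum_congr fun b => by rw [(b.2 : f b = r)]

theorem dTV_comp_eq_of_ratio_factors {μ ν : Measure Ω} [IsFiniteMeasure μ] (hX : Measurable X)
    (f : β → γ) (ψ : γ → ℝ≥0∞) (h : ∀ b, ν {ω | X ω = b} = μ {ω | X ω = b} * ψ (f b)) :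
    dTV (fun b => (ν {ω | X ω = b}).toReal) (fun b => (μ {ω | X ω = b}).toReal)
      = dTV (fun r => (ν {ω | f (X ω) = r}).toReal) (fun r => (μ {ω | f (X ω) = r}).toReal) := by
  have dist_eq (a c : ℝ≥0∞) :
      |(a * c).toReal - a.toReal| = (a * ENNReal.ofReal |c.toReal - 1|).toReal := by
    rw [ENNReal.toReal_mul, ENNReal.toReal_mul, ENNReal.toReal_ofReal (abs_nonneg _),
      ← mul_sub_one, abs_mul, abs_of_nonneg ENNReal.toReal_nonneg]
  have ne_top (A : Set Ω) (x : ℝ) : μ A * ENNReal.ofReal x ≠ ∞ :=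
    ENNReal.mul_ne_top (measure_ne_top μ A) ENNReal.ofReal_ne_top
  unfold dTV
  congr 1
  simp only [h, measure_comp_eq_mul_of_forall_measure_eq_mul hX f ψ h, dist_eq]
  rw [← ENNReal.tsum_toReal_eq fun _ => ne_top _ _, ← ENNReal.tsum_toReal_eq fun _ => ne_top _ _,
    tsum_measure_mul_comp μ hX f fun r => ENNReal.ofReal |(ψ r).toReal - 1|]

end Fibres

lemma cond_eq_mul_of_indepFun {Ω β G : Type*} [MeasurableSpace Ω] [MeasurableSpace β]
    [MeasurableSingletonClass β] [AddCommGroup G] [MeasurableSpace G]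
    [MeasurableSingletonClass G] {μ : Measure Ω} {X : Ω → β} {Y : Ω → G}
    (hX : Measurable X) (hXY : IndepFun X Y μ) (f : β → G) (t : G) (b : β) :
    μ[{ω | X ω = b} | {ω | f (X ω) + Y ω = t}]
      = μ {ω | X ω = b} * ((μ {ω | f (X ω) + Y ω = t})⁻¹ * μ {ω | Y ω = t - f b}) := by
  have hinter : {ω | f (X ω) + Y ω = t} ∩ {ω | X ω = b} = X ⁻¹' {b} ∩ Y ⁻¹' {t - f b} := by
    ext ω
    simp only [Set.mem_inter_iff, Set.mem_ofPred_eq, Set.mem_preimage, Set.mem_singleton_iff]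
    constructor
    · rintro ⟨hsum, rfl⟩
      exact ⟨rfl, eq_sub_of_add_eq' hsum⟩
    · rintro ⟨rfl, hY⟩
      exact ⟨by rw [hY, add_sub_cancel], rfl⟩
  rw [cond_apply' (t := {ω | X ω = b}) (hX (measurableSet_singleton b)), hinter,
    hXY.measure_inter_preimage_eq_mul _ _ (measurableSet_singleton _) (measurableSet_singleton _)]
  exact mul_left_comm _ _ _

theorem stmt3_general
    {Ω : Type*} [MeasurableSpace Ω] (μ : Measure Ω) [IsProbabilityMeasure μ]
    {I : Type*} [Fintype I]
    (C : Ω → I → ℕ) (Z : I → Ω → ℕ)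
    (hCmeas : Measurable C) (hZmeas : ∀ α, Measurable (Z α))
    (hindep : iIndepFun Z μ)
    (w : I → ℤ) (t : ℤ)
    (T : Ω → ℤ) (hT : T = fun ω => ∑ α, w α * (Z α ω : ℤ))
    (hC : ∀ a : I → ℕ,
      μ {ω | C ω = a}
        = μ ({ω | (fun α => Z α ω) = a} ∩ {ω | T ω = t}) / μ {ω | T ω = t})
    (B : Finset I) :
    dTV (fun b : B → ℕ => (μ {ω | (fun α : B => C ω α) = b}).toReal)
        (fun b : B → ℕ => (μ {ω | (fun α : B => Z α ω) = b}).toReal)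
      = dTV (fun r : ℤ =>
              (μ ({ω | (∑ α ∈ B, w α * (Z α ω : ℤ)) = r} ∩ {ω | T ω = t})
                / μ {ω | T ω = t}).toReal)
            (fun r : ℤ => (μ {ω | (∑ α ∈ B, w α * (Z α ω : ℤ)) = r}).toReal) := by
  classical
  set ZB : Ω → B → ℕ := fun ω α => Z α ω
  let RB : (B → ℕ) → ℤ := fun b => ∑ α : B, w α * (b α : ℤ)
  set S : Ω → ℤ := fun ω => ∑ α : ↥Bᶜ, w α * (Z α ω : ℤ)
  have hZB : Measurable ZB := measurable_pi_lambda _ fun α => hZmeas α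
  have hZBS : IndepFun ZB S μ :=
    (hindep.indepFun_finset B Bᶜ disjoint_compl_right hZmeas).comp measurable_id
      (measurable_of_countable fun c : ↥Bᶜ → ℕ => ∑ α : ↥Bᶜ, w α * (c α : ℤ))
  have hRB (ω : Ω) : ∑ α ∈ B, w α * (Z α ω : ℤ) = RB (ZB ω) := (Finset.sum_coe_sort B _).symm
  have hS (ω : Ω) : ∑ α ∈ Bᶜ, w α * (Z α ω : ℤ) = S ω := (Finset.sum_coe_sort Bᶜ _).symm
  have hTS : {ω | T ω = t} = {ω | RB (ZB ω) + S ω = t} := by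
    simp only [hT, ← Finset.sum_add_sum_compl B, hRB, hS]
  have hTmeas : MeasurableSet {ω | T ω = t} := by
    rw [hT]
    exact Finset.measurable_sum _
      (fun α _ => (measurable_of_countable fun n : ℕ => w α * (n : ℤ)).comp (hZmeas α))
      (measurableSet_singleton t)
  have cond_eq (A : Set Ω) : μ (A ∩ {ω | T ω = t}) / μ {ω | T ω = t}
      = μ[A | {ω | T ω = t}] := by
    rw [cond_apply hTmeas, ENNReal.div_eq_inv_mul, Set.inter_comm]
  have hCB (b : B → ℕ) :
      μ {ω | (fun α : B => C ω α) = b} = μ[{ω | ZB ω = b} | {ω | T ω = t}] :=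
    measure_comp_eq_of_forall_measure_eq hCmeas (measurable_pi_lambda _ hZmeas)
      (fun a => by rw [hC a, cond_eq]) (fun a (α : B) => a α) b
  simp only [hRB, cond_eq, hCB]
  rw [hTS]
  exact dTV_comp_eq_of_ratio_factors hZB RB
    (fun r => (μ {ω | RB (ZB ω) + S ω = t})⁻¹ * μ {ω | S ω = t - r})
    (cond_eq_mul_of_indepFun hZB hZBS RB t)

/-- If `C ≝ (Z | T = t)` with `Z_α` mutually independent and
`T = Σ_α w(α) Z_α`, then for any `B ⊆ I`,
`d_TV(C_B, Z_B) = d_TV((R_B | T = t), R_B)` where `R_B = Σ_{α∈B} w(α) Z_α`. -/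
theorem stmt3
    {Ω : Type*} [MeasurableSpace Ω] (μ : Measure Ω) [IsProbabilityMeasure μ]
    {I : Type*} [Fintype I]
    (C : Ω → I → ℕ) (Z : I → Ω → ℕ)
    (hCmeas : Measurable C) (hZmeas : ∀ α, Measurable (Z α))
    (hindep : iIndepFun Z μ)
    (w : I → ℤ) (t : ℤ)
    (T : Ω → ℤ) (hT : T = fun ω => ∑ α, w α * (Z α ω : ℤ))
    (hpos : μ {ω | T ω = t} ≠ 0)
    (hC : ∀ a : I → ℕ,
      μ {ω | C ω = a}
        = μ ({ω | (fun α => Z α ω) = a} ∩ {ω | T ω = t}) / μ {ω | T ω = t})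
    (B : Finset I) :
    dTV (fun b : B → ℕ => (μ {ω | (fun α : B => C ω α) = b}).toReal)
        (fun b : B → ℕ => (μ {ω | (fun α : B => Z α ω) = b}).toReal)
      = dTV (fun r : ℤ =>
              (μ ({ω | (∑ α ∈ B, w α * (Z α ω : ℤ)) = r} ∩ {ω | T ω = t})
                / μ {ω | T ω = t}).toReal)
            (fun r : ℤ => (μ {ω | (∑ α ∈ B, w α * (Z α ω : ℤ)) = r}).toReal) :=
  stmt3_general μ C Z hCmeas hZmeas hindep w t T hT hC B
end

section
/- Let I be a finite set, and for α ∈ I let C_α and Z_α be ℕ-valued random variables, with the Z_α mutually independent. Let w : I → ℤ be a deterministic weight function, let T = Σ_{α∈I} w(α) Z_α, and let t ∈ ℤ be such that P(T = t) > 0. Suppose (C_α)_{α∈I} is equal in distribution to ((Z_α)_{α∈I} | T = t). For B ⊆ I, write C_B = (C_α)_{α∈B}, Z_B = (Z_α)_{α∈B}, R = Σ_{α∈B} w(α) Z_α and S = Σ_{α∈I−B} w(α) Z_α, so T = R + S with R and S independent. Then for any subset A ⊆ ℤ, d_TV(C_B, Z_B) ≤ P(R ∉ A) + sup_{r∈A}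 (1 − P(S = t − r)/P(T = t))⁺, where y⁺ = max(y,0). -/
/-!
Write `q b = P(Z_B = b)` and `p b = P(C_B = b)`. Since `C` has the law of `Z` given `T = t`, and
`T = R + S` with `R` a function `r(Z_B)` of `Z_B` independent of `S`,
`p b = q b · P(S = t - r(b)) / P(T = t)`. As `p` and `q` both have total mass one,
`d_TV = Σ_b (q b - p b)⁺ = Σ_b q b (1 - P(S = t - r(b)) / P(T = t))⁺`; the summand is at most
`q b` when `r(b) ∉ A`, and at most `q b` times the supremum over `A` otherwise.
-/

open MeasureTheory ProbabilityTheory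

lemma le_biSup_of_forall_le {ι : Type*} {f : ι → ℝ} {c : ℝ} (hf : ∀ i, f i ≤ c) {A : Set ι}
    {i : ι} (hi : i ∈ A) : f i ≤ ⨆ j ∈ A, f j :=
  le_ciSup₂ (f := fun j (_ : j ∈ A) => f j) ⟨c, by
    rintro _ ⟨_, ⟨j, rfl⟩, ⟨_, rfl⟩⟩
    exact hf j⟩ i hi

section TotalVariation

variable {β : Type*}

lemma dTV_eq_tsum_max_sub {p q : β → ℝ} (hp : Summable p) (hq : Summable q)
    (hpq : ∑' b, p b = ∑' b, q b) : dTV p q = ∑' b, max (q b - p b) 0 := by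
  have habs : ∀ b, |p b - q b| = 2 * max (q b - p b) 0 - (q b - p b) := fun b => by
    rcases le_total (p b) (q b) with h | h
    · rw [abs_of_nonpos (by linarith), max_eq_left (by linarith)]; ring
    · rw [abs_of_nonneg (by linarith), max_eq_right (by linarith)]; ring
  have hmax : Summable fun b => max (q b - p b) 0 :=
    (hq.sub hp).abs.of_nonneg_of_le (fun _ => le_max_right _ _)
      (fun _ => max_le (le_abs_self _) (abs_nonneg _))
  rw [dTV, tsum_congr habs, (hmax.mul_left 2).tsum_sub (hq.sub hp), tsum_mul_left,
    hq.tsum_sub hp, hpq]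
  ring

lemma tsum_mul_le_add_tsum_compl {q g : β → ℝ} (hq0 : ∀ b, 0 ≤ q b) (hq : Summable q)
    (hq1 : ∑' b, q b ≤ 1) (hg0 : ∀ b, 0 ≤ g b) (hg1 : ∀ b, g b ≤ 1) (s : Set β) {M : ℝ}
    (hM0 : 0 ≤ M) (hgM : ∀ b ∈ s, g b ≤ M) :
    ∑' b, q b * g b ≤ M + ∑' b : ↥sᶜ, q b := by
  have hle : ∀ b, q b * g b ≤ M * s.indicator q b + sᶜ.indicator q b := fun b => by
    by_cases hb : b ∈ s
    · simpa [hb, mul_comm] using mul_le_mul_of_nonneg_left (hgM b hb) (hq0 b)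
    · simpa [hb] using mul_le_mul_of_nonneg_left (hg1 b) (hq0 b)
  have hqg : Summable fun b => q b * g b :=
    hq.of_nonneg_of_le (fun b => mul_nonneg (hq0 b) (hg0 b))
      (fun b => mul_le_of_le_one_right (hq0 b) (hg1 b))
  have hs : ∑' b, s.indicator q b ≤ 1 :=
    ((hq.indicator s).tsum_le_tsum (Set.indicator_le_self' fun b _ => hq0 b) hq).trans hq1
  calc ∑' b, q b * g b ≤ ∑' b, (M * s.indicator q b + sᶜ.indicator q b) :=
        hqg.tsum_le_tsum hle (((hq.indicator s).mul_left M).add (hq.indicator _))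
    _ = M * ∑' b, s.indicator q b + ∑' b : ↥sᶜ, q b := by
        rw [((hq.indicator s).mul_left M).tsum_add (hq.indicator _), tsum_mul_left, tsum_subtype]
    _ ≤ M + ∑' b : ↥sᶜ, q b := by
        gcongr
        exact mul_le_of_le_one_right hM0 hs

lemma dTV_le_tsum_compl_add_iSup {γ : Type*} {p q : β → ℝ} {y : γ → ℝ} (f : β → γ)
    (hp : HasSum p 1) (hq : HasSum q 1) (hq0 : ∀ b, 0 ≤ q b) (hy0 : ∀ r, 0 ≤ y r)
    (hpq : ∀ b, p b = q b * y (f b)) (A : Set γ) :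
    dTV p q ≤ ∑' b : ↥(f ⁻¹' A)ᶜ, q b + ⨆ r ∈ A, max (1 - y r) 0 := by
  have hg1 : ∀ r, max (1 - y r) 0 ≤ 1 := fun r => max_le (by linarith [hy0 r]) zero_le_one
  have hmax : ∀ b, max (q b - p b) 0 = q b * max (1 - y (f b)) 0 := fun b => by
    rw [hpq, mul_max_of_nonneg _ _ (hq0 b), mul_sub, mul_one, mul_zero]
  rw [dTV_eq_tsum_max_sub hp.summable hq.summable (hp.tsum_eq.trans hq.tsum_eq.symm),
    tsum_congr hmax, add_comm]
  exact tsum_mul_le_add_tsum_compl hq0 hq.summable hq.tsum_eq.le (fun _ => le_max_right _ _)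
    (fun _ => hg1 _) _ (Real.iSup_nonneg fun r => Real.iSup_nonneg fun _ => le_max_right _ _)
    fun _ hb => le_biSup_of_forall_le hg1 hb

end TotalVariation

section Probability

variable {Ω β : Type*} [MeasurableSpace Ω] {μ : Measure Ω} [MeasurableSpace β]
  [MeasurableSingletonClass β]

lemma hasSum_measureReal_preimage_singleton [Countable β] [IsFiniteMeasure μ] {X : Ω → β}
    (hX : Measurable X) (s : Set β) :
    HasSum (fun b : s => μ.real (X ⁻¹' {(b : β)})) (μ.real (X ⁻¹' s)) := by
  have h := tsum_measure_preimage_singleton (μ := μ) s.to_countable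
    fun b _ => hX (measurableSet_singleton b)
  rw [measureReal_def, ← h, ENNReal.tsum_toReal_eq fun _ => measure_ne_top μ _]
  exact (ENNReal.summable_toReal (h ▸ measure_ne_top μ _)).hasSum

lemma hasSum_measureReal_preimage_singleton_univ [Countable β] [IsProbabilityMeasure μ]
    {X : Ω → β} (hX : Measurable X) : HasSum (fun b => μ.real (X ⁻¹' {b})) 1 := by
  have h := hasSum_measureReal_preimage_singleton (μ := μ) hX Set.univ
  simp only [Set.preimage_univ, probReal_univ] at h
  rw [← (Equiv.Set.univ β).hasSum_iff]
  exact h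

lemma measure_preimage_eq_cond_of_forall_singleton [Countable β] {X Y : Ω → β}
    (hX : Measurable X) (hY : Measurable Y) {E : Set Ω} (hE : MeasurableSet E)
    (h : ∀ a, μ (X ⁻¹' {a}) = μ (Y ⁻¹' {a} ∩ E) / μ E) (s : Set β) :
    μ (X ⁻¹' s) = μ[Y ⁻¹' s | E] := by
  have hlaw : μ.map X = μ[|E].map Y := Measure.ext_of_singleton fun a => by
    rw [Measure.map_apply hX (measurableSet_singleton a),
      Measure.map_apply hY (measurableSet_singleton a), cond_apply hE, Set.inter_comm,
      ← ENNReal.div_eq_inv_mul]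
    exact h a
  rw [← Measure.map_apply hX s.to_countable.measurableSet, hlaw,
    Measure.map_apply hY s.to_countable.measurableSet]

lemma cond_preimage_singleton_eq_of_indepFun {G : Type*} [AddCommGroup G] [MeasurableSpace G]
    [MeasurableSingletonClass G] {X : Ω → β} {Y : Ω → G} (hXY : IndepFun X Y μ) (f : β → G)
    {t : G} (hE : MeasurableSet {ω | f (X ω) + Y ω = t}) (b : β) :
    μ[X ⁻¹' {b} | {ω | f (X ω) + Y ω = t}]
      = (μ {ω | f (X ω) + Y ω = t})⁻¹ * (μ (X ⁻¹' {b}) * μ {ω | Y ω = t - f b}) := by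
  have hset : {ω | f (X ω) + Y ω = t} ∩ X ⁻¹' {b} = X ⁻¹' {b} ∩ Y ⁻¹' {t - f b} := by
    ext ω
    simp only [Set.mem_inter_iff, Set.mem_preimage, Set.mem_singleton_iff, Set.mem_ofPred_eq]
    constructor
    · rintro ⟨h, rfl⟩
      exact ⟨rfl, eq_sub_of_add_eq' h⟩
    · rintro ⟨rfl, h⟩
      exact ⟨by rw [h, add_sub_cancel], rfl⟩
  rw [cond_apply hE, hset, hXY.measure_inter_preimage_eq_mul _ _ (measurableSet_singleton _)
    (measurableSet_singleton _)]
  rfl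

end Probability

lemma ProbabilityTheory.iIndepFun.indepFun_finset_sum_of_disjoint {Ω I : Type*}
    [MeasurableSpace Ω] {μ : Measure Ω} {Z : I → Ω → ℕ} (hindep : iIndepFun Z μ)
    (hZ : ∀ α, Measurable (Z α)) {B B' : Finset I} (hBB' : Disjoint B B') (w : I → ℤ) :
    IndepFun (fun ω (α : B) => Z α ω) (fun ω => ∑ α ∈ B', w α * (Z α ω : ℤ)) μ := by
  have h : (fun ω => ∑ α ∈ B', w α * (Z α ω : ℤ))
      = (fun c : B' → ℕ => ∑ α : B', w α * (c α : ℤ)) ∘ fun ω α => Z α ω := by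
    funext ω; exact (Finset.sum_coe_sort _ _).symm
  rw [h]
  exact (hindep.indepFun_finset B B' hBB' hZ).comp measurable_id (measurable_of_countable _)

theorem stmt4_general
    {Ω : Type*} [MeasurableSpace Ω] (μ : Measure Ω) [IsProbabilityMeasure μ]
    {I : Type*} [Fintype I] [DecidableEq I]
    (C : Ω → I → ℕ) (Z : I → Ω → ℕ)
    (hCmeas : Measurable C) (hZmeas : ∀ α, Measurable (Z α))
    (hindep : iIndepFun Z μ)
    (w : I → ℤ) (t : ℤ)
    (T : Ω → ℤ) (hT : T = fun ω => ∑ α, w α * (Z α ω : ℤ))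
    (hC : ∀ a : I → ℕ,
      μ {ω | C ω = a}
        = μ ({ω | (fun α => Z α ω) = a} ∩ {ω | T ω = t}) / μ {ω | T ω = t})
    (B : Finset I)
    (R S : Ω → ℤ)
    (hR : R = fun ω => ∑ α ∈ B, w α * (Z α ω : ℤ))
    (hS : S = fun ω => ∑ α ∈ Bᶜ, w α * (Z α ω : ℤ))
    (A : Set ℤ) :
    dTV (fun b : B → ℕ => (μ {ω | (fun α : B => C ω α) = b}).toReal)
        (fun b : B → ℕ => (μ {ω | (fun α : B => Z α ω) = b}).toReal)
      ≤ (μ {ω | R ω ∉ A}).toReal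
        + ⨆ r ∈ A,
            max (1 - (μ {ω | S ω = t - r}).toReal / (μ {ω | T ω = t}).toReal) 0 := by
  set ZB : Ω → (B → ℕ) := fun ω α => Z α ω
  set weight : (B → ℕ) → ℤ := fun b => ∑ α : B, w α * (b α : ℤ)
  set y : ℤ → ℝ := fun r => (μ {ω | S ω = t - r}).toReal / (μ {ω | T ω = t}).toReal
  have hZ : Measurable fun ω α => Z α ω := measurable_pi_lambda _ hZmeas
  have hZB : Measurable ZB := measurable_pi_lambda _ fun α => hZmeas α
  have hCB : Measurable fun ω (α : B) => C ω α :=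
    (measurable_of_countable fun (a : I → ℕ) (α : B) => a α).comp hCmeas
  have hRZ : R = weight ∘ ZB := by
    rw [hR]; funext ω; exact (Finset.sum_coe_sort B _).symm
  have hE : {ω | T ω = t} = {ω | weight (ZB ω) + S ω = t} := by
    simp only [← Function.comp_apply (f := weight) (g := ZB), ← hRZ, hT, hR, hS,
      Finset.sum_add_sum_compl]
  have hEmeas : MeasurableSet {ω | T ω = t} :=
    (hT ▸ (measurable_of_countable fun a : I → ℕ => ∑ α, w α * (a α : ℤ)).comp hZ :
      Measurable T) (measurableSet_singleton t)
  have hZBS : IndepFun ZB S μ :=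
    hS ▸ hindep.indepFun_finset_sum_of_disjoint hZmeas disjoint_compl_right w
  have hpq : ∀ b, μ.real ((fun ω (α : B) => C ω α) ⁻¹' {b})
      = μ.real (ZB ⁻¹' {b}) * y (weight b) := fun b => by
    have hlaw : μ ((fun ω (α : B) => C ω α) ⁻¹' {b}) = μ[ZB ⁻¹' {b} | {ω | T ω = t}] :=
      measure_preimage_eq_cond_of_forall_singleton hCmeas hZ hEmeas hC
        {a | (fun α : B => a α) = b}
    simp only [measureReal_def, y]
    rw [hlaw, hE, cond_preimage_singleton_eq_of_indepFun hZBS weight (hE ▸ hEmeas) b,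
      ENNReal.toReal_mul, ENNReal.toReal_mul, ENNReal.toReal_inv]
    ring
  have hRA : (μ {ω | R ω ∉ A}).toReal = ∑' b : ↥(weight ⁻¹' A)ᶜ, μ.real (ZB ⁻¹' {(b : B → ℕ)}) := by
    rw [hRZ]
    exact (hasSum_measureReal_preimage_singleton (μ := μ) hZB (weight ⁻¹' A)ᶜ).tsum_eq.symm
  rw [hRA]
  exact dTV_le_tsum_compl_add_iSup weight (hasSum_measureReal_preimage_singleton_univ hCB)
    (hasSum_measureReal_preimage_singleton_univ hZB) (fun _ => measureReal_nonneg)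
    (fun _ => div_nonneg ENNReal.toReal_nonneg ENNReal.toReal_nonneg) hpq A

/-- Truncation bound: with `C ≝ (Z | T = t)`, `R = Σ_{α∈B} w(α) Z_α`,
`S = Σ_{α∉B} w(α) Z_α`, for any `A ⊆ ℤ`,
`d_TV(C_B, Z_B) ≤ P(R ∉ A) + sup_{r∈A} (1 - P(S = t-r)/P(T = t))⁺`. -/
theorem stmt4
    {Ω : Type*} [MeasurableSpace Ω] (μ : Measure Ω) [IsProbabilityMeasure μ]
    {I : Type*} [Fintype I] [DecidableEq I]
    (C : Ω → I → ℕ) (Z : I → Ω → ℕ)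
    (hCmeas : Measurable C) (hZmeas : ∀ α, Measurable (Z α))
    (hindep : iIndepFun Z μ)
    (w : I → ℤ) (t : ℤ)
    (T : Ω → ℤ) (hT : T = fun ω => ∑ α, w α * (Z α ω : ℤ))
    (hpos : μ {ω | T ω = t} ≠ 0)
    (hC : ∀ a : I → ℕ,
      μ {ω | C ω = a}
        = μ ({ω | (fun α => Z α ω) = a} ∩ {ω | T ω = t}) / μ {ω | T ω = t})
    (B : Finset I)
    (R S : Ω → ℤ)
    (hR : R = fun ω => ∑ α ∈ B, w α * (Z α ω : ℤ))
    (hS : S = fun ω => ∑ α ∈ Bᶜ, w α * (Z α ω : ℤ))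
    (A : Set ℤ) :
    dTV (fun b : B → ℕ => (μ {ω | (fun α : B => C ω α) = b}).toReal)
        (fun b : B → ℕ => (μ {ω | (fun α : B => Z α ω) = b}).toReal)
      ≤ (μ {ω | R ω ∉ A}).toReal
        + ⨆ r ∈ A,
            max (1 - (μ {ω | S ω = t - r}).toReal / (μ {ω | T ω = t}).toReal) 0 :=
  stmt4_general μ C Z hCmeas hZmeas hindep w t T hT hC B R S hR hS A
end

section
/- Let κ > 0 and y ≥ 1 be constants, and let m_i ≥ 0 be real numbers satisfying m_i / i! ~ κ y^i / i as i → ∞. Fix c ∈ ℝ and for each n set x = x(n) = e^{−c/n} y^{−1}. Let Z_1(n), ..., Z_n(n) be independent Poisson random variables with E Z_j(n) = m_j x^j / j!, and let T_n = Σ_{j=1}^n j Z_j(n). Then for every s ≥ 0, E exp(−s T_n / n) converges, as n → ∞, to ψ_c(s) = exp(−κ ∫_0^1 (1 − e^{−sx}) e^{−cx} dx/x); in particular T_n/n converges in distribution to a random variable X_{κ,c} with Laplace transform ψ_c. -/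
/-!
The Laplace transform of a weighted sum of independent Poisson variables is explicit:
`E exp(-s T_n / n) = exp (∑_{j ≤ n} λ_j (e^{-sj/n} - 1))` with `λ_j = m_j x^j / j!`.
Substituting `m_j / j! = κ y^j r_j / j` with `r_j → 1`, the exponent becomes
`κ · (1/n) ∑_{j ≤ n} r_j g(j/n)` with `g(u) = e^{-cu} (e^{-su} - 1) / u` (extended continuously
by `g(0) = -s`, via `dslope`). This is a Riemann sum of `g` on `[0, 1]` with weights tending
to `1`, so it converges to `κ ∫_0^1 g`.
-/

open MeasureTheory ProbabilityTheory Filter Real Finset Topology Nat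

theorem sum_Icc_one_eq_sum_range {M : Type*} [AddCommMonoid M] (f : ℕ → M) (n : ℕ) :
    ∑ j ∈ Icc 1 n, f j = ∑ i ∈ range n, f (i + 1) := by
  rw [← Finset.Ico_add_one_right_eq_Icc, Finset.sum_Ico_eq_sum_range, Nat.add_sub_cancel]
  simp only [add_comm]

theorem abs_mul_sub_integral_le {f : ℝ → ℝ} {a b c ε : ℝ} (hab : a ≤ b)
    (hf : IntervalIntegrable f volume a b) (hc : ∀ u ∈ Set.Ioc a b, |c - f u| ≤ ε) :
    |(b - a) * c - ∫ u in a..b, f u| ≤ ε * (b - a) := by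
  have := intervalIntegral.norm_integral_le_of_norm_le_const (f := fun u => c - f u)
    fun u hu => hc u (Set.uIoc_of_le hab ▸ hu)
  rwa [Real.norm_eq_abs, abs_of_nonneg (sub_nonneg.2 hab), intervalIntegral.integral_sub
    intervalIntegrable_const hf, intervalIntegral.integral_const, smul_eq_mul] at this

theorem abs_riemannSum_sub_integral_le {f : ℝ → ℝ} (hf : ContinuousOn f (Set.Icc 0 1))
    {n : ℕ} (hn : 0 < n) {ε : ℝ}
    (hε : ∀ u ∈ Set.Icc (0 : ℝ) 1, ∀ v ∈ Set.Icc (0 : ℝ) 1, dist u v ≤ (n : ℝ)⁻¹ →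
      dist (f u) (f v) ≤ ε) :
    |(n : ℝ)⁻¹ * ∑ j ∈ Icc 1 n, f (j / n) - ∫ u in 0..1, f u| ≤ ε := by
  set a : ℕ → ℝ := fun i => i / n
  have hn' : (0 : ℝ) < n := Nat.cast_pos.2 hn
  have hstep : ∀ i, a (i + 1) - a i = (n : ℝ)⁻¹ := fun i => by
    simp only [a]; push_cast; field_simp; ring
  have hmem : ∀ i < n, Set.Icc (a i) (a (i + 1)) ⊆ Set.Icc 0 1 := fun i hi =>
    Set.Icc_subset_Icc (by positivity) ((div_le_one hn').2 (by exact_mod_cast hi))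
  have hint : ∀ i < n, IntervalIntegrable f volume (a i) (a (i + 1)) := fun i hi =>
    (hf.mono (hmem i hi)).intervalIntegrable_of_Icc (by linarith [hstep i, inv_pos.2 hn'])
  have hsplit : ∫ u in 0..1, f u = ∑ i ∈ range n, ∫ u in a i..a (i + 1), f u := by
    rw [intervalIntegral.sum_integral_adjacent_intervals hint]
    simp [a, hn'.ne']
  calc |(n : ℝ)⁻¹ * ∑ j ∈ Icc 1 n, f (j / n) - ∫ u in 0..1, f u|
      = |∑ i ∈ range n, ((a (i + 1) - a i) * f (a (i + 1)) - ∫ u in a i..a (i + 1), f u)| := by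
        rw [hsplit, sum_Icc_one_eq_sum_range, Finset.mul_sum, ← Finset.sum_sub_distrib]
        simp only [hstep, a]
    _ ≤ ∑ i ∈ range n, ε * (a (i + 1) - a i) := by
        refine (Finset.abs_sum_le_sum_abs _ _).trans (Finset.sum_le_sum fun i hi => ?_)
        have hi := Finset.mem_range.1 hi
        refine abs_mul_sub_integral_le (by linarith [hstep i, inv_pos.2 hn']) (hint i hi)
          fun u hu => ?_
        refine hε _ (hmem i hi ⟨?_, le_rfl⟩) _ (hmem i hi (Set.Ioc_subset_Icc_self hu)) ?_
        · linarith [hstep i, inv_pos.2 hn']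
        · rw [Real.dist_eq, abs_of_nonneg (by linarith [hu.2]), ← hstep i]
          linarith [hu.1]
    _ = ε := by
        rw [← Finset.mul_sum, Finset.sum_range_sub (f := a)]
        simp [a, hn'.ne']

theorem tendsto_riemannSum {f : ℝ → ℝ} (hf : ContinuousOn f (Set.Icc 0 1)) :
    Tendsto (fun n : ℕ => (n : ℝ)⁻¹ * ∑ j ∈ Icc 1 n, f (j / n)) atTop
      (𝓝 (∫ u in 0..1, f u)) := by
  refine Metric.tendsto_nhds.2 fun ε hε => ?_
  obtain ⟨δ, hδ, hfδ⟩ := Metric.uniformContinuousOn_iff_le.1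
    (isCompact_Icc.uniformContinuousOn_of_continuous hf) (ε / 2) (half_pos hε)
  filter_upwards [eventually_gt_atTop 0,
    (tendsto_inv_atTop_nhds_zero_nat (𝕜 := ℝ)).eventually (ge_mem_nhds hδ)] with n hn hnδ
  rw [Real.dist_eq]
  exact (abs_riemannSum_sub_integral_le hf hn fun u hu v hv huv =>
    hfδ u hu v hv (huv.trans hnδ)).trans_lt (half_lt_self hε)

theorem tendsto_weighted_riemannSum {f : ℝ → ℝ} (hf : ContinuousOn f (Set.Icc 0 1))
    {r : ℕ → ℝ} (hr : Tendsto r atTop (𝓝 1)) :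
    Tendsto (fun n : ℕ => (n : ℝ)⁻¹ * ∑ j ∈ Icc 1 n, r j * f (j / n)) atTop
      (𝓝 (∫ u in 0..1, f u)) := by
  obtain ⟨C, hC⟩ := isCompact_Icc.exists_bound_of_continuousOn hf
  have hmean : Tendsto (fun n : ℕ => (n : ℝ)⁻¹ * ∑ j ∈ Icc 1 n, |r j - 1|) atTop (𝓝 0) := by
    simpa [sum_Icc_one_eq_sum_range] using
      ((hr.sub_const 1).abs.comp (tendsto_add_atTop_nat 1)).cesaro
  have herr : Tendsto (fun n : ℕ => (n : ℝ)⁻¹ * ∑ j ∈ Icc 1 n, (r j - 1) * f (j / n)) atTop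
      (𝓝 0) := by
    refine squeeze_zero_norm (fun n => ?_) (by simpa using hmean.const_mul C)
    rw [norm_mul, norm_inv, Real.norm_natCast, mul_left_comm, Finset.mul_sum]
    refine mul_le_mul_of_nonneg_left ((norm_sum_le _ _).trans (Finset.sum_le_sum fun j hj => ?_))
      (by positivity)
    obtain ⟨hj1, hjn⟩ := Finset.mem_Icc.1 hj
    rw [norm_mul, Real.norm_eq_abs, mul_comm]
    refine mul_le_mul_of_nonneg_right (hC _ ⟨by positivity, div_le_one_of_le₀ ?_ ?_⟩)
      (abs_nonneg _)
    · exact_mod_cast hjn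
    · positivity
  rw [← add_zero (∫ u in 0..1, f u)]
  refine ((tendsto_riemannSum hf).add herr).congr fun n => ?_
  rw [← mul_add, ← Finset.sum_add_distrib]
  exact congrArg _ (Finset.sum_congr rfl fun j _ => by ring)

theorem mgf_natCast_of_poisson {Ω : Type*} [MeasurableSpace Ω] {μ : Measure Ω}
    [IsProbabilityMeasure μ] {W : Ω → ℕ} (hW : Measurable W) {lam : ℝ}
    (hpois : ∀ k : ℕ, (μ {ω | W ω = k}).toReal = exp (-lam) * lam ^ k / k !)
    {t : ℝ} (ht : t ≤ 0) :
    mgf (fun ω => (W ω : ℝ)) μ t = exp (lam * (exp t - 1)) := by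
  have : IsProbabilityMeasure (μ.map W) := Measure.isProbabilityMeasure_map hW.aemeasurable
  have hint : Integrable (fun k : ℕ => exp (t * k)) (μ.map W) := by
    refine (integrable_const 1).mono' measurable_from_top.aestronglyMeasurable
      (ae_of_all _ fun k => ?_)
    rw [norm_of_nonneg (exp_pos _).le, exp_le_one_iff]
    exact mul_nonpos_of_nonpos_of_nonneg ht k.cast_nonneg
  calc mgf (fun ω => (W ω : ℝ)) μ t = ∫ k : ℕ, exp (t * k) ∂(μ.map W) :=
        (integral_map (f := fun k : ℕ => exp (t * k)) hW.aemeasurable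
          measurable_from_top.aestronglyMeasurable).symm
    _ = ∑' k : ℕ, exp (-lam) * ((lam * exp t) ^ k / k !) := by
        rw [integral_countable hint]
        refine tsum_congr fun k => ?_
        rw [map_measureReal_apply hW (measurableSet_singleton k), measureReal_def]
        simp only [Set.preimage, Set.mem_singleton_iff]
        rw [hpois, smul_eq_mul, mul_comm t, exp_nat_mul, mul_pow]
        ring
    _ = exp (lam * (exp t - 1)) := by
        rw [tsum_mul_left, (NormedSpace.expSeries_div_hasSum_exp (lam * exp t)).tsum_eq,
          ← exp_eq_exp_ℝ, ← exp_add]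
        ring_nf

theorem integral_exp_mul_sum_of_iIndepFun_poisson {Ω ι : Type*} [MeasurableSpace Ω]
    {μ : Measure Ω} [IsProbabilityMeasure μ] {W : ι → Ω → ℕ} (hW : ∀ i, Measurable (W i))
    (hindep : iIndepFun W μ) (S : Finset ι) (a lam : ι → ℝ)
    (hpois : ∀ i ∈ S, ∀ k : ℕ, (μ {ω | W i ω = k}).toReal = exp (-lam i) * lam i ^ k / k !)
    {t : ℝ} (hat : ∀ i ∈ S, a i * t ≤ 0) :
    ∫ ω, exp (t * ∑ i ∈ S, a i * W i ω) ∂μ = exp (∑ i ∈ S, lam i * (exp (a i * t) - 1)) := by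
  have hindep' : iIndepFun (fun i ω => a i * (W i ω : ℝ)) μ :=
    hindep.comp (fun i (k : ℕ) => a i * k) fun _ => measurable_from_top
  have hmeas : ∀ i, Measurable fun ω => a i * (W i ω : ℝ) :=
    fun i => (measurable_from_top.comp (hW i)).const_mul _
  calc ∫ ω, exp (t * ∑ i ∈ S, a i * W i ω) ∂μ
      = mgf (∑ i ∈ S, fun ω => a i * (W i ω : ℝ)) μ t := by
        simp only [mgf, Finset.sum_apply]
    _ = ∏ i ∈ S, exp (lam i * (exp (a i * t) - 1)) := by
        rw [hindep'.mgf_sum hmeas]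
        refine Finset.prod_congr rfl fun i hi => ?_
        rw [mgf_const_mul, mgf_natCast_of_poisson (hW i) (hpois i hi) (hat i hi)]
    _ = exp (∑ i ∈ S, lam i * (exp (a i * t) - 1)) := (exp_sum _ _).symm

theorem integral_exp_mul_sum_Icc_of_poisson {Ω : Type*} [MeasurableSpace Ω] {μ : Measure Ω}
    [IsProbabilityMeasure μ] {Z : ℕ → Ω → ℕ} (hZ : ∀ j, Measurable (Z j))
    (hindep : iIndepFun (fun j : {j : ℕ // 1 ≤ j} => Z j) μ) (lam : ℕ → ℝ) (n : ℕ)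
    (hpois : ∀ j ∈ Icc 1 n, ∀ k : ℕ,
      (μ {ω | Z j ω = k}).toReal = exp (-lam j) * lam j ^ k / k !)
    {t : ℝ} (ht : t ≤ 0) :
    ∫ ω, exp (t * ((∑ j ∈ Icc 1 n, j * Z j ω : ℕ) : ℝ)) ∂μ
      = exp (∑ j ∈ Icc 1 n, lam j * (exp (j * t) - 1)) := by
  have hmem : ∀ j ∈ Icc 1 n, 1 ≤ j := fun j hj => (mem_Icc.1 hj).1
  have h := integral_exp_mul_sum_of_iIndepFun_poisson (W := fun j : {j : ℕ // 1 ≤ j} => Z j)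
    (fun j => hZ j) hindep ((Icc 1 n).subtype (1 ≤ ·)) (fun j => j) (fun j => lam j)
    (fun j hj => hpois j (mem_subtype.1 hj)) (fun j _ => mul_nonpos_of_nonneg_of_nonpos
      (Nat.cast_nonneg _) ht)
  have hT : ∀ ω, ∑ j ∈ (Icc 1 n).subtype (1 ≤ ·), ((j : ℕ) : ℝ) * Z j ω
      = ((∑ j ∈ Icc 1 n, j * Z j ω : ℕ) : ℝ) := fun ω => by
    push_cast
    exact sum_subtype_of_mem (fun j : ℕ => (j : ℝ) * Z j ω) hmem
  simpa only [hT, sum_subtype_of_mem (fun j : ℕ => lam j * (exp (j * t) - 1)) hmem] using h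

theorem Differentiable.continuous_dslope {𝕜 E : Type*} [NontriviallyNormedField 𝕜]
    [NormedAddCommGroup E] [NormedSpace 𝕜 E] {f : 𝕜 → E} (hf : Differentiable 𝕜 f) (a : 𝕜) :
    Continuous (dslope f a) :=
  continuousOn_univ.1 ((continuousOn_dslope Filter.univ_mem).2 ⟨hf.continuous.continuousOn, hf a⟩)

noncomputable def expSlopeKernel (s c u : ℝ) : ℝ :=
  exp (-c * u) * dslope (fun v => exp (-s * v)) 0 u

theorem expSlopeKernel_of_ne (s c : ℝ) {u : ℝ} (hu : u ≠ 0) :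
    expSlopeKernel s c u = exp (-c * u) * (exp (-s * u) - 1) / u := by
  simp [expSlopeKernel, dslope_of_ne _ hu, slope_def_field, mul_div_assoc]

theorem continuous_expSlopeKernel (s c : ℝ) : Continuous (expSlopeKernel s c) :=
  (by fun_prop : Continuous fun u => exp (-c * u)).mul
    ((by fun_prop : Differentiable ℝ fun u => exp (-s * u)).continuous_dslope 0)

theorem integral_expSlopeKernel (s c : ℝ) :
    ∫ u in (0 : ℝ)..1, expSlopeKernel s c u
      = -∫ u in (0 : ℝ)..1, (1 - exp (-s * u)) * exp (-c * u) / u := by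
  rw [← intervalIntegral.integral_neg]
  refine intervalIntegral.integral_congr_ae (ae_of_all _ fun u hu => ?_)
  rw [Set.uIoc_of_le zero_le_one] at hu
  rw [expSlopeKernel_of_ne s c hu.1.ne']
  ring

theorem stmt8_general
    {Ω : Type*} [MeasurableSpace Ω] (μ : Measure Ω) [IsProbabilityMeasure μ]
    (κ y : ℝ) (hκ : 0 < κ)
    (m : ℕ → ℝ)
    (hm : Tendsto (fun i : ℕ => (m i / (i.factorial : ℝ)) * ((i : ℝ) / (κ * y ^ i)))
        atTop (nhds 1))
    (c : ℝ) (x : ℕ → ℝ) (hx : ∀ n : ℕ, x n = Real.exp (-c / n) * y⁻¹)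
    (Z : ℕ → ℕ → Ω → ℕ) (hZmeas : ∀ n j, Measurable (Z n j))
    (hpois : ∀ n, 1 ≤ n → ∀ j, 1 ≤ j → j ≤ n → ∀ k : ℕ,
      (μ {ω | Z n j ω = k}).toReal
        = Real.exp (-(m j * x n ^ j / (j.factorial : ℝ)))
            * (m j * x n ^ j / (j.factorial : ℝ)) ^ k / (k.factorial : ℝ))
    (hindep : ∀ n, iIndepFun
        (fun j : {j : ℕ // 1 ≤ j} => Z n j) μ) :
    ∀ s : ℝ, 0 ≤ s →
      Tendsto
        (fun n : ℕ =>
          ∫ ω, Real.exp (-s * ((∑ j ∈ Finset.Icc 1 n, j * Z n j ω : ℕ) : ℝ) / n) ∂μ)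
        atTop
        (nhds (Real.exp
          (-κ * ∫ u in (0:ℝ)..1, (1 - Real.exp (-s * u)) * Real.exp (-c * u) / u))) := by
  intro s hs
  have hexponent : ∀ n : ℕ, 1 ≤ n →
      ∑ j ∈ Icc 1 n, m j * x n ^ j / j ! * (exp (j * (-s / n)) - 1)
        = κ * ((n : ℝ)⁻¹ *
            ∑ j ∈ Icc 1 n, m j / j ! * (j / (κ * y ^ j)) * expSlopeKernel s c (j / n)) := by
    intro n hn
    rw [Finset.mul_sum, Finset.mul_sum]
    refine Finset.sum_congr rfl fun j hj => ?_
    have hj0 : (0 : ℝ) < j := Nat.cast_pos.2 (mem_Icc.1 hj).1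
    rw [hx, expSlopeKernel_of_ne s c (div_pos hj0 (Nat.cast_pos.2 hn)).ne', mul_pow, inv_pow,
      ← exp_nat_mul]
    field_simp
  have hlaplace : ∀ n : ℕ, 1 ≤ n →
      ∫ ω, exp (-s * ((∑ j ∈ Icc 1 n, j * Z n j ω : ℕ) : ℝ) / n) ∂μ
        = exp (κ * ((n : ℝ)⁻¹ *
            ∑ j ∈ Icc 1 n, m j / j ! * (j / (κ * y ^ j)) * expSlopeKernel s c (j / n))) := by
    intro n hn
    simp_rw [mul_div_right_comm (-s)]
    rw [integral_exp_mul_sum_Icc_of_poisson (hZmeas n) (hindep n) _ n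
      (fun j hj => hpois n hn j (mem_Icc.1 hj).1 (mem_Icc.1 hj).2)
      (div_nonpos_of_nonpos_of_nonneg (neg_nonpos.2 hs) n.cast_nonneg), hexponent n hn]
  rw [neg_mul, ← mul_neg, ← integral_expSlopeKernel]
  refine ((continuous_exp.tendsto _).comp ((tendsto_weighted_riemannSum
    (continuous_expSlopeKernel s c).continuousOn hm).const_mul κ)).congr' ?_
  filter_upwards [eventually_ge_atTop 1] with n hn
  exact (hlaplace n hn).symm

/-- Assemblies with `m_i/i! ~ κ y^i/i`, `x = x(n) = e^{-c/n} y⁻¹`: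
if `Z_j(n)` are independent Poisson with mean `m_j x^j/j!` and
`T_n = Σ_{j=1}^n j Z_j(n)`, then for every `s ≥ 0`, `E exp(-s T_n/n)` converges to
`ψ_c(s) = exp(-κ ∫_0^1 (1 - e^{-sx}) e^{-cx} dx/x)`; so `T_n/n ⇒ X_{κ,c}`. -/
theorem stmt8
    {Ω : Type*} [MeasurableSpace Ω] (μ : Measure Ω) [IsProbabilityMeasure μ]
    (κ y : ℝ) (hκ : 0 < κ) (hy : 1 ≤ y)
    (m : ℕ → ℝ) (hm0 : ∀ i, 1 ≤ i → 0 ≤ m i)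
    (hm : Tendsto (fun i : ℕ => (m i / (i.factorial : ℝ)) * ((i : ℝ) / (κ * y ^ i)))
        atTop (nhds 1))
    (c : ℝ) (x : ℕ → ℝ) (hx : ∀ n : ℕ, x n = Real.exp (-c / n) * y⁻¹)
    (Z : ℕ → ℕ → Ω → ℕ) (hZmeas : ∀ n j, Measurable (Z n j))
    (hpois : ∀ n, 1 ≤ n → ∀ j, 1 ≤ j → j ≤ n → ∀ k : ℕ,
      (μ {ω | Z n j ω = k}).toReal
        = Real.exp (-(m j * x n ^ j / (j.factorial : ℝ)))
            * (m j * x n ^ j / (j.factorial : ℝ)) ^ k / (k.factorial : ℝ))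
    (hindep : ∀ n, iIndepFun
        (fun j : {j : ℕ // 1 ≤ j} => Z n j) μ) :
    ∀ s : ℝ, 0 ≤ s →
      Tendsto
        (fun n : ℕ =>
          ∫ ω, Real.exp (-s * ((∑ j ∈ Finset.Icc 1 n, j * Z n j ω : ℕ) : ℝ) / n) ∂μ)
        atTop
        (nhds (Real.exp
          (-κ * ∫ u in (0:ℝ)..1, (1 - Real.exp (-s * u)) * Real.exp (-c * u) / u))) :=
  stmt8_general μ κ y hκ m hm c x hx Z hZmeas hpois hindep
end

section
/- Let κ > 0 and y ≥ 1 be constants, and let m_i be nonnegative integers satisfying m_i ~ κ y^i / i as i → ∞. Fix c ∈ ℝ and for each n set x = x(n) = e^{−c/n} y^{−1}. Let Z_1(n), ..., Z_n(n) be independent binomial random variables, Z_j(n) having parameters m_j and x^j/(1 + x^j), and let T_n = Σ_{j=1}^n j Z_j(n). Then for every s ≥ 0, E exp(−s T_n / n) converges, as n → ∞, to ψ_c(s) = exp(−κ ∫_0^1 (1 − e^{−sx}) e^{−cx} dx/x); in particular T_n/n converges in distribution to the random variable X_{κ,c} with Laplace transform ψ_c. -/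
open MeasureTheory ProbabilityTheory Filter Real Topology

/-! By independence, `E exp(-s T_n/n) = ∏ⱼ ((1 + aⱼ e^{-sj/n}) / (1 + aⱼ))^{m_j}` with `aⱼ = x^j`,
so its logarithm is `∑ⱼ m_j (log (1 + aⱼ e^{-sj/n}) - log (1 + aⱼ))`. Since
`log (1 + a) - log (1 + b) = (a - b) + O(a (a - b))` and `m_j aⱼ ≈ κ e^{-cj/n} / j`, the `j`-th term
equals `-(κ/n) g(j/n)` with `g u = (1 - e^{-su}) e^{-cu} / u`, up to an error `εⱼ / n` where
`εⱼ → 0` (this needs `y > 1`, which `m_i ~ κ y^i / i` forces for integers `m_i`). The errors vanish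
by Cesàro, and the main terms are Riemann sums of `-κ ∫₀¹ g`. -/

lemma abs_mul_sub_intervalIntegral_le {f : ℝ → ℝ} {a b v ε : ℝ} (hab : a ≤ b)
    (hf : IntervalIntegrable f volume a b) (hv : ∀ u ∈ Set.Ioc a b, |f v - f u| ≤ ε) :
    |f v * (b - a) - ∫ u in a..b, f u| ≤ ε * (b - a) := by
  have h := intervalIntegral.norm_integral_le_of_norm_le_const (f := fun u => f v - f u)
    (C := ε) (by rw [Set.uIoc_of_le hab]; exact hv)
  rwa [intervalIntegral.integral_sub intervalIntegrable_const hf, intervalIntegral.integral_const,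
    smul_eq_mul, abs_of_nonneg (sub_nonneg.2 hab), mul_comm (b - a)] at h

lemma abs_sum_Icc_div_sub_intervalIntegral_le {f : ℝ → ℝ} (hf : ContinuousOn f (Set.Icc 0 1))
    {n : ℕ} (hn : 0 < n) {ε : ℝ}
    (hfε : ∀ u ∈ Set.Icc (0:ℝ) 1, ∀ v ∈ Set.Icc (0:ℝ) 1, v ≤ u → u - v < 1 / n → |f u - f v| ≤ ε) :
    |∑ j ∈ Finset.Icc 1 n, f (j / n) / n - ∫ u in (0:ℝ)..1, f u| ≤ ε := by
  have hn₀ : (0:ℝ) < n := Nat.cast_pos.2 hn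
  set t : ℕ → ℝ := fun i => i / n with ht
  have hstep : ∀ i, t (i + 1) - t i = 1 / n := fun i => by simp only [ht]; push_cast; ring
  have hle : ∀ i, t i ≤ t (i + 1) := fun i => by linarith [hstep i, one_div_pos.2 hn₀]
  have hsub : ∀ i < n, Set.Icc (t i) (t (i + 1)) ⊆ Set.Icc 0 1 := fun i hi =>
    Set.Icc_subset_Icc (by positivity) (div_le_one_of_le₀ (by exact_mod_cast hi) hn₀.le)
  have hsum : ∑ j ∈ Finset.Icc 1 n, f (j / n) / n
      = ∑ i ∈ Finset.range n, f (t (i + 1)) * (t (i + 1) - t i) := by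
    rw [← Finset.Ico_add_one_right_eq_Icc, Finset.sum_Ico_eq_sum_range]
    refine Finset.sum_congr rfl fun i _ => ?_
    rw [hstep, add_comm 1 i]
    simp only [ht]
    ring
  have hint : ∫ u in (0:ℝ)..1, f u = ∑ i ∈ Finset.range n, ∫ u in t i..t (i + 1), f u := by
    rw [intervalIntegral.sum_integral_adjacent_intervals fun i hi =>
      (hf.mono (Set.uIcc_of_le (hle i) ▸ hsub i hi)).intervalIntegrable]
    simp [ht, hn₀.ne']
  have hpiece : ∀ i ∈ Finset.range n,
      |f (t (i + 1)) * (t (i + 1) - t i) - ∫ u in t i..t (i + 1), f u| ≤ ε * (1 / n) := by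
    intro i hi
    have hi := Finset.mem_range.1 hi
    rw [← hstep i]
    refine abs_mul_sub_intervalIntegral_le (hle i)
      ((hf.mono (Set.uIcc_of_le (hle i) ▸ hsub i hi)).intervalIntegrable) fun u hu => ?_
    refine hfε _ (hsub i hi ⟨hle i, le_rfl⟩) _ (hsub i hi (Set.Ioc_subset_Icc_self hu))
      ?_ ?_ <;> linarith [hu.1, hu.2, hstep i]
  calc |∑ j ∈ Finset.Icc 1 n, f (j / n) / n - ∫ u in (0:ℝ)..1, f u|
      = |∑ i ∈ Finset.range n,
          (f (t (i + 1)) * (t (i + 1) - t i) - ∫ u in t i..t (i + 1), f u)| := by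
        rw [hsum, hint, ← Finset.sum_sub_distrib]
    _ ≤ ∑ _i ∈ Finset.range n, ε * (1 / n) :=
        (Finset.abs_sum_le_sum_abs _ _).trans (Finset.sum_le_sum hpiece)
    _ = ε := by rw [Finset.sum_const, Finset.card_range, nsmul_eq_mul]; field_simp

theorem tendsto_sum_Icc_div_intervalIntegral {f : ℝ → ℝ} (hf : ContinuousOn f (Set.Icc 0 1)) :
    Tendsto (fun n : ℕ => ∑ j ∈ Finset.Icc 1 n, f (j / n) / n) atTop
      (𝓝 (∫ u in (0:ℝ)..1, f u)) := by
  rw [Metric.tendsto_atTop]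
  intro ε hε
  obtain ⟨δ, hδ, hfδ⟩ := Metric.uniformContinuousOn_iff.1
    (isCompact_Icc.uniformContinuousOn_of_continuous hf) (ε / 2) (half_pos hε)
  obtain ⟨N, hN⟩ := exists_nat_one_div_lt hδ
  refine ⟨N + 1, fun n hNn => ?_⟩
  have hmesh : 1 / (n:ℝ) < δ :=
    lt_of_le_of_lt (one_div_le_one_div_of_le (by positivity) (by exact_mod_cast hNn)) hN
  rw [Real.dist_eq]
  refine (abs_sum_Icc_div_sub_intervalIntegral_le hf (by omega)
    fun u hu v hv hvu huv => ?_).trans_lt (half_lt_self hε)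
  refine (hfδ u hu v hv ?_).le
  rw [Real.dist_eq, abs_of_nonneg (sub_nonneg.2 hvu)]
  exact huv.trans hmesh

lemma tendsto_sum_Icc_div_nat_intervalIntegral_div {F : ℝ → ℝ} (hF : Differentiable ℝ F)
    (hF0 : F 0 = 0) :
    Tendsto (fun n : ℕ => ∑ j ∈ Finset.Icc 1 n, F (j / n) / j) atTop
      (𝓝 (∫ u in (0:ℝ)..1, F u / u)) := by
  have hslope : ∀ u ≠ 0, dslope F 0 u = F u / u := fun u hu => by
    rw [dslope_of_ne _ hu, slope_def_field, hF0, sub_zero, sub_zero]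
  have hcont : Continuous (dslope F 0) :=
    continuousOn_univ.1 ((continuousOn_dslope univ_mem).2 ⟨hF.continuous.continuousOn, hF 0⟩)
  have hint : ∫ u in (0:ℝ)..1, dslope F 0 u = ∫ u in (0:ℝ)..1, F u / u :=
    intervalIntegral.integral_congr_ae <| ae_of_all _ fun u hu =>
      hslope u (by rw [Set.uIoc_of_le zero_le_one] at hu; exact hu.1.ne')
  rw [← hint]
  refine (tendsto_sum_Icc_div_intervalIntegral hcont.continuousOn).congr fun n => ?_
  refine Finset.sum_congr rfl fun j hj => ?_
  have hj0 : (0:ℝ) < j := Nat.cast_pos.2 (Finset.mem_Icc.1 hj).1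
  have hn0 : (0:ℝ) < n := Nat.cast_pos.2 (by have := Finset.mem_Icc.1 hj; omega)
  rw [hslope _ (by positivity)]
  field_simp

lemma tendsto_sum_Icc_of_abs_le_div {u : ℕ → ℕ → ℝ} {ε : ℕ → ℝ}
    (hε : Tendsto ε atTop (𝓝 0)) (hu : ∀ n j, 1 ≤ j → j ≤ n → |u n j| ≤ ε j / n) :
    Tendsto (fun n => ∑ j ∈ Finset.Icc 1 n, u n j) atTop (𝓝 0) := by
  have hcesaro := (hε.comp (tendsto_add_atTop_nat 1)).cesaro
  refine squeeze_zero_norm (fun n => ?_) hcesaro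
  calc ‖∑ j ∈ Finset.Icc 1 n, u n j‖ ≤ ∑ j ∈ Finset.Icc 1 n, ε j / n :=
        (norm_sum_le _ _).trans <| Finset.sum_le_sum fun j hj =>
          hu n j (Finset.mem_Icc.1 hj).1 (Finset.mem_Icc.1 hj).2
    _ = (n : ℝ)⁻¹ * ∑ i ∈ Finset.range n, (ε ∘ (· + 1)) i := by
        rw [← Finset.Ico_add_one_right_eq_Icc, Finset.sum_Ico_eq_sum_range, Finset.mul_sum,
          Nat.add_sub_cancel]
        exact Finset.sum_congr rfl fun i _ => by simp [add_comm 1 i, div_eq_inv_mul]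

lemma abs_sub_sub_log_one_add_sub_log_one_add_le {a b : ℝ} (hb : 0 ≤ b) (hba : b ≤ a) :
    |(a - b) - (log (1 + a) - log (1 + b))| ≤ a * (a - b) := by
  have ha : 0 ≤ a := hb.trans hba
  have hb1 : 0 < 1 + b := by linarith
  have ha1 : 0 < 1 + a := by linarith
  have hlog : log (1 + a) - log (1 + b) = log ((1 + a) / (1 + b)) :=
    (log_div ha1.ne' hb1.ne').symm
  have hupper : log ((1 + a) / (1 + b)) ≤ a - b := by
    have h := log_le_sub_one_of_pos (div_pos ha1 hb1)
    have : (1 + a) / (1 + b) - 1 ≤ a - b := by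
      rw [div_sub_one hb1.ne', div_le_iff₀ hb1]; nlinarith
    linarith
  have hlower : (a - b) - a * (a - b) ≤ log ((1 + a) / (1 + b)) := by
    have h := one_sub_inv_le_log_of_pos (div_pos ha1 hb1)
    have : (a - b) - a * (a - b) ≤ 1 - ((1 + a) / (1 + b))⁻¹ := by
      rw [inv_div, one_sub_div ha1.ne', le_div_iff₀ ha1]; nlinarith [mul_nonneg ha ha]
    linarith
  rw [hlog, abs_le]
  constructor <;> nlinarith

lemma abs_mul_log_sub_add_mul_le {a b M P : ℝ} (hb : 0 ≤ b) (hba : b ≤ a) (hM : 0 ≤ M) :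
    |M * (log (1 + b) - log (1 + a)) + P * (a - b)| ≤ (|P - M| + M * a) * (a - b) := by
  have hab : 0 ≤ a - b := sub_nonneg.2 hba
  calc |M * (log (1 + b) - log (1 + a)) + P * (a - b)|
      = |(P - M) * (a - b) + M * ((a - b) - (log (1 + a) - log (1 + b)))| := by ring_nf
    _ ≤ |P - M| * (a - b) + M * (a * (a - b)) := by
        refine (abs_add_le _ _).trans ?_
        rw [abs_mul, abs_mul, abs_of_nonneg hab, abs_of_nonneg hM]
        gcongr
        exact abs_sub_sub_log_one_add_sub_log_one_add_le hb hba
    _ = (|P - M| + M * a) * (a - b) := by ring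

lemma exp_neg_mul_le_exp_abs (c : ℝ) {t : ℝ} (ht₀ : 0 ≤ t) (ht₁ : t ≤ 1) :
    exp (-c * t) ≤ exp |c| :=
  exp_le_exp.2 <| by nlinarith [neg_abs_le c, abs_nonneg c]

lemma abs_log_factor_add_riemann_term_le {κ y s c M : ℝ} (hκ : 0 < κ) (hy : 0 < y) (hs : 0 ≤ s)
    (hM : 0 ≤ M) {n j : ℕ} (hj : 1 ≤ j) (hjn : j ≤ n) :
    |M * (log (1 + (exp (-c / n) * y⁻¹) ^ j * exp (-s * j / n))
          - log (1 + (exp (-c / n) * y⁻¹) ^ j))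
        + κ * (1 - exp (-s * j / n)) * exp (-c * j / n) / j|
      ≤ κ * exp |c| * s
          * (|M * j / (κ * y ^ j) - 1| + exp |c| * (M * j / (κ * y ^ j)) * y⁻¹ ^ j) / n := by
  have hj0 : (0:ℝ) < j := Nat.cast_pos.2 hj
  have hn0 : (0:ℝ) < n := Nat.cast_pos.2 (by omega)
  have htn : (j:ℝ) / n ≤ 1 := div_le_one_of_le₀ (by exact_mod_cast hjn) hn0.le
  set K := exp |c|
  set a := (exp (-c / n) * y⁻¹) ^ j with ha_def
  set e := exp (-s * j / n)
  -- `P` is the predicted size `κ y^j / j` of `M`, and `ρ = M / P`.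
  set P := κ * y ^ j / j
  set ρ := M * j / (κ * y ^ j)
  have ha : a = exp (-c * j / n) * y⁻¹ ^ j := by
    rw [ha_def, mul_pow, ← exp_nat_mul]; ring_nf
  have haK : a ≤ K * y⁻¹ ^ j := by
    rw [ha]; gcongr
    simpa only [mul_div_assoc] using exp_neg_mul_le_exp_abs c (by positivity) htn
  have he1 : e ≤ 1 := exp_le_one_iff.2 (by rw [neg_mul, neg_div, neg_nonpos]; positivity)
  have hab : a - a * e ≤ K * y⁻¹ ^ j * (s * j / n) := by
    have h1e : 1 - e ≤ s * j / n := by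
      linarith [add_one_le_exp (-s * j / n), show -s * j / n = -(s * j / n) by ring]
    rw [← mul_one_sub]
    gcongr
  have hP : P * (a - a * e) = κ * (1 - e) * exp (-c * j / n) / j := by
    simp only [P, ha, inv_pow]; field_simp
  have hM_eq : M = P * ρ := by simp only [P, ρ]; field_simp
  calc _ = |M * (log (1 + a * e) - log (1 + a)) + P * (a - a * e)| := by rw [hP]
    _ ≤ (|P - M| + M * a) * (a - a * e) :=
        abs_mul_log_sub_add_mul_le (by positivity) (mul_le_of_le_one_right (by positivity) he1) hM
    _ ≤ (|P - M| + M * (K * y⁻¹ ^ j)) * (K * y⁻¹ ^ j * (s * j / n)) := by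
        gcongr
        linarith [mul_le_of_le_one_right (by positivity : 0 ≤ a) he1]
    _ = κ * K * s * (|ρ - 1| + K * ρ * y⁻¹ ^ j) / n := by
        rw [hM_eq, ← mul_one_sub, abs_mul, abs_of_pos (by positivity : 0 < P), abs_sub_comm]
        simp only [P, inv_pow]
        field_simp

lemma one_lt_of_tendsto_nat_mul_div_pow {κ y : ℝ} (hκ : 0 < κ) (hy : 1 ≤ y) {m : ℕ → ℕ}
    (hm : Tendsto (fun i : ℕ => (m i : ℝ) * i / (κ * y ^ i)) atTop (𝓝 1)) : 1 < y := by
  refine hy.lt_of_ne fun hy1 => ?_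
  subst hy1
  have hm0 : Tendsto (fun i => (m i : ℝ)) atTop (𝓝 0) := by
    have h := hm.mul (tendsto_const_div_atTop_nhds_zero_nat κ)
    rw [one_mul] at h
    refine h.congr' ?_
    filter_upwards [eventually_ge_atTop 1] with i hi
    have : (i:ℝ) ≠ 0 := Nat.cast_ne_zero.2 (by omega)
    field_simp
    ring
  have hzero : ∀ᶠ i in atTop, (m i : ℝ) * i / (κ * 1 ^ i) = 0 := by
    filter_upwards [hm0.eventually (gt_mem_nhds one_pos)] with i hi
    simp [show m i = 0 by exact_mod_cast Nat.lt_one_iff.1 (by exact_mod_cast hi)]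
  exact one_ne_zero
    (tendsto_nhds_unique hm (tendsto_const_nhds.congr' (hzero.mono fun _ h => h.symm)))

theorem tendsto_sum_log_binomial_factor {κ y s c : ℝ} (hκ : 0 < κ) (hy : 1 < y) (hs : 0 ≤ s)
    {m : ℕ → ℕ} (hm : Tendsto (fun i : ℕ => (m i : ℝ) * i / (κ * y ^ i)) atTop (𝓝 1)) :
    Tendsto (fun n : ℕ => ∑ j ∈ Finset.Icc 1 n,
        (m j : ℝ) * (log (1 + (exp (-c / n) * y⁻¹) ^ j * exp (-s * j / n))
          - log (1 + (exp (-c / n) * y⁻¹) ^ j)))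
      atTop (𝓝 (-(κ * ∫ u in (0:ℝ)..1, (1 - exp (-s * u)) * exp (-c * u) / u))) := by
  have hriemann : Tendsto (fun n : ℕ => ∑ j ∈ Finset.Icc 1 n,
      κ * (1 - exp (-s * j / n)) * exp (-c * j / n) / j) atTop
      (𝓝 (κ * ∫ u in (0:ℝ)..1, (1 - exp (-s * u)) * exp (-c * u) / u)) := by
    refine ((tendsto_sum_Icc_div_nat_intervalIntegral_div
      (F := fun u => (1 - exp (-s * u)) * exp (-c * u)) (by fun_prop) (by simp)).const_mul κ).congr
      fun n => ?_
    rw [Finset.mul_sum]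
    exact Finset.sum_congr rfl fun j _ => by ring_nf
  have hε : Tendsto (fun j : ℕ => κ * exp |c| * s * (|(m j : ℝ) * j / (κ * y ^ j) - 1|
      + exp |c| * ((m j : ℝ) * j / (κ * y ^ j)) * y⁻¹ ^ j)) atTop (𝓝 0) := by
    have h1 := (hm.sub_const 1).abs
    have h2 := tendsto_pow_atTop_nhds_zero_of_lt_one (inv_nonneg.2 (zero_le_one.trans hy.le))
      (inv_lt_one_of_one_lt₀ hy)
    simpa using (h1.add ((hm.const_mul (exp |c|)).mul h2)).const_mul (κ * exp |c| * s)
  have herr := tendsto_sum_Icc_of_abs_le_div hε fun n j hj hjn =>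
    abs_log_factor_add_riemann_term_le hκ (zero_lt_one.trans hy) hs (Nat.cast_nonneg _) hj hjn
  have h := herr.sub hriemann
  rw [zero_sub] at h
  exact h.congr fun n => by simp only [← Finset.sum_sub_distrib, add_sub_cancel_right]

lemma integral_pow_of_binomial {Ω : Type*} [MeasurableSpace Ω] {μ : Measure Ω}
    [IsFiniteMeasure μ] {Z : Ω → ℕ} (hZ : Measurable Z) {M : ℕ} {p : ℝ}
    (hpmf : ∀ k : ℕ, (μ {ω | Z ω = k}).toReal = M.choose k * p ^ k * (1 - p) ^ (M - k))
    {r : ℝ} (hr : |r| ≤ 1) :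
    ∫ ω, r ^ Z ω ∂μ = (1 - p + p * r) ^ M := by
  have hmeas : AEStronglyMeasurable (fun k : ℕ => r ^ k) (μ.map Z) :=
    measurable_from_top.aestronglyMeasurable
  have hint : Integrable (fun k : ℕ => r ^ k) (μ.map Z) :=
    .of_bound hmeas 1 (ae_of_all _ fun k => by rw [norm_pow]; exact pow_le_one₀ (norm_nonneg r) hr)
  have hpoint : ∀ k : ℕ,
      (μ.map Z).real {k} • r ^ k = (p * r) ^ k * (1 - p) ^ (M - k) * M.choose k :=
    fun k => by
      rw [map_measureReal_apply hZ (measurableSet_singleton k), measureReal_def]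
      simp only [Set.preimage, Set.mem_singleton_iff]
      rw [hpmf, smul_eq_mul]
      ring
  rw [← integral_map hZ.aemeasurable hmeas, integral_countable hint,
    tsum_eq_sum (s := Finset.range (M + 1)) fun k hk => ?_]
  · simp_rw [hpoint]
    rw [← add_pow, add_comm]
  · rw [hpoint, Nat.choose_eq_zero_of_lt (by simpa using hk)]
    simp

lemma integral_exp_mul_of_binomial {Ω : Type*} [MeasurableSpace Ω] {μ : Measure Ω}
    [IsFiniteMeasure μ] {Z : Ω → ℕ} (hZ : Measurable Z) {M : ℕ} {a : ℝ} (ha : 0 < a)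
    (hpmf : ∀ k : ℕ, (μ {ω | Z ω = k}).toReal
      = M.choose k * (a / (1 + a)) ^ k * (1 - a / (1 + a)) ^ (M - k))
    {t : ℝ} (ht : t ≤ 0) :
    ∫ ω, exp (t * Z ω) ∂μ = exp (M * (log (1 + a * exp t) - log (1 + a))) := by
  have hr : |exp t| ≤ 1 := by rw [abs_of_pos (exp_pos t)]; exact exp_le_one_iff.2 ht
  calc ∫ ω, exp (t * Z ω) ∂μ = ∫ ω, exp t ^ Z ω ∂μ := by simp_rw [← exp_nat_mul, mul_comm]
    _ = (1 - a / (1 + a) + a / (1 + a) * exp t) ^ M := integral_pow_of_binomial hZ hpmf hr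
    _ = exp (log (1 + a * exp t) - log (1 + a)) ^ M := by
        rw [exp_sub, exp_log (by positivity), exp_log (by positivity)]
        field_simp
        ring
    _ = exp (M * (log (1 + a * exp t) - log (1 + a))) := (exp_nat_mul _ _).symm

lemma integral_exp_mul_sum_Icc_eq_prod {Ω : Type*} [MeasurableSpace Ω] {μ : Measure Ω}
    {Z : ℕ → Ω → ℕ} (hZ : ∀ j, Measurable (Z j))
    (hindep : iIndepFun (fun j : {j : ℕ // 1 ≤ j} => Z j) μ) (w : ℕ → ℝ) (t : ℝ) (n : ℕ) :
    ∫ ω, exp (t * ∑ j ∈ Finset.Icc 1 n, w j * Z j ω) ∂μ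
      = ∏ j ∈ Finset.Icc 1 n, ∫ ω, exp (t * (w j * Z j ω)) ∂μ := by
  have hmem : ∀ j ∈ Finset.Icc 1 n, 1 ≤ j := fun j hj => (Finset.mem_Icc.1 hj).1
  have h := (hindep.comp (fun j (k : ℕ) => w j * k) fun _ => measurable_from_top).mgf_sum
    (fun j => measurable_from_top.comp (hZ j)) ((Finset.Icc 1 n).subtype (1 ≤ ·)) (t := t)
  simp only [mgf, Finset.sum_apply, Function.comp_apply] at h
  have hsum : ∀ ω, ∑ j ∈ (Finset.Icc 1 n).subtype (1 ≤ ·), w j * (Z j ω : ℝ)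
      = ∑ j ∈ Finset.Icc 1 n, w j * Z j ω := fun ω =>
    Finset.sum_subtype_of_mem (fun j => w j * (Z j ω : ℝ)) hmem
  simp_rw [hsum] at h
  rwa [Finset.prod_subtype_of_mem (fun j => ∫ ω, exp (t * (w j * Z j ω)) ∂μ) hmem] at h

lemma integral_exp_neg_mul_sum_of_binomial {Ω : Type*} [MeasurableSpace Ω] {μ : Measure Ω}
    [IsFiniteMeasure μ] {Z : ℕ → Ω → ℕ} (hZ : ∀ j, Measurable (Z j))
    (hindep : iIndepFun (fun j : {j : ℕ // 1 ≤ j} => Z j) μ) {m : ℕ → ℕ} {x s : ℝ} (hx : 0 < x)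
    (hs : 0 ≤ s) {n : ℕ}
    (hbin : ∀ j, 1 ≤ j → j ≤ n → ∀ k : ℕ, (μ {ω | Z j ω = k}).toReal
      = (m j).choose k * (x ^ j / (1 + x ^ j)) ^ k * (1 - x ^ j / (1 + x ^ j)) ^ (m j - k)) :
    ∫ ω, exp (-s * ((∑ j ∈ Finset.Icc 1 n, j * Z j ω : ℕ) : ℝ) / n) ∂μ
      = exp (∑ j ∈ Finset.Icc 1 n,
          (m j : ℝ) * (log (1 + x ^ j * exp (-s * j / n)) - log (1 + x ^ j))) := by
  have hT : ∀ ω, -s * ((∑ j ∈ Finset.Icc 1 n, j * Z j ω : ℕ) : ℝ) / n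
      = -s / n * ∑ j ∈ Finset.Icc 1 n, (j : ℝ) * Z j ω := fun ω => by push_cast; ring
  simp_rw [hT, integral_exp_mul_sum_Icc_eq_prod hZ hindep, exp_sum, ← mul_assoc]
  refine Finset.prod_congr rfl fun j hj => ?_
  obtain ⟨hj1, hjn⟩ := Finset.mem_Icc.1 hj
  have ht : -s / n * j ≤ 0 :=
    mul_nonpos_of_nonpos_of_nonneg (div_nonpos_of_nonpos_of_nonneg (by linarith)
      (Nat.cast_nonneg n)) (Nat.cast_nonneg j)
  rw [integral_exp_mul_of_binomial (hZ j) (pow_pos hx j) (hbin j hj1 hjn) ht]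
  ring_nf

/-- Selections with `m_i ~ κ y^i/i`, `x = x(n) = e^{-c/n} y⁻¹`:
if `Z_j(n)` are independent binomial with parameters `m_j` and `x^j/(1+x^j)` and
`T_n = Σ_{j=1}^n j Z_j(n)`, then for every `s ≥ 0`, `E exp(-s T_n/n)` converges to
`ψ_c(s) = exp(-κ ∫_0^1 (1 - e^{-sx}) e^{-cx} dx/x)`; so `T_n/n ⇒ X_{κ,c}`. -/
theorem stmt10
    {Ω : Type*} [MeasurableSpace Ω] (μ : Measure Ω) [IsProbabilityMeasure μ]
    (κ y : ℝ) (hκ : 0 < κ) (hy : 1 ≤ y)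
    (m : ℕ → ℕ)
    (hm : Tendsto (fun i : ℕ => (m i : ℝ) * (i : ℝ) / (κ * y ^ i)) atTop (nhds 1))
    (c : ℝ) (x : ℕ → ℝ) (hx : ∀ n : ℕ, x n = Real.exp (-c / n) * y⁻¹)
    (Z : ℕ → ℕ → Ω → ℕ) (hZmeas : ∀ n j, Measurable (Z n j))
    (hbin : ∀ n, 1 ≤ n → ∀ j, 1 ≤ j → j ≤ n → ∀ k : ℕ,
      (μ {ω | Z n j ω = k}).toReal
        = (Nat.choose (m j) k : ℝ) * (x n ^ j / (1 + x n ^ j)) ^ k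
            * (1 - x n ^ j / (1 + x n ^ j)) ^ (m j - k))
    (hindep : ∀ n, iIndepFun
        (fun j : {j : ℕ // 1 ≤ j} => Z n j) μ) :
    ∀ s : ℝ, 0 ≤ s →
      Tendsto
        (fun n : ℕ =>
          ∫ ω, Real.exp (-s * ((∑ j ∈ Finset.Icc 1 n, j * Z n j ω : ℕ) : ℝ) / n) ∂μ)
        atTop
        (nhds (Real.exp
          (-κ * ∫ u in (0:ℝ)..1, (1 - Real.exp (-s * u)) * Real.exp (-c * u) / u))) := by
  intro s hs
  have hx0 : ∀ n, 0 < x n := fun n => by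
    rw [hx n]; exact mul_pos (exp_pos _) (inv_pos.2 (zero_lt_one.trans_le hy))
  rw [neg_mul]
  refine ((continuous_exp.tendsto _).comp (tendsto_sum_log_binomial_factor hκ
    (one_lt_of_tendsto_nat_mul_div_pow hκ hy hm) hs hm)).congr' ?_
  filter_upwards [eventually_ge_atTop 1] with n hn
  rw [integral_exp_neg_mul_sum_of_binomial (hZmeas n) (hindep n) (hx0 n) hs (hbin n hn), hx n,
    Function.comp_apply]
end

section
/- Let n ≥ 1 and m_1, ..., m_n be nonnegative integers, and let I = {(i,j) : 1 ≤ i ≤ n, 1 ≤ j ≤ m_i}. Let (Y_{ij})_{(i,j)∈I} be mutually independent ℕ-valued random variables, let T = Σ_{(i,j)∈I} i·Y_{ij}, and suppose P(T = n) > 0. Let D = (D_{ij})_{(i,j)∈I} be a random element of ℕ^I equal in distribution to ((Y_{ij})_{(i,j)∈I} | T = n). Define the unrefined processes Z_i = Σ_{j=1}^{m_i} Y_{ij} and C_i = Σ_{j=1}^{m_i} D_{ij} for 1 ≤ i ≤ n. For B ⊆ {1,...,n}, let K = {(i,j) ∈ I : i ∈ B}, let D_{B*} = (D_{ij})_{(i,j)∈K},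 Y_{B*} = (Y_{ij})_{(i,j)∈K}, C_B = (C_i)_{i∈B}, Z_B = (Z_i)_{i∈B}, and R_B = Σ_{i∈B} i Z_i. Then d_TV(D_{B*}, Y_{B*}) = d_TV(C_B, Z_B) = d_TV((R_B | T = n), R_B); in particular, passing from the refined processes to the unrefined ones, and further to the one-dimensional weighted sums, does not decrease the total variation distance. -/
/-!
Split `T = R_B + S` with `S = Σ_{i ∉ B} i Z_i`, which is independent of `Y_{B*}`. If `X` is a
function of `Y_{B*}` with `R_B = ρ(X)`, independence gives
`P(X = a, T = n) / P(T = n) = P(X = a) c(ρ a)` with `c r = P(S + r = n) / P(T = n)`, hence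
`Σ_a |P(X = a | T = n) - P(X = a)| = Σ_a P(X = a) |c(ρ a) - 1| = Σ_r P(R_B = r) |c r - 1|`,
the same number for `X = Y_{B*}`, `X = Z_B` and `X = R_B`. Finally `D_{B*}` and `C_B` are the
same functions of `D`, whose law is that of `Y` conditioned on `T = n`.
-/

open MeasureTheory ProbabilityTheory

open scoped ENNReal

section TotalVariation

variable {α β : Type*}

lemma dTV_eq_half_toReal_tsum_ofReal (p q : α → ℝ) :
    dTV p q = 1 / 2 * (∑' a, ENNReal.ofReal |p a - q a|).toReal := by
  rw [dTV, ENNReal.tsum_toReal_eq fun _ => ENNReal.ofReal_ne_top]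
  simp only [ENNReal.toReal_ofReal (abs_nonneg _)]

lemma ofReal_abs_toReal_mul_sub {x y : ℝ≥0∞} (hx : x ≠ ⊤) :
    ENNReal.ofReal |(x * y).toReal - x.toReal| = x * ENNReal.ofReal |y.toReal - 1| := by
  rw [ENNReal.toReal_mul, ← mul_sub_one, abs_mul, abs_of_nonneg ENNReal.toReal_nonneg,
    ENNReal.ofReal_mul ENNReal.toReal_nonneg, ENNReal.ofReal_toReal hx]

lemma dTV_mul_comp_eq_dTV_tsum_fiber (p : α → ℝ≥0∞) (ρ : α → β) (c : β → ℝ≥0∞)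
    (hp : ∀ b, ∑' a : ρ ⁻¹' {b}, p a ≠ ⊤) :
    dTV (fun a => (p a * c (ρ a)).toReal) (fun a => (p a).toReal)
      = dTV (fun b => ((∑' a : ρ ⁻¹' {b}, p a) * c b).toReal)
          (fun b => (∑' a : ρ ⁻¹' {b}, p a).toReal) := by
  have hp' : ∀ a, p a ≠ ⊤ := fun a =>
    ne_top_of_le_ne_top (hp (ρ a)) (ENNReal.le_tsum (f := fun a : ρ ⁻¹' {ρ a} => p a) ⟨a, rfl⟩)
  simp only [dTV_eq_half_toReal_tsum_ofReal, ofReal_abs_toReal_mul_sub (hp' _),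
    ofReal_abs_toReal_mul_sub (hp _)]
  rw [← ENNReal.tsum_fiberwise _ ρ]
  congr 3 with b
  rw [← ENNReal.tsum_mul_right]
  refine tsum_congr fun a => ?_
  rw [show ρ a = b from a.2]

end TotalVariation

section Conditioning

variable {Ω α : Type*} [MeasurableSpace Ω] {μ : Measure Ω}
  [MeasurableSpace α] [MeasurableSingletonClass α]

lemma ProbabilityTheory.iIndepFun.indepFun_subtype_compl {ι β : Type*} [Fintype ι]
    [MeasurableSpace β] {Y : ι → Ω → β} (hindep : iIndepFun Y μ) (hY : ∀ i, Measurable (Y i))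
    (P : ι → Prop) [DecidablePred P] :
    IndepFun (fun ω (i : {i // P i}) => Y i ω) (fun ω (i : {i // ¬ P i}) => Y i ω) μ := by
  have hblocks := hindep.indepFun_finset {i | P i} {i | ¬ P i}
    (Finset.disjoint_filter.mpr fun _ _ h h' => h' h) hY
  exact hblocks.comp
    (measurable_pi_lambda (fun v (i : {i // P i}) => v ⟨i.1, by simpa using i.2⟩)
      fun _ => measurable_pi_apply _)
    (measurable_pi_lambda (fun v (i : {i // ¬ P i}) => v ⟨i.1, by simpa using i.2⟩)
      fun _ => measurable_pi_apply _)

lemma measure_preimage_eq_of_forall_singleton [Countable α] {D V : Ω → α} (hD : Measurable D)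
    (hV : Measurable V) {s : Set Ω} (hs : MeasurableSet s)
    (h : ∀ a, μ {ω | D ω = a} = μ ({ω | V ω = a} ∩ s) / μ s) (t : Set α) :
    μ (D ⁻¹' t) = μ (V ⁻¹' t ∩ s) / μ s := by
  have hcond : ∀ A, μ (A ∩ s) / μ s = μ[A | s] := fun A => by
    rw [cond_apply hs, Set.inter_comm, ENNReal.div_eq_inv_mul]
  have hmap : μ.map D = μ[|s].map V := Measure.ext_of_singleton fun a => by
    rw [Measure.map_apply hD (measurableSet_singleton a),
      Measure.map_apply hV (measurableSet_singleton a), ← hcond]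
    exact h a
  have ht : MeasurableSet t := t.to_countable.measurableSet
  rw [hcond, ← Measure.map_apply hD ht, hmap, Measure.map_apply hV ht]

lemma measure_inter_eq_mul_of_indepFun {X : Ω → α} {S T : Ω → ℕ} {ρ : α → ℕ}
    (hXS : IndepFun X S μ) (hT : ∀ ω, T ω = ρ (X ω) + S ω) (a : α) (N : ℕ) :
    μ ({ω | X ω = a} ∩ {ω | T ω = N}) = μ {ω | X ω = a} * μ {ω | S ω + ρ a = N} := by
  have hset : {ω | X ω = a} ∩ {ω | T ω = N} = X ⁻¹' {a} ∩ S ⁻¹' {k | k + ρ a = N} := by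
    ext ω
    simp only [Set.mem_inter_iff, Set.mem_ofPred_eq, Set.mem_preimage, Set.mem_singleton_iff,
      hT]
    constructor <;> rintro ⟨rfl, h⟩ <;> exact ⟨rfl, by omega⟩
  rw [hset, hXS.measure_inter_preimage_eq_mul _ _ (measurableSet_singleton a)
    (MeasurableSet.of_discrete)]
  rfl

theorem dTV_cond_eq_dTV_cond_of_indepFun [Countable α] [IsFiniteMeasure μ] {X : Ω → α}
    {S R T : Ω → ℕ} {ρ : α → ℕ} (hX : Measurable X) (hXS : IndepFun X S μ) (hR : ∀ ω, ρ (X ω) = R ω)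
    (hT : ∀ ω, T ω = R ω + S ω) (N : ℕ) :
    dTV (fun a => (μ ({ω | X ω = a} ∩ {ω | T ω = N}) / μ {ω | T ω = N}).toReal)
        (fun a => (μ {ω | X ω = a}).toReal)
      = dTV (fun r => (μ ({ω | R ω = r} ∩ {ω | T ω = N}) / μ {ω | T ω = N}).toReal)
          (fun r => (μ {ω | R ω = r}).toReal) := by
  have hRX : R = ρ ∘ X := funext fun ω => (hR ω).symm
  have hRS : IndepFun R S μ := hRX ▸ hXS.comp (measurable_of_countable ρ) measurable_id
  have hfiber : ∀ r, ∑' a : ρ ⁻¹' {r}, μ {ω | X ω = a} = μ {ω | R ω = r} := fun r => by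
    rw [hRX]
    exact tsum_measure_preimage_singleton (Set.to_countable _)
      fun a _ => hX (measurableSet_singleton a)
  simp only [measure_inter_eq_mul_of_indepFun hXS (fun ω => hR ω ▸ hT ω),
    measure_inter_eq_mul_of_indepFun (ρ := id) hRS hT, mul_div_assoc, id]
  simp only [← hfiber]
  exact dTV_mul_comp_eq_dTV_tsum_fiber (fun a => μ {ω | X ω = a}) ρ
    (fun r => μ {ω | S ω + r = N} / μ {ω | T ω = N}) fun r => hfiber r ▸ measure_ne_top μ _

theorem dTV_comp_eq_dTV_cond_of_indepFun [Countable α] [IsFiniteMeasure μ] {γ : Type*}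
    [MeasurableSpace γ] [MeasurableSingletonClass γ] [Countable γ] {D V : Ω → γ}
    (hD : Measurable D) (hV : Measurable V) {S R T : Ω → ℕ} {N : ℕ}
    (hTN : MeasurableSet {ω | T ω = N})
    (hlaw : ∀ c, μ {ω | D ω = c} = μ ({ω | V ω = c} ∩ {ω | T ω = N}) / μ {ω | T ω = N})
    (g : γ → α) {ρ : α → ℕ} (hXS : IndepFun (fun ω => g (V ω)) S μ)
    (hR : ∀ ω, ρ (g (V ω)) = R ω) (hT : ∀ ω, T ω = R ω + S ω) :
    dTV (fun a => (μ {ω | g (D ω) = a}).toReal) (fun a => (μ {ω | g (V ω) = a}).toReal)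
      = dTV (fun r => (μ ({ω | R ω = r} ∩ {ω | T ω = N}) / μ {ω | T ω = N}).toReal)
          (fun r => (μ {ω | R ω = r}).toReal) := by
  have hlaw_comp : ∀ a, μ {ω | g (D ω) = a}
      = μ ({ω | g (V ω) = a} ∩ {ω | T ω = N}) / μ {ω | T ω = N} := fun a =>
    measure_preimage_eq_of_forall_singleton hD hV hTN hlaw (g ⁻¹' {a})
  simp only [hlaw_comp]
  exact dTV_cond_eq_dTV_cond_of_indepFun ((measurable_of_countable g).comp hV) hXS hR hT N

end Conditioning

lemma Fintype.sum_subtype_fst_mem {ι M : Type*} {κ : ι → Type*} [Fintype ι] [DecidableEq ι]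
    [∀ i, Fintype (κ i)] [AddCommMonoid M] (B : Finset ι) (f : (Σ i, κ i) → M) :
    ∑ p : {p : Σ i, κ i // p.1 ∈ B}, f p.1 = ∑ i ∈ B, ∑ j, f ⟨i, j⟩ := by
  rw [← Finset.sum_subtype (B.sigma fun _ => Finset.univ) (by simp), Finset.sum_sigma]

lemma Fintype.sum_sigma_mul_eq_add_sum_compl {ι R : Type*} {κ : ι → Type*} [Fintype ι]
    [DecidableEq ι] [∀ i, Fintype (κ i)] [NonUnitalNonAssocSemiring R] (B : Finset ι)
    (w : ι → R) (y : (Σ i, κ i) → R) :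
    ∑ p, w p.1 * y p
      = ∑ i ∈ B, w i * ∑ j, y ⟨i, j⟩ + ∑ p : {p : Σ i, κ i // p.1 ∉ B}, w p.1.1 * y p.1 := by
  rw [← Fintype.sum_subtype_add_sum_subtype fun p : Σ i, κ i => p.1 ∈ B,
    Fintype.sum_subtype_fst_mem B fun p => w p.1 * y p]
  simp only [Finset.mul_sum]

theorem stmt11_general
    {Ω : Type*} [MeasurableSpace Ω] (μ : Measure Ω) [IsProbabilityMeasure μ]
    (n : ℕ) (m : Fin n → ℕ)
    (Y : (Σ i : Fin n, Fin (m i)) → Ω → ℕ)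
    (hYmeas : ∀ p, Measurable (Y p))
    (hindep : iIndepFun Y μ)
    (T : Ω → ℕ)
    (hT : T = fun ω => ∑ p : Σ i : Fin n, Fin (m i), (p.1.val + 1) * Y p ω)
    (D : Ω → (Σ i : Fin n, Fin (m i)) → ℕ) (hDmeas : Measurable D)
    (hD : ∀ a : (Σ i : Fin n, Fin (m i)) → ℕ,
      μ {ω | D ω = a}
        = μ ({ω | (fun p => Y p ω) = a} ∩ {ω | T ω = n}) / μ {ω | T ω = n})
    (B : Finset (Fin n)) :
    dTV (fun b : {p : Σ i : Fin n, Fin (m i) // p.1 ∈ B} → ℕ =>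
           (μ {ω | (fun p : {p : Σ i : Fin n, Fin (m i) // p.1 ∈ B} => D ω p.1)
                = b}).toReal)
        (fun b : {p : Σ i : Fin n, Fin (m i) // p.1 ∈ B} → ℕ =>
           (μ {ω | (fun p : {p : Σ i : Fin n, Fin (m i) // p.1 ∈ B} => Y p.1 ω)
                = b}).toReal)
      = dTV (fun b : B → ℕ =>
               (μ {ω | (fun i : B => ∑ j : Fin (m i.1), D ω ⟨i.1, j⟩) = b}).toReal)
            (fun b : B → ℕ =>
               (μ {ω | (fun i : B => ∑ j : Fin (m i.1), Y ⟨i.1, j⟩ ω) = b}).toReal)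
    ∧ dTV (fun b : B → ℕ =>
             (μ {ω | (fun i : B => ∑ j : Fin (m i.1), D ω ⟨i.1, j⟩) = b}).toReal)
          (fun b : B → ℕ =>
             (μ {ω | (fun i : B => ∑ j : Fin (m i.1), Y ⟨i.1, j⟩ ω) = b}).toReal)
      = dTV (fun r : ℕ =>
               (μ ({ω | (∑ i ∈ B, (i.val + 1) * ∑ j : Fin (m i), Y ⟨i, j⟩ ω) = r}
                     ∩ {ω | T ω = n}) / μ {ω | T ω = n}).toReal)
            (fun r : ℕ =>
               (μ {ω | (∑ i ∈ B, (i.val + 1) * ∑ j : Fin (m i), Y ⟨i, j⟩ ω)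
                    = r}).toReal) := by
  let unrefine : ({p : Σ i : Fin n, Fin (m i) // p.1 ∈ B} → ℕ) → B → ℕ :=
    fun v i => ∑ j : Fin (m i.1), v ⟨⟨i.1, j⟩, i.2⟩
  let R : Ω → ℕ := fun ω => ∑ i ∈ B, (i.val + 1) * ∑ j : Fin (m i), Y ⟨i, j⟩ ω
  let S : Ω → ℕ := fun ω =>
    ∑ p : {p : Σ i : Fin n, Fin (m i) // p.1 ∉ B}, (p.1.1.val + 1) * Y p.1 ω
  have hsplit : ∀ ω, T ω = R ω + S ω := fun ω => by
    rw [hT]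
    exact Fintype.sum_sigma_mul_eq_add_sum_compl B (fun i => i.val + 1) (Y · ω)
  have hR : ∀ ω, ∑ i : B, (i.1.val + 1) * unrefine (fun p => Y p.1 ω) i = R ω := fun ω =>
    Finset.sum_coe_sort B fun i => (i.val + 1) * ∑ j : Fin (m i), Y ⟨i, j⟩ ω
  have hXS : IndepFun (fun ω (p : {p : Σ i : Fin n, Fin (m i) // p.1 ∈ B}) => Y p.1 ω) S μ := by
    have hblocks := hindep.indepFun_subtype_compl hYmeas fun p => p.1 ∈ B
    exact hblocks.comp measurable_id (measurable_of_countable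
      fun (v : {p : Σ i : Fin n, Fin (m i) // p.1 ∉ B} → ℕ) => ∑ p, (p.1.1.val + 1) * v p)
  have hTn : MeasurableSet {ω | T ω = n} :=
    (by rw [hT]; fun_prop : Measurable T) (measurableSet_singleton n)
  have hV : Measurable fun ω p => Y p ω := measurable_pi_lambda _ hYmeas
  have hrefined := dTV_comp_eq_dTV_cond_of_indepFun hDmeas hV hTn hD
    (fun v (p : {p : Σ i : Fin n, Fin (m i) // p.1 ∈ B}) => v p.1) hXS
    (ρ := fun v => ∑ i : B, (i.1.val + 1) * unrefine v i) hR hsplit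
  have hunrefined := dTV_comp_eq_dTV_cond_of_indepFun hDmeas hV hTn hD
    (fun v (i : B) => ∑ j : Fin (m i.1), v ⟨i.1, j⟩)
    (hXS.comp (measurable_of_countable unrefine) measurable_id)
    (ρ := fun b => ∑ i : B, (i.1.val + 1) * b i) hR hsplit
  exact ⟨hrefined.trans hunrefined.symm, hunrefined⟩

/-- Refined processes.  With index set
`I = {(i,j) : 1 ≤ i ≤ n, 1 ≤ j ≤ m_i}` (encoded as `Σ i : Fin n, Fin (m i)`, the
pair `(i,j)` having weight `i+1`), independent `Y_{ij}`, `T = Σ i·Y_{ij}`, and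
`D ≝ (Y | T = n)`, define the unrefined processes `C_i = Σ_j D_{ij}`,
`Z_i = Σ_j Y_{ij}` and `R_B = Σ_{i∈B} i Z_i`.  Then
`d_TV(D_{B*}, Y_{B*}) = d_TV(C_B, Z_B) = d_TV((R_B | T = n), R_B)`. -/
theorem stmt11
    {Ω : Type*} [MeasurableSpace Ω] (μ : Measure Ω) [IsProbabilityMeasure μ]
    (n : ℕ) (hn : 1 ≤ n) (m : Fin n → ℕ)
    (Y : (Σ i : Fin n, Fin (m i)) → Ω → ℕ)
    (hYmeas : ∀ p, Measurable (Y p))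
    (hindep : iIndepFun Y μ)
    (T : Ω → ℕ)
    (hT : T = fun ω => ∑ p : Σ i : Fin n, Fin (m i), (p.1.val + 1) * Y p ω)
    (hpos : μ {ω | T ω = n} ≠ 0)
    (D : Ω → (Σ i : Fin n, Fin (m i)) → ℕ) (hDmeas : Measurable D)
    (hD : ∀ a : (Σ i : Fin n, Fin (m i)) → ℕ,
      μ {ω | D ω = a}
        = μ ({ω | (fun p => Y p ω) = a} ∩ {ω | T ω = n}) / μ {ω | T ω = n})
    (B : Finset (Fin n)) :
    dTV (fun b : {p : Σ i : Fin n, Fin (m i) // p.1 ∈ B} → ℕ =>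
           (μ {ω | (fun p : {p : Σ i : Fin n, Fin (m i) // p.1 ∈ B} => D ω p.1)
                = b}).toReal)
        (fun b : {p : Σ i : Fin n, Fin (m i) // p.1 ∈ B} → ℕ =>
           (μ {ω | (fun p : {p : Σ i : Fin n, Fin (m i) // p.1 ∈ B} => Y p.1 ω)
                = b}).toReal)
      = dTV (fun b : B → ℕ =>
               (μ {ω | (fun i : B => ∑ j : Fin (m i.1), D ω ⟨i.1, j⟩) = b}).toReal)
            (fun b : B → ℕ =>
               (μ {ω | (fun i : B => ∑ j : Fin (m i.1), Y ⟨i.1, j⟩ ω) = b}).toReal)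
    ∧ dTV (fun b : B → ℕ =>
             (μ {ω | (fun i : B => ∑ j : Fin (m i.1), D ω ⟨i.1, j⟩) = b}).toReal)
          (fun b : B → ℕ =>
             (μ {ω | (fun i : B => ∑ j : Fin (m i.1), Y ⟨i.1, j⟩ ω) = b}).toReal)
      = dTV (fun r : ℕ =>
               (μ ({ω | (∑ i ∈ B, (i.val + 1) * ∑ j : Fin (m i), Y ⟨i, j⟩ ω) = r}
                     ∩ {ω | T ω = n}) / μ {ω | T ω = n}).toReal)
            (fun r : ℕ =>
               (μ {ω | (∑ i ∈ B, (i.val + 1) * ∑ j : Fin (m i), Y ⟨i, j⟩ ω)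
                    = r}).toReal) :=
  stmt11_general μ n m Y hYmeas hindep T hT D hDmeas hD B
end

section
/- Let B be a finite index set, A ⊆ B, and let h : ℕ^B → {0,1} be a function depending only on the coordinates in A (i.e. h(a) = h(a') whenever a and a' agree on A). Let C_B and Z_B be arbitrary random elements of ℕ^B, and let C_A and Z_A denote their restrictions to coordinates in A. Let C_B* be distributed as (C_B | h(C_B) = 1) and Z_B* as (Z_B | h(Z_B) = 1). Write p = P(h(Z_B) = 1), q = P(h(C_B) = 1), d_B = d_TV(C_B, Z_B), d_A = d_TV(C_A, Z_A), and assume p > 0 and q > 0. Then d_TV(C_B*, Z_B*) ≤ (1/2)|1 − q/p| + d_B/p ≤ (1/p)(d_A/2 + d_B) ≤ (3/2) d_B / p. -/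
/-!
Write `f, g` for the mass functions of `C_B, Z_B` and `E = {h = 1}`. Termwise
`f/q - g/p = f (q⁻¹ - p⁻¹) + (f - g)/p` on `E`, which sums to the first bound. Since `h` only
sees the coordinates in `A`, `E` is the preimage of an event `E_A` under the restriction map, so
`|p - q| = |P(Z_A ∈ E_A) - P(C_A ∈ E_A)| ≤ d_A`; and `d_A ≤ d_B` because the mass function of
`C_A` sums that of `C_B` over the fibres of the restriction map.
-/

open MeasureTheory ProbabilityTheory

open Set

section tsum

variable {S : Type*} {f g : S → ℝ}

theorem abs_tsum_subtype_sub_le (hf : Summable f) (hg : Summable g) (E : Set S) :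
    |∑' s : E, f s - ∑' s : E, g s| ≤ ∑' s : E, |f s - g s| := by
  show |∑' s : E, (f ∘ (↑)) s - ∑' s : E, (g ∘ (↑)) s| ≤ _
  rw [← (hf.subtype (· ∈ E)).tsum_sub (hg.subtype (· ∈ E))]
  exact norm_tsum_le_tsum_norm (f := fun s : E => f s - g s) ((hf.sub hg).norm.subtype (· ∈ E))

/-- Between two sequences of equal total mass, the sum differences over `E` and over `Eᶜ` are
opposite, so each is at most half the `ℓ¹` distance. -/
theorem abs_tsum_subtype_sub_le_dTV (hf : Summable f) (hg : Summable g)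
    (hfg : ∑' s, f s = ∑' s, g s) (E : Set S) :
    |∑' s : E, f s - ∑' s : E, g s| ≤ dTV f g := by
  have hE := abs_tsum_subtype_sub_le hf hg E
  have hEc := abs_tsum_subtype_sub_le hf hg Eᶜ
  have hsplit := (hf.sub hg).abs.tsum_subtype_add_tsum_subtype_compl E
  rw [← hf.tsum_subtype_add_tsum_subtype_compl E, ← hg.tsum_subtype_add_tsum_subtype_compl E] at hfg
  have hcompl : ∑' s : ↑Eᶜ, f s - ∑' s : ↑Eᶜ, g s = -(∑' s : E, f s - ∑' s : E, g s) := by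
    linarith
  rw [hcompl, abs_neg] at hEc
  unfold dTV
  linarith

theorem dTV_indicator_le (hf : Summable f) (hg : Summable g) (E : Set S) :
    dTV (E.indicator f) (E.indicator g) ≤ dTV f g := by
  unfold dTV
  gcongr 1 / 2 * ?_
  refine Summable.tsum_le_tsum (fun s => ?_) ((hf.indicator E).sub (hg.indicator E)).abs
    (hf.sub hg).abs
  by_cases hs : s ∈ E <;> simp [hs]

theorem dTV_fiberwise_le {T : Type*} (hf : Summable f) (hg : Summable g) (π : S → T) :
    dTV (fun t => ∑' s : π ⁻¹' {t}, f s) (fun t => ∑' s : π ⁻¹' {t}, g s) ≤ dTV f g := by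
  unfold dTV
  gcongr 1 / 2 * ?_
  have hfiber := (hf.sub hg).abs.hasSum.tsum_fiberwise π
  have hle : ∀ t, |∑' s : π ⁻¹' {t}, f s - ∑' s : π ⁻¹' {t}, g s|
      ≤ ∑' s : π ⁻¹' {t}, |f s - g s| := fun t => abs_tsum_subtype_sub_le hf hg _
  rw [← hfiber.tsum_eq]
  exact Summable.tsum_le_tsum hle
    (hfiber.summable.of_nonneg_of_le (fun _ => abs_nonneg _) hle) hfiber.summable

theorem dTV_div_le {p q : ℝ} (hf0 : 0 ≤ f) (hf : HasSum f q) (hg : Summable g) (hp : 0 < p) :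
    dTV (fun s => f s / q) (fun s => g s / p) ≤ (1 / 2) * |1 - q / p| + dTV f g / p := by
  have hq : 0 ≤ q := hf.nonneg hf0
  have hbound : HasSum (fun s => f s * |q⁻¹ - p⁻¹| + |f s - g s| / p)
      (q * |q⁻¹ - p⁻¹| + (∑' s, |f s - g s|) / p) :=
    (hf.mul_right _).add ((hf.summable.sub hg).abs.hasSum.div_const p)
  have hle : ∀ s, |f s / q - g s / p| ≤ f s * |q⁻¹ - p⁻¹| + |f s - g s| / p := fun s => by
    calc |f s / q - g s / p| = |f s * (q⁻¹ - p⁻¹) + (f s - g s) / p| := by ring_nf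
      _ ≤ |f s * (q⁻¹ - p⁻¹)| + |(f s - g s) / p| := abs_add_le _ _
      _ = f s * |q⁻¹ - p⁻¹| + |f s - g s| / p := by
        rw [abs_mul, abs_div, abs_of_nonneg (hf0 s), abs_of_pos hp]
  have hmass : q * |q⁻¹ - p⁻¹| ≤ |1 - q / p| := by
    rcases hq.eq_or_lt with rfl | hqpos
    · simp
    · rw [← abs_of_pos hqpos, ← abs_mul, mul_sub, abs_of_pos hqpos, mul_inv_cancel₀ hqpos.ne',
        div_eq_mul_inv]
  have hsum := hasSum_le hle
    ((hf.summable.div_const q).sub (hg.div_const p)).abs.hasSum hbound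
  unfold dTV
  rw [mul_div_assoc]
  linarith

end tsum

section law

variable {Ω S : Type*} [MeasurableSpace Ω] {μ : Measure Ω} {X Y : Ω → S}

def lawMass (μ : Measure Ω) (X : Ω → S) (s : S) : ℝ := (μ {ω | X ω = s}).toReal

variable [IsFiniteMeasure μ] [MeasurableSpace S] [Countable S] [MeasurableSingletonClass S]

theorem hasSum_lawMass_subtype (hX : Measurable X) (E : Set S) :
    HasSum (fun s : E => lawMass μ X s) (μ (X ⁻¹' E)).toReal := by
  have h := tsum_measure_preimage_singleton (μ := μ) E.to_countable
    (fun s _ => hX (measurableSet_singleton s))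
  have hfin : ∑' s : E, μ (X ⁻¹' {(s : S)}) ≠ ⊤ := h ▸ measure_ne_top μ _
  rw [← h, ENNReal.tsum_toReal_eq fun _ => measure_ne_top μ _]
  exact (ENNReal.summable_toReal hfin).hasSum

theorem hasSum_lawMass_indicator (hX : Measurable X) (E : Set S) :
    HasSum (E.indicator (lawMass μ X)) (μ (X ⁻¹' E)).toReal :=
  hasSum_subtype_iff_indicator.mp (hasSum_lawMass_subtype hX E)

theorem hasSum_lawMass (hX : Measurable X) : HasSum (lawMass μ X) (μ univ).toReal := by
  simpa only [indicator_univ, preimage_univ] using hasSum_lawMass_indicator (μ := μ) hX univ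

theorem abs_toReal_measure_preimage_sub_le_dTV (hX : Measurable X) (hY : Measurable Y)
    (E : Set S) :
    |(μ (X ⁻¹' E)).toReal - (μ (Y ⁻¹' E)).toReal| ≤ dTV (lawMass μ X) (lawMass μ Y) := by
  have hXs := hasSum_lawMass (μ := μ) hX
  have hYs := hasSum_lawMass (μ := μ) hY
  rw [← (hasSum_lawMass_subtype hX E).tsum_eq, ← (hasSum_lawMass_subtype hY E).tsum_eq]
  exact abs_tsum_subtype_sub_le_dTV hXs.summable hYs.summable
    (hXs.tsum_eq.trans hYs.tsum_eq.symm) E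

theorem dTV_lawMass_comp_le {T : Type*} (hX : Measurable X) (hY : Measurable Y) (π : S → T) :
    dTV (lawMass μ (π ∘ X)) (lawMass μ (π ∘ Y)) ≤ dTV (lawMass μ X) (lawMass μ Y) := by
  have hfiber : ∀ Z : Ω → S, Measurable Z →
      lawMass μ (π ∘ Z) = fun t => ∑' s : π ⁻¹' {t}, lawMass μ Z s :=
    fun Z hZ => funext fun t => (hasSum_lawMass_subtype hZ (π ⁻¹' {t})).tsum_eq.symm
  rw [hfiber X hX, hfiber Y hY]
  exact dTV_fiberwise_le (hasSum_lawMass hX).summable (hasSum_lawMass hY).summable π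

theorem dTV_cond_le (hX : Measurable X) (hY : Measurable Y) (E : Set S)
    (hpos : 0 < (μ (Y ⁻¹' E)).toReal) :
    dTV (fun s => (μ {ω | X ω = s ∧ X ω ∈ E}).toReal / (μ (X ⁻¹' E)).toReal)
        (fun s => (μ {ω | Y ω = s ∧ Y ω ∈ E}).toReal / (μ (Y ⁻¹' E)).toReal)
      ≤ (1 / 2) * |1 - (μ (X ⁻¹' E)).toReal / (μ (Y ⁻¹' E)).toReal|
        + dTV (lawMass μ X) (lawMass μ Y) / (μ (Y ⁻¹' E)).toReal := by
  have hcut : ∀ (Z : Ω → S) (s : S),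
      (μ {ω | Z ω = s ∧ Z ω ∈ E}).toReal = E.indicator (lawMass μ Z) s := fun Z s => by
    by_cases hs : s ∈ E
    · rw [indicator_of_mem hs, lawMass]
      congr 2
      ext ω
      exact and_iff_left_of_imp fun h => h ▸ hs
    · have hempty : {ω | Z ω = s ∧ Z ω ∈ E} = ∅ :=
        eq_empty_of_forall_notMem fun ω ⟨h, hE⟩ => hs (h ▸ hE)
      rw [indicator_of_notMem hs, hempty, measure_empty, ENNReal.toReal_zero]
  simp only [hcut X, hcut Y]
  calc _ ≤ _ := dTV_div_le (fun s => indicator_nonneg (fun _ _ => ENNReal.toReal_nonneg) s)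
        (hasSum_lawMass_indicator hX E) (hasSum_lawMass_indicator hY E).summable hpos
    _ ≤ _ := by
      gcongr
      exact dTV_indicator_le (hasSum_lawMass hX).summable (hasSum_lawMass hY).summable E

end law

theorem stmt12_general
    {Ω : Type*} [MeasurableSpace Ω] (μ : Measure Ω) [IsProbabilityMeasure μ]
    {β : Type*} [Fintype β] (A : Set β)
    (h : (β → ℕ) → Bool)
    (hA : ∀ a a' : β → ℕ, (∀ i ∈ A, a i = a' i) → h a = h a')
    (CB ZB : Ω → β → ℕ)
    (hCmeas : Measurable CB) (hZmeas : Measurable ZB)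
    (p q dB dA : ℝ)
    (hp : p = (μ {ω | h (ZB ω) = true}).toReal)
    (hq : q = (μ {ω | h (CB ω) = true}).toReal)
    (hppos : 0 < p)
    (hdB : dB = dTV (fun a : β → ℕ => (μ {ω | CB ω = a}).toReal)
                    (fun a : β → ℕ => (μ {ω | ZB ω = a}).toReal))
    (hdA : dA = dTV (fun a : A → ℕ => (μ {ω | (fun i : A => CB ω i) = a}).toReal)
                    (fun a : A → ℕ => (μ {ω | (fun i : A => ZB ω i) = a}).toReal)) :
    dTV (fun a : β → ℕ => (μ {ω | CB ω = a ∧ h (CB ω) = true}).toReal / q)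
        (fun a : β → ℕ => (μ {ω | ZB ω = a ∧ h (ZB ω) = true}).toReal / p)
      ≤ (1 / 2) * |1 - q / p| + dB / p
    ∧ (1 / 2) * |1 - q / p| + dB / p ≤ (1 / p) * (dA / 2 + dB)
    ∧ (1 / p) * (dA / 2 + dB) ≤ (3 / 2) * dB / p := by
  set E : Set (β → ℕ) := {a | h a = true}
  let ρ : (β → ℕ) → (A → ℕ) := fun a i => a i
  have hρ : Measurable ρ := measurable_pi_lambda _ fun i => measurable_pi_apply (i : β)
  have hE : E = ρ ⁻¹' (ρ '' E) := by
    refine (subset_preimage_image ρ E).antisymm fun a ⟨a', ha', hρa⟩ => ?_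
    show h a = true
    rwa [← hA a' a fun i hi => congrFun hρa ⟨i, hi⟩]
  have hpq : |q - p| ≤ dA := by
    rw [hp, hq, hdA]
    have hEA := abs_toReal_measure_preimage_sub_le_dTV (μ := μ) (hρ.comp hCmeas)
      (hρ.comp hZmeas) (ρ '' E)
    rwa [preimage_comp, preimage_comp, ← hE] at hEA
  have hAB : dA ≤ dB := hdA ▸ hdB ▸ dTV_lawMass_comp_le hCmeas hZmeas ρ
  refine ⟨?_, ?_, ?_⟩
  · rw [hp, hq, hdB]
    exact dTV_cond_le hCmeas hZmeas E (hp ▸ hppos)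
  · have hratio : |1 - q / p| = |q - p| / p := by
      rw [one_sub_div hppos.ne', abs_div, abs_of_pos hppos, abs_sub_comm]
    rw [hratio]
    field_simp
    linarith
  · field_simp
    linarith

/-- Conditioning on an event of moderate probability.  If
`h : ℕ^B → {0,1}` depends only on coordinates in `A ⊆ B`, and `C_B*`, `Z_B*` are
`C_B`, `Z_B` conditioned on `{h = 1}`, then with `p = P(h(Z_B)=1)`,
`q = P(h(C_B)=1)`, `d_B = d_TV(C_B, Z_B)`, `d_A = d_TV(C_A, Z_A)`:
`d_TV(C_B*, Z_B*) ≤ (1/2)|1 - q/p| + d_B/p ≤ (1/p)(d_A/2 + d_B) ≤ (3/2) d_B/p`. -/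
theorem stmt12
    {Ω : Type*} [MeasurableSpace Ω] (μ : Measure Ω) [IsProbabilityMeasure μ]
    {β : Type*} [Fintype β] (A : Set β)
    (h : (β → ℕ) → Bool)
    (hA : ∀ a a' : β → ℕ, (∀ i ∈ A, a i = a' i) → h a = h a')
    (CB ZB : Ω → β → ℕ)
    (hCmeas : Measurable CB) (hZmeas : Measurable ZB)
    (p q dB dA : ℝ)
    (hp : p = (μ {ω | h (ZB ω) = true}).toReal)
    (hq : q = (μ {ω | h (CB ω) = true}).toReal)
    (hppos : 0 < p) (hqpos : 0 < q)
    (hdB : dB = dTV (fun a : β → ℕ => (μ {ω | CB ω = a}).toReal)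
                    (fun a : β → ℕ => (μ {ω | ZB ω = a}).toReal))
    (hdA : dA = dTV (fun a : A → ℕ => (μ {ω | (fun i : A => CB ω i) = a}).toReal)
                    (fun a : A → ℕ => (μ {ω | (fun i : A => ZB ω i) = a}).toReal)) :
    dTV (fun a : β → ℕ => (μ {ω | CB ω = a ∧ h (CB ω) = true}).toReal / q)
        (fun a : β → ℕ => (μ {ω | ZB ω = a ∧ h (ZB ω) = true}).toReal / p)
      ≤ (1 / 2) * |1 - q / p| + dB / p
    ∧ (1 / 2) * |1 - q / p| + dB / p ≤ (1 / p) * (dA / 2 + dB)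
    ∧ (1 / p) * (dA / 2 + dB) ≤ (3 / 2) * dB / p :=
  stmt12_general μ A h hA CB ZB hCmeas hZmeas p q dB dA hp hq hppos hdB hdA
end

section
/- Let I be a finite set, and for α ∈ I let Z_α be ℕ-valued random variables, mutually independent under a probability measure P. Let w : I → ℤ and u : I → ℤ be deterministic weight functions, let T = Σ_{α∈I} w(α) Z_α and let t be such that P(T = t) > 0. Let C_I be a random element of ℕ^I equal in distribution (under P) to ((Z_α)_{α∈I} | T = t), and set U = Σ_{α∈I} u(α) C_α. Let θ > 0 be a constant such that E[θ^{Σ_{α∈I} u(α) Z_α}] < ∞. Define the tilted law of C_I by P_θ(C_I = a) = θ^{Σ_α u(α)a(α)} P(C_I = a) / E[θ^U], and the tilted law of Z_I by P_θ(Z_I = a) = θ^{Σ_α u(α)a(α)} P(Z_I = a) / E[θ^{Σ_α u(α)Z_α}] (under which the coordinates Z_α remain mutually independent, with P_θ(Z_α = k) = θ^{u(α)k} P(Z_α = k)/E[θ^{u(α)Z_α}]). Then, under P_θ, C_I is again equal in distribution to (Z_I | T = t): P_θ(C_I = a) = P_θ(Z_I = a | T = t) for all a ∈ ℕ^I. 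-/
/-!
Tilting by `θ ^ (u · a)` reweights each outcome `a` by a factor depending on `a` alone, so it
commutes with conditioning on `{T = t}`.  Writing `J = E[θ ^ (u · Z); T = t]`, the two
normalising constants are `E[θ ^ U] = J / P(T = t)` and `P_θ(T = t) = J / E[θ ^ (u · Z)]`, and
for `w · a = t` both sides of the identity reduce to `θ ^ (u · a) P(Z = a) / J`.
-/

open MeasureTheory ProbabilityTheory

section CountableCodomain

variable {Ω α : Type*} [MeasurableSpace Ω] [MeasurableSpace α] [Countable α]
  [MeasurableSingletonClass α] {μ : Measure Ω}

lemma map_eq_map_cond_of_measure_eq {C X : Ω → α} (hC : Measurable C) (hX : Measurable X)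
    {A : Set Ω} (hA : MeasurableSet A)
    (h : ∀ a, μ {ω | C ω = a} = μ ({ω | X ω = a} ∩ A) / μ A) :
    μ.map C = (μ[|A]).map X := by
  refine Measure.ext_of_singleton fun a => ?_
  rw [Measure.map_apply hC (measurableSet_singleton a),
    Measure.map_apply hX (measurableSet_singleton a), cond_apply hA, Set.inter_comm,
    ← ENNReal.div_eq_inv_mul]
  exact h a

lemma integral_comp_eq_of_map_eq_map_cond {C X : Ω → α} (hC : Measurable C)
    (hX : Measurable X) {A : Set Ω} (hlaw : μ.map C = (μ[|A]).map X) (f : α → ℝ) :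
    ∫ ω, f (C ω) ∂μ = (μ.real A)⁻¹ * ∫ ω in A, f (X ω) ∂μ := by
  have hf : StronglyMeasurable f := (measurable_of_countable f).stronglyMeasurable
  rw [← integral_map hC.aemeasurable hf.aestronglyMeasurable, hlaw,
    integral_map hX.aemeasurable hf.aestronglyMeasurable, ProbabilityTheory.cond,
    integral_smul_measure, ENNReal.toReal_inv, smul_eq_mul, measureReal_def]

lemma setIntegral_preimage_eq_tsum {X : Ω → α} (hX : Measurable X) (s : Set α) {f : α → ℝ}
    (hf : Integrable (fun ω => f (X ω)) μ) :
    ∫ ω in X ⁻¹' s, f (X ω) ∂μ = ∑' a : s, f a * μ.real (X ⁻¹' {(a : α)}) := by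
  have hfm : AEStronglyMeasurable f (μ.map X) :=
    (measurable_of_countable f).aestronglyMeasurable
  rw [← setIntegral_map s.to_countable.measurableSet hfm hX.aemeasurable,
    setIntegral_countable f s.to_countable
      ((integrable_map_measure hfm hX.aemeasurable).2 hf).integrableOn]
  refine tsum_congr fun a => ?_
  rw [map_measureReal_apply hX (measurableSet_singleton _), smul_eq_mul, mul_comm]

end CountableCodomain

lemma integral_pos_of_forall_pos {Ω : Type*} [MeasurableSpace Ω] {μ : Measure Ω} [NeZero μ]
    {f : Ω → ℝ} (hf : ∀ ω, 0 < f ω) (hfi : Integrable f μ) : 0 < ∫ ω, f ω ∂μ := by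
  rw [integral_pos_iff_support_of_nonneg (fun ω => (hf ω).le) hfi,
    Function.support_eq_univ fun ω => (hf ω).ne', pos_iff_ne_zero]
  exact NeZero.ne _

theorem stmt14_general
    {Ω : Type*} [MeasurableSpace Ω] (μ : Measure Ω) [IsProbabilityMeasure μ]
    {I : Type*} [Fintype I]
    (Z : I → Ω → ℕ) (hZmeas : ∀ α, Measurable (Z α))
    (w u : I → ℤ) (t : ℤ)
    (T : Ω → ℤ) (hT : T = fun ω => ∑ α, w α * (Z α ω : ℤ))
    (hpos : μ {ω | T ω = t} ≠ 0)
    (C : Ω → I → ℕ) (hCmeas : Measurable C)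
    (hC : ∀ a : I → ℕ,
      μ {ω | C ω = a}
        = μ ({ω | (fun α => Z α ω) = a} ∩ {ω | T ω = t}) / μ {ω | T ω = t})
    (θ : ℝ) (hθ : 0 < θ)
    (hint : Integrable (fun ω => θ ^ (∑ α, u α * (Z α ω : ℤ))) μ)
    (EZ EU : ℝ)
    (hEZ : EZ = ∫ ω, θ ^ (∑ α, u α * (Z α ω : ℤ)) ∂μ)
    (hEU : EU = ∫ ω, θ ^ (∑ α, u α * (C ω α : ℤ)) ∂μ)
    (PθZ : (I → ℕ) → ℝ)
    (hPθZ : ∀ a : I → ℕ,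
      PθZ a = θ ^ (∑ α, u α * (a α : ℤ))
          * (μ {ω | (fun α => Z α ω) = a}).toReal / EZ)
    (PθT : ℝ)
    (hPθT : PθT = ∑' b : {b : I → ℕ // (∑ α, w α * (b α : ℤ)) = t}, PθZ b) :
    ∀ a : I → ℕ,
      θ ^ (∑ α, u α * (a α : ℤ)) * (μ {ω | C ω = a}).toReal / EU
        = (if (∑ α, w α * (a α : ℤ)) = t then PθZ a else 0) / PθT := by
  intro a
  set X : Ω → I → ℕ := fun ω α => Z α ω
  have hX : Measurable X := measurable_pi_lambda _ hZmeas
  set g : (I → ℕ) → ℝ := fun b => θ ^ (∑ α, u α * (b α : ℤ))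
  set B : Set (I → ℕ) := {b | ∑ α, w α * (b α : ℤ) = t}
  have hTX : {ω | T ω = t} = X ⁻¹' B := by subst hT; rfl
  have hA : MeasurableSet {ω | T ω = t} := hTX ▸ hX B.to_countable.measurableSet
  have hEU' : EU = (μ.real {ω | T ω = t})⁻¹ * ∫ ω in X ⁻¹' B, g (X ω) ∂μ := by
    rw [hEU, integral_comp_eq_of_map_eq_map_cond hCmeas hX
      (map_eq_map_cond_of_measure_eq hCmeas hX hA hC) g, hTX]
  have hPθT' : PθT = (∫ ω in X ⁻¹' B, g (X ω) ∂μ) / EZ := by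
    rw [hPθT, setIntegral_preimage_eq_tsum hX B (f := g) hint, ← tsum_div_const]
    exact tsum_congr fun b => hPθZ b
  have hEZ0 : EZ ≠ 0 := (hEZ ▸ integral_pos_of_forall_pos (fun _ => zpow_pos hθ _) hint).ne'
  have hq0 : (μ {ω | T ω = t}).toReal ≠ 0 :=
    (ENNReal.toReal_pos hpos (measure_ne_top μ _)).ne'
  by_cases ha : ∑ α, w α * (a α : ℤ) = t
  · have hsub : {ω | (fun α => Z α ω) = a} ⊆ {ω | T ω = t} := by
      rw [hTX]
      rintro ω rfl
      exact ha
    rw [if_pos ha, hPθZ a, hC a, Set.inter_eq_left.2 hsub, ENNReal.toReal_div, hEU', hPθT',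
      measureReal_def]
    field_simp
  · have hdisj : {ω | (fun α => Z α ω) = a} ∩ {ω | T ω = t} = ∅ := by
      rw [hTX, Set.eq_empty_iff_forall_notMem]
      rintro ω ⟨rfl, hω⟩
      exact ha hω
    rw [if_neg ha, hC a, hdisj]
    simp

/-- Tilting preserves the conditional representation.  If
`C ≝ (Z | T = t)` with `Z_α` independent, `T = Σ w(α) Z_α`, `U = Σ u(α) C_α`, and
`θ > 0` has `E[θ^{u·Z}] < ∞`, then the tilted laws
`P_θ(C = a) = θ^{u·a} P(C = a)/E[θ^U]` and
`P_θ(Z = a) = θ^{u·a} P(Z = a)/E[θ^{u·Z}]` again satisfy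
`P_θ(C = a) = P_θ(Z = a | T = t)` for every `a ∈ ℕ^I`. -/
theorem stmt14
    {Ω : Type*} [MeasurableSpace Ω] (μ : Measure Ω) [IsProbabilityMeasure μ]
    {I : Type*} [Fintype I]
    (Z : I → Ω → ℕ) (hZmeas : ∀ α, Measurable (Z α))
    (hindep : iIndepFun Z μ)
    (w u : I → ℤ) (t : ℤ)
    (T : Ω → ℤ) (hT : T = fun ω => ∑ α, w α * (Z α ω : ℤ))
    (hpos : μ {ω | T ω = t} ≠ 0)
    (C : Ω → I → ℕ) (hCmeas : Measurable C)
    (hC : ∀ a : I → ℕ,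
      μ {ω | C ω = a}
        = μ ({ω | (fun α => Z α ω) = a} ∩ {ω | T ω = t}) / μ {ω | T ω = t})
    (θ : ℝ) (hθ : 0 < θ)
    (hint : Integrable (fun ω => θ ^ (∑ α, u α * (Z α ω : ℤ))) μ)
    (EZ EU : ℝ)
    (hEZ : EZ = ∫ ω, θ ^ (∑ α, u α * (Z α ω : ℤ)) ∂μ)
    (hEU : EU = ∫ ω, θ ^ (∑ α, u α * (C ω α : ℤ)) ∂μ)
    (PθZ : (I → ℕ) → ℝ)
    (hPθZ : ∀ a : I → ℕ,
      PθZ a = θ ^ (∑ α, u α * (a α : ℤ))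
          * (μ {ω | (fun α => Z α ω) = a}).toReal / EZ)
    (PθT : ℝ)
    (hPθT : PθT = ∑' b : {b : I → ℕ // (∑ α, w α * (b α : ℤ)) = t}, PθZ b) :
    ∀ a : I → ℕ,
      θ ^ (∑ α, u α * (a α : ℤ)) * (μ {ω | C ω = a}).toReal / EU
        = (if (∑ α, w α * (a α : ℤ)) = t then PθZ a else 0) / PθT :=
  stmt14_general μ Z hZmeas w u t T hT hpos C hCmeas hC θ hθ hint EZ EU hEZ hEU PθZ hPθZ PθT hPθT
end

section
/- Let I be a finite set, and for α ∈ I let Z_α be ℕ-valued random variables, mutually independent under a probability measure P. Let w : I → ℤ and u : I → ℤ be deterministic weight functions, let T = Σ_{α∈I} w(α) Z_α, U_I = Σ_{α∈I} u(α) Z_α, and let t be such that P(T = t) > 0. Let C_I be a random element of ℕ^I equal in distribution (under P) to (Z_I | T = t), and set U = Σ_{α∈I} u(α) C_α. Let θ > 0 with E[θ^{U_I}] < ∞, and let P_θ denote the tilted law under which the Z_α are independent with P_θ(Z_α = k) = θ^{u(α)k} P(Z_α = k)/E[θ^{u(α)Z_α}]. For B ⊆ I write Z_B = (Z_α)_{α∈B},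 C_B = (C_α)_{α∈B}, U_B = Σ_{α∈B} u(α) Z_α and R_B = Σ_{α∈B} w(α) Z_α. Assume u is such that P(U = u₀) > 0 for a value u₀. Then d_TV( L(C_B | U = u₀), L_θ(Z_B) ) = d_TV( L_θ((U_B, R_B) | U_I = u₀, T = t), L_θ((U_B, R_B)) ), where L denotes law under P and L_θ law under P_θ. -/
/-!
On the event `{U_I = u₀, T = t}` the tilting density `θ ^ U_I / E[θ ^ U_I]` is constant, so the
law of `C_B` given `U = u₀` is the `P_θ`-law of `Z_B` given that event. The density factorises
over the blocks `B` and `Bᶜ`, so `Z_B` and `Z_{Bᶜ}` stay independent under `P_θ`, and the ratio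
`P_θ(Z_B = b | U_I = u₀, T = t) / P_θ(Z_B = b)` depends on `b` only through `(U_B, R_B)`.
A total variation distance between two laws whose ratio factors through a statistic equals the
distance between the image laws of that statistic.
-/

open MeasureTheory ProbabilityTheory

open scoped ENNReal

section FiberSums

variable {β γ : Type*} (φ : β → γ) {r : β → ℝ≥0∞} {R : γ → ℝ≥0∞}

lemma tsum_toReal_mul_comp_eq_tsum_fiber (hR : ∀ x, ∑' b : φ ⁻¹' {x}, r b = R x)
    (hRtop : ∀ x, R x ≠ ⊤) {H : γ → ℝ} (hH : ∀ x, 0 ≤ H x) :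
    ∑' b, (r b).toReal * H (φ b) = ∑' x, (R x).toReal * H x := by
  have hr : ∀ b, r b ≠ ⊤ := fun b => ne_top_of_le_ne_top (hRtop (φ b))
    (hR (φ b) ▸ ENNReal.le_tsum (⟨b, rfl⟩ : φ ⁻¹' {φ b}))
  have htoReal : ∀ (a : ℝ≥0∞) x, a.toReal * H x = (a * ENNReal.ofReal (H x)).toReal :=
    fun a x => by rw [ENNReal.toReal_mul, ENNReal.toReal_ofReal (hH x)]
  simp_rw [htoReal]
  rw [← ENNReal.tsum_toReal_eq fun b => ENNReal.mul_ne_top (hr b) ENNReal.ofReal_ne_top,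
    ← ENNReal.tsum_toReal_eq fun x => ENNReal.mul_ne_top (hRtop x) ENNReal.ofReal_ne_top,
    ← ENNReal.tsum_fiberwise _ φ]
  congr 1
  refine tsum_congr fun x => ?_
  rw [← hR x, ← ENNReal.tsum_mul_right]
  exact tsum_congr fun b => by rw [show φ b = x from b.2]

lemma dTV_mul_comp_eq (hR : ∀ x, ∑' b : φ ⁻¹' {x}, r b = R x) (hRtop : ∀ x, R x ≠ ⊤)
    (f g : γ → ℝ≥0∞) :
    dTV (fun b => (r b * f (φ b)).toReal) (fun b => (r b * g (φ b)).toReal)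
      = dTV (fun x => (R x * f x).toReal) (fun x => (R x * g x).toReal) := by
  have hterm : ∀ (a : ℝ≥0∞) x, |(a * f x).toReal - (a * g x).toReal|
      = a.toReal * |(f x).toReal - (g x).toReal| := fun a x => by
    rw [ENNReal.toReal_mul, ENNReal.toReal_mul, ← mul_sub, abs_mul,
      abs_of_nonneg ENNReal.toReal_nonneg]
  simp only [dTV, hterm]
  rw [tsum_toReal_mul_comp_eq_tsum_fiber φ hR hRtop (H := fun x => |(f x).toReal - (g x).toReal|)
    fun x => abs_nonneg _]

end FiberSums

section Density

variable {Ω : Type*} [MeasurableSpace Ω]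

lemma withDensity_apply_eq_mul_of_eqOn (μ : Measure Ω) {f : Ω → ℝ≥0∞} {s : Set Ω}
    (hs : MeasurableSet s) {k : ℝ≥0∞} (hf : ∀ ω ∈ s, f ω = k) :
    μ.withDensity f s = k * μ s := by
  rw [withDensity_apply _ hs, setLIntegral_congr_fun hs hf, setLIntegral_const]

lemma withDensity_inter_div_eq_of_eqOn (μ : Measure Ω) {f : Ω → ℝ≥0∞} {A E : Set Ω}
    (hA : MeasurableSet A) (hE : MeasurableSet E) {k : ℝ≥0∞} (hf : ∀ ω ∈ E, f ω = k)
    (hk0 : k ≠ 0) (hktop : k ≠ ⊤) :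
    μ.withDensity f (A ∩ E) / μ.withDensity f E = μ (A ∩ E) / μ E := by
  rw [withDensity_apply_eq_mul_of_eqOn μ (hA.inter hE) fun ω hω => hf ω hω.2,
    withDensity_apply_eq_mul_of_eqOn μ hE hf, ENNReal.mul_div_mul_left _ _ hk0 hktop]

lemma integral_pos_of_forall_pos_s16 (μ : Measure Ω) [NeZero μ] {g : Ω → ℝ} (hg : Integrable g μ)
    (hpos : ∀ ω, 0 < g ω) : 0 < ∫ ω, g ω ∂μ := by
  rw [integral_pos_iff_support_of_nonneg (fun ω => (hpos ω).le) hg,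
    Function.support_eq_univ fun ω => (hpos ω).ne']
  exact (NeZero.ne _).bot_lt

lemma isProbabilityMeasure_withDensity_div_integral (μ : Measure Ω) {g : Ω → ℝ}
    (hg : Integrable g μ) (hg0 : ∀ ω, 0 ≤ g ω) (hpos : 0 < ∫ ω, g ω ∂μ) :
    IsProbabilityMeasure (μ.withDensity fun ω => ENNReal.ofReal (g ω / ∫ ω, g ω ∂μ)) := by
  constructor
  rw [withDensity_apply _ MeasurableSet.univ, Measure.restrict_univ,
    ← ofReal_integral_eq_lintegral_ofReal (hg.div_const _)
      (Filter.Eventually.of_forall fun ω => div_nonneg (hg0 ω) hpos.le),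
    integral_div, div_self hpos.ne', ENNReal.ofReal_one]

lemma withDensity_preimage_inter_preimage_eq_mul {β γ : Type*} [MeasurableSpace β]
    [MeasurableSingletonClass β] [MeasurableSpace γ] [MeasurableSingletonClass γ]
    (μ : Measure Ω) {X : Ω → β} {Y : Ω → γ}
    (hX : Measurable X) (hY : Measurable Y) (hXY : IndepFun X Y μ) {f : Ω → ℝ≥0∞}
    {g : β → ℝ≥0∞} {h : γ → ℝ≥0∞} (hf : ∀ ω, f ω = g (X ω) * h (Y ω)) (b : β) (c : γ) :
    μ.withDensity f (X ⁻¹' {b} ∩ Y ⁻¹' {c}) = (g b * μ (X ⁻¹' {b})) * (h c * μ (Y ⁻¹' {c})) := by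
  rw [withDensity_apply_eq_mul_of_eqOn μ
      ((hX (measurableSet_singleton b)).inter (hY (measurableSet_singleton c)))
      (k := g b * h c) fun ω hω => by rw [hf, show X ω = b from hω.1, show Y ω = c from hω.2],
    hXY.measure_inter_preimage_eq_mul _ _ (measurableSet_singleton b) (measurableSet_singleton c)]
  ring

end Density

section DiscreteLaws

variable {Ω β γ : Type*} [MeasurableSpace Ω]
  [MeasurableSpace β] [MeasurableSingletonClass β] [Countable β]
  [MeasurableSpace γ] [MeasurableSingletonClass γ] [Countable γ]

lemma measure_preimage_eq_tsum (ν : Measure Ω) {X : Ω → β} (hX : Measurable X) (S : Set β) :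
    ν (X ⁻¹' S) = ∑' b : S, ν (X ⁻¹' {(b : β)}) :=
  (tsum_measure_preimage_singleton S.to_countable fun b _ => hX (measurableSet_singleton b)).symm

lemma measure_preimage_inter_eq_tsum (ν : Measure Ω) {X : Ω → β} (hX : Measurable X)
    (S : Set β) (E : Set Ω) :
    ν (X ⁻¹' S ∩ E) = ∑' b : S, ν (X ⁻¹' {(b : β)} ∩ E) := by
  rw [← Measure.restrict_apply (hX S.to_countable.measurableSet), measure_preimage_eq_tsum _ hX]
  simp_rw [Measure.restrict_apply (hX (measurableSet_singleton _))]

lemma dTV_cond_eq_dTV_cond_comp (ν : Measure Ω) [IsFiniteMeasure ν] {X : Ω → β}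
    (hX : Measurable X) {δ : Type*} {φ : β → δ} {Y : Ω → δ} (hY : ∀ ω, Y ω = φ (X ω))
    (E : Set Ω) (f : δ → ℝ≥0∞) (hf : ∀ b, ν (X ⁻¹' {b} ∩ E) = ν (X ⁻¹' {b}) * f (φ b)) :
    dTV (fun b => (ν (X ⁻¹' {b} ∩ E) / ν E).toReal) (fun b => (ν (X ⁻¹' {b})).toReal)
      = dTV (fun x => (ν (Y ⁻¹' {x} ∩ E) / ν E).toReal) (fun x => (ν (Y ⁻¹' {x})).toReal) := by
  have hYX : ∀ x, Y ⁻¹' {x} = X ⁻¹' (φ ⁻¹' {x}) := fun x => by ext ω; simp [hY]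
  have hfiber : ∀ x, ∑' b : φ ⁻¹' {x}, ν (X ⁻¹' {(b : β)}) = ν (Y ⁻¹' {x}) := fun x => by
    rw [hYX, measure_preimage_eq_tsum ν hX]
  have hfiberE : ∀ x, ν (Y ⁻¹' {x} ∩ E) = ν (Y ⁻¹' {x}) * f x := fun x => by
    rw [hYX, measure_preimage_inter_eq_tsum ν hX, ← hYX, ← hfiber, ← ENNReal.tsum_mul_right]
    exact tsum_congr fun b => by rw [hf, show φ b = x from b.2]
  simp only [hf, hfiberE, mul_div_assoc]
  simpa only [mul_one] using dTV_mul_comp_eq φ hfiber (fun x => measure_ne_top ν _)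
    (fun x => f x / ν E) (fun _ => 1)

lemma measure_preimage_eq_of_forall_singleton_s16 (μ : Measure Ω) {C Z : Ω → β}
    (hC : Measurable C) (hZ : Measurable Z) {F : Set Ω}
    (hlaw : ∀ a, μ (C ⁻¹' {a}) = μ (Z ⁻¹' {a} ∩ F) / μ F) (A : Set β) :
    μ (C ⁻¹' A) = μ (Z ⁻¹' A ∩ F) / μ F := by
  rw [measure_preimage_eq_tsum μ hC, measure_preimage_inter_eq_tsum μ hZ]
  simp_rw [hlaw, div_eq_mul_inv, ENNReal.tsum_mul_right]

lemma measure_preimage_div_eq_of_forall_singleton (μ : Measure Ω) [IsFiniteMeasure μ]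
    {C Z : Ω → β} (hC : Measurable C) (hZ : Measurable Z) {F : Set Ω} (hF : μ F ≠ 0)
    (hlaw : ∀ a, μ (C ⁻¹' {a}) = μ (Z ⁻¹' {a} ∩ F) / μ F) (A A' : Set β) :
    μ (C ⁻¹' A) / μ (C ⁻¹' A') = μ (Z ⁻¹' A ∩ F) / μ (Z ⁻¹' A' ∩ F) := by
  rw [measure_preimage_eq_of_forall_singleton_s16 μ hC hZ hlaw,
    measure_preimage_eq_of_forall_singleton_s16 μ hC hZ hlaw]
  -- `x / μ F` unfolds to `x * (μ F)⁻¹`, so this is cancellation of a common factor.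
  exact ENNReal.mul_div_mul_right _ _ (ENNReal.inv_ne_zero.2 (measure_ne_top μ F))
    (ENNReal.inv_ne_top.2 hF)

lemma measure_preimage_inter_div_eq_withDensity_div (μ : Measure Ω) [IsFiniteMeasure μ]
    {C Z : Ω → β} (hC : Measurable C) (hZ : Measurable Z) {F : Set Ω} (hF : MeasurableSet F)
    (hF0 : μ F ≠ 0) (hlaw : ∀ a, μ (C ⁻¹' {a}) = μ (Z ⁻¹' {a} ∩ F) / μ F) {f : Ω → ℝ≥0∞}
    {k : ℝ≥0∞} (hk0 : k ≠ 0) (hktop : k ≠ ⊤) {S : Set β} (hf : ∀ ω ∈ Z ⁻¹' S ∩ F, f ω = k)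
    (A : Set β) :
    μ (C ⁻¹' (A ∩ S)) / μ (C ⁻¹' S)
      = μ.withDensity f (Z ⁻¹' A ∩ (Z ⁻¹' S ∩ F)) / μ.withDensity f (Z ⁻¹' S ∩ F) := by
  rw [measure_preimage_div_eq_of_forall_singleton μ hC hZ hF0 hlaw, Set.preimage_inter,
    Set.inter_assoc, withDensity_inter_div_eq_of_eqOn μ (hZ A.to_countable.measurableSet)
      ((hZ S.to_countable.measurableSet).inter hF) hf hk0 hktop]

lemma measure_preimage_inter_preimage_eq_tsum_mul_tsum (ν : Measure Ω) {X : Ω → β} {Y : Ω → γ}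
    (hX : Measurable X) (hY : Measurable Y) {r : β → ℝ≥0∞} {s : γ → ℝ≥0∞}
    (h : ∀ b c, ν (X ⁻¹' {b} ∩ Y ⁻¹' {c}) = r b * s c) (A : Set β) (S : Set γ) :
    ν (X ⁻¹' A ∩ Y ⁻¹' S) = (∑' b : A, r b) * ∑' c : S, s c := by
  have hrow : ∀ b, ν (X ⁻¹' {b} ∩ Y ⁻¹' S) = r b * ∑' c : S, s c := fun b => by
    rw [Set.inter_comm, measure_preimage_inter_eq_tsum ν hY, ← ENNReal.tsum_mul_left]
    exact tsum_congr fun c => by rw [Set.inter_comm, h]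
  rw [measure_preimage_inter_eq_tsum ν hX, ← ENNReal.tsum_mul_right]
  exact tsum_congr fun b => hrow b

lemma indepFun_of_measure_preimage_singleton_inter_eq_mul (ν : Measure Ω)
    [IsProbabilityMeasure ν] {X : Ω → β} {Y : Ω → γ} (hX : Measurable X) (hY : Measurable Y)
    {r : β → ℝ≥0∞} {s : γ → ℝ≥0∞} (h : ∀ b c, ν (X ⁻¹' {b} ∩ Y ⁻¹' {c}) = r b * s c) :
    IndepFun X Y ν := by
  refine indepFun_iff_measure_inter_preimage_eq_mul.2 fun A S _ _ => ?_
  have key := measure_preimage_inter_preimage_eq_tsum_mul_tsum ν hX hY h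
  have hA : ν (X ⁻¹' A) = (∑' b : A, r b) * ∑' c, s c := by simpa using key A Set.univ
  have hS : ν (Y ⁻¹' S) = (∑' b, r b) * ∑' c : S, s c := by simpa using key Set.univ S
  have hone : (∑' b, r b) * ∑' c, s c = 1 := by simpa using (key Set.univ Set.univ).symm
  rw [key, hA, hS]
  calc (∑' b : A, r b) * ∑' c : S, s c
      = (∑' b : A, r b) * (∑' c : S, s c) * ((∑' b, r b) * ∑' c, s c) := by rw [hone, mul_one]
    _ = (∑' b : A, r b) * (∑' c, s c) * ((∑' b, r b) * ∑' c : S, s c) := by ring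

end DiscreteLaws

section WeightedSum

variable {I : Type*} (u : I → ℤ)

def weightedSum {s : Finset I} (a : s → ℕ) : ℤ := ∑ α : s, u α * (a α : ℤ)

lemma weightedSum_restrict {s : Finset I} (a : I → ℕ) :
    weightedSum u (fun α : s => a α) = ∑ α ∈ s, u α * (a α : ℤ) :=
  Finset.sum_coe_sort s fun α => u α * (a α : ℤ)

lemma sum_mul_eq_weightedSum_add_weightedSum_compl [Fintype I] [DecidableEq I] (s : Finset I)
    (a : I → ℕ) :
    ∑ α, u α * (a α : ℤ)
      = weightedSum u (fun α : s => a α) + weightedSum u (fun α : ↥sᶜ => a α) := by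
  rw [weightedSum_restrict, weightedSum_restrict, Finset.sum_add_sum_compl]

end WeightedSum

section Tilt

variable {Ω : Type*} [MeasurableSpace Ω]

noncomputable def zpowTilt (μ : Measure Ω) (θ : ℝ) (V : Ω → ℤ) : Measure Ω :=
  μ.withDensity fun ω => ENNReal.ofReal (θ ^ V ω / ∫ ω', θ ^ V ω' ∂μ)

lemma isProbabilityMeasure_zpowTilt (μ : Measure Ω) [IsProbabilityMeasure μ] {θ : ℝ}
    (hθ : 0 < θ) {V : Ω → ℤ} (hV : Integrable (fun ω => θ ^ V ω) μ) :
    IsProbabilityMeasure (zpowTilt μ θ V) :=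
  isProbabilityMeasure_withDensity_div_integral μ hV (fun _ => (zpow_pos hθ _).le)
    (integral_pos_of_forall_pos_s16 μ hV fun _ => zpow_pos hθ _)

lemma indepFun_zpowTilt_restrict_compl {I : Type*} [Fintype I] [DecidableEq I]
    (μ : Measure Ω) [IsProbabilityMeasure μ] {Z : I → Ω → ℕ} (hZ : ∀ α, Measurable (Z α))
    (hindep : iIndepFun Z μ) (u : I → ℤ) {θ : ℝ} (hθ : 0 < θ)
    (hint : Integrable (fun ω => θ ^ (∑ α, u α * (Z α ω : ℤ))) μ) (B : Finset I) :
    IndepFun (fun ω (α : B) => Z α ω) (fun ω (α : ↥Bᶜ) => Z α ω)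
      (zpowTilt μ θ fun ω => ∑ α, u α * (Z α ω : ℤ)) := by
  have := isProbabilityMeasure_zpowTilt μ hθ hint
  have hX : Measurable fun ω (α : B) => Z α ω := measurable_pi_lambda _ fun α => hZ α
  have hY : Measurable fun ω (α : ↥Bᶜ) => Z α ω := measurable_pi_lambda _ fun α => hZ α
  set EZ := ∫ ω, θ ^ (∑ α, u α * (Z α ω : ℤ)) ∂μ
  refine indepFun_of_measure_preimage_singleton_inter_eq_mul _ hX hY
    (withDensity_preimage_inter_preimage_eq_mul μ hX hY
      (hindep.indepFun_finset B Bᶜ disjoint_compl_right hZ)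
      (g := fun b => ENNReal.ofReal (θ ^ weightedSum u b))
      (h := fun c => ENNReal.ofReal (θ ^ weightedSum u c / EZ)) fun ω => ?_)
  rw [← ENNReal.ofReal_mul (zpow_pos hθ _).le, ← mul_div_assoc, ← zpow_add₀ hθ.ne',
    ← sum_mul_eq_weightedSum_add_weightedSum_compl u B fun α => Z α ω]

end Tilt

theorem stmt16_general
    {Ω : Type*} [MeasurableSpace Ω] (μ : Measure Ω) [IsProbabilityMeasure μ]
    {I : Type*} [Fintype I]
    (Z : I → Ω → ℕ) (hZmeas : ∀ α, Measurable (Z α))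
    (hindep : iIndepFun Z μ)
    (w u : I → ℤ) (t : ℤ)
    (T UI : Ω → ℤ)
    (hT : T = fun ω => ∑ α, w α * (Z α ω : ℤ))
    (hUI : UI = fun ω => ∑ α, u α * (Z α ω : ℤ))
    (hpos : μ {ω | T ω = t} ≠ 0)
    (C : Ω → I → ℕ) (hCmeas : Measurable C)
    (hC : ∀ a : I → ℕ,
      μ {ω | C ω = a}
        = μ ({ω | (fun α => Z α ω) = a} ∩ {ω | T ω = t}) / μ {ω | T ω = t})
    (U : Ω → ℤ) (hU : U = fun ω => ∑ α, u α * (C ω α : ℤ))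
    (θ : ℝ) (hθ : 0 < θ)
    (hint : Integrable (fun ω => θ ^ (∑ α, u α * (Z α ω : ℤ))) μ)
    (EZ : ℝ) (hEZ : EZ = ∫ ω, θ ^ (∑ α, u α * (Z α ω : ℤ)) ∂μ)
    (Pθ : Measure Ω)
    (hPθ : Pθ = μ.withDensity (fun ω => ENNReal.ofReal (θ ^ (UI ω) / EZ)))
    (B : Finset I)
    (UB RB : Ω → ℤ)
    (hUB : UB = fun ω => ∑ α ∈ B, u α * (Z α ω : ℤ))
    (hRB : RB = fun ω => ∑ α ∈ B, w α * (Z α ω : ℤ))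
    (u₀ : ℤ) :
    dTV (fun b : B → ℕ =>
           (μ ({ω | (fun α : B => C ω α) = b} ∩ {ω | U ω = u₀})
              / μ {ω | U ω = u₀}).toReal)
        (fun b : B → ℕ => (Pθ {ω | (fun α : B => Z α ω) = b}).toReal)
      = dTV (fun pr : ℤ × ℤ =>
               (Pθ ({ω | (UB ω, RB ω) = pr} ∩ {ω | UI ω = u₀ ∧ T ω = t})
                  / Pθ {ω | UI ω = u₀ ∧ T ω = t}).toReal)
            (fun pr : ℤ × ℤ => (Pθ {ω | (UB ω, RB ω) = pr}).toReal) := by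
  classical
  subst hT hUI hU hUB hRB
  beta_reduce at hpos hC hPθ ⊢
  set X : Ω → B → ℕ := fun ω α => Z α ω
  set Y : Ω → ↥Bᶜ → ℕ := fun ω α => Z α ω
  set E : Set Ω := {ω | ∑ α, u α * (Z α ω : ℤ) = u₀ ∧ ∑ α, w α * (Z α ω : ℤ) = t}
  have hX : Measurable X := measurable_pi_lambda _ fun α => hZmeas α
  have hEZpos : 0 < EZ := hEZ ▸ integral_pos_of_forall_pos_s16 μ hint fun ω => zpow_pos hθ _
  have hPθ' : Pθ = zpowTilt μ θ fun ω => ∑ α, u α * (Z α ω : ℤ) := by rw [hPθ, hEZ]; rfl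
  have : IsProbabilityMeasure Pθ := hPθ' ▸ isProbabilityMeasure_zpowTilt μ hθ hint
  have hindepθ : IndepFun X Y Pθ :=
    hPθ' ▸ indepFun_zpowTilt_restrict_compl μ hZmeas hindep u hθ hint B
  have hfactor (b : B → ℕ) : Pθ (X ⁻¹' {b} ∩ E) = Pθ (X ⁻¹' {b})
      * Pθ (Y ⁻¹' {c | weightedSum u b + weightedSum u c = u₀
          ∧ weightedSum w b + weightedSum w c = t}) := by
    rw [← hindepθ.measure_inter_preimage_eq_mul _ _ (measurableSet_singleton b)
      MeasurableSet.of_discrete]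
    refine congrArg Pθ (Set.ext fun ω => and_congr_right fun (h : X ω = b) => ?_)
    rw [← h]
    simp only [E, Set.mem_preimage, Set.mem_ofPred_eq,
      sum_mul_eq_weightedSum_add_weightedSum_compl _ B fun α => Z α ω]
    exact Iff.rfl
  have hcond (b : B → ℕ) := hPθ ▸ measure_preimage_inter_div_eq_withDensity_div μ hCmeas
    (measurable_pi_lambda _ hZmeas) (measurableSet_eq_fun (by fun_prop) measurable_const) hpos hC
    (k := ENNReal.ofReal (θ ^ u₀ / EZ)) (by positivity) ENNReal.ofReal_ne_top
    (S := {a | ∑ α, u α * (a α : ℤ) = u₀}) (fun ω hω => by rw [show _ = u₀ from hω.1])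
    {a | (fun α : B => a α) = b}
  refine (congrArg₂ dTV (funext fun b => congrArg ENNReal.toReal (hcond b)) rfl).trans ?_
  exact dTV_cond_eq_dTV_cond_comp Pθ hX
    (φ := fun b : B → ℕ => (weightedSum u b, weightedSum w b))
    (fun ω => (congrArg₂ Prod.mk (weightedSum_restrict u fun α => Z α ω)
      (weightedSum_restrict w fun α => Z α ω)).symm) E
    (fun x : ℤ × ℤ => Pθ (Y ⁻¹' {c | x.1 + weightedSum u c = u₀ ∧ x.2 + weightedSum w c = t}))
    hfactor

/-- Large deviations: with `C ≝ (Z | T = t)`, `U = Σ u(α) C_α`,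
and `P_θ` the tilted law (density `θ^{u·Z}/E[θ^{u·Z}]` w.r.t. `P`, under which the
`Z_α` remain independent with tilted marginals), for `B ⊆ I`,
`d_TV( L(C_B | U = u₀), L_θ(Z_B) )
  = d_TV( L_θ((U_B,R_B) | U_I = u₀, T = t), L_θ((U_B,R_B)) )`. -/
theorem stmt16
    {Ω : Type*} [MeasurableSpace Ω] (μ : Measure Ω) [IsProbabilityMeasure μ]
    {I : Type*} [Fintype I]
    (Z : I → Ω → ℕ) (hZmeas : ∀ α, Measurable (Z α))
    (hindep : iIndepFun Z μ)
    (w u : I → ℤ) (t : ℤ)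
    (T UI : Ω → ℤ)
    (hT : T = fun ω => ∑ α, w α * (Z α ω : ℤ))
    (hUI : UI = fun ω => ∑ α, u α * (Z α ω : ℤ))
    (hpos : μ {ω | T ω = t} ≠ 0)
    (C : Ω → I → ℕ) (hCmeas : Measurable C)
    (hC : ∀ a : I → ℕ,
      μ {ω | C ω = a}
        = μ ({ω | (fun α => Z α ω) = a} ∩ {ω | T ω = t}) / μ {ω | T ω = t})
    (U : Ω → ℤ) (hU : U = fun ω => ∑ α, u α * (C ω α : ℤ))
    (θ : ℝ) (hθ : 0 < θ)
    (hint : Integrable (fun ω => θ ^ (∑ α, u α * (Z α ω : ℤ))) μ)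
    (EZ : ℝ) (hEZ : EZ = ∫ ω, θ ^ (∑ α, u α * (Z α ω : ℤ)) ∂μ)
    (Pθ : Measure Ω)
    (hPθ : Pθ = μ.withDensity (fun ω => ENNReal.ofReal (θ ^ (UI ω) / EZ)))
    (B : Finset I)
    (UB RB : Ω → ℤ)
    (hUB : UB = fun ω => ∑ α ∈ B, u α * (Z α ω : ℤ))
    (hRB : RB = fun ω => ∑ α ∈ B, w α * (Z α ω : ℤ))
    (u₀ : ℤ) (hu₀ : μ {ω | U ω = u₀} ≠ 0) :
    dTV (fun b : B → ℕ =>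
           (μ ({ω | (fun α : B => C ω α) = b} ∩ {ω | U ω = u₀})
              / μ {ω | U ω = u₀}).toReal)
        (fun b : B → ℕ => (Pθ {ω | (fun α : B => Z α ω) = b}).toReal)
      = dTV (fun pr : ℤ × ℤ =>
               (Pθ ({ω | (UB ω, RB ω) = pr} ∩ {ω | UI ω = u₀ ∧ T ω = t})
                  / Pθ {ω | UI ω = u₀ ∧ T ω = t}).toReal)
            (fun pr : ℤ × ℤ => (Pθ {ω | (UB ω, RB ω) = pr}).toReal) :=
  stmt16_general μ Z hZmeas hindep w u t T UI hT hUI hpos C hCmeas hC U hU θ hθ hint EZ hEZ Pθ hPθ B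
    UB RB hUB hRB u₀
end

section
/- Let I be a finite set, and for α ∈ I let Z_α be ℕ-valued random variables, mutually independent under a probability measure P. Let w : I → ℤ and u : I → ℤ be deterministic weight functions, let T = Σ_{α∈I} w(α) Z_α, U_I = Σ_{α∈I} u(α) Z_α, and let t be such that P(T = t) > 0. Let C_I be a random element of ℕ^I equal in distribution (under P) to (Z_I | T = t), and set U = Σ_{α∈I} u(α) C_α. Let θ > 0 with E[θ^{U_I}] < ∞, and let P_θ denote the tilted law under which the Z_α are independent with P_θ(Z_α = k) = θ^{u(α)k} P(Z_α = k)/E[θ^{u(α)Z_α}], and the tilted law of C_I is P_θ(C_I = a) = θ^{Σ_α u(α)a(α)} P(C_I = a)/E[θ^U]. For B ⊆ I write C_B = (C_α)_{α∈B}, U_B = Σ_{α∈B} u(α) Z_α and R_B = Σ_{α∈B} w(α) Z_α. Assume P(U = u₀) > 0. Then d_TV( L(C_B | U = u₀), L_θ(C_B) ) = d_TV( L_θ((U_B, R_B) | U_I = u₀, T = t), L_θ((U_B, R_B) | T = t) ), where L denotes law under P and L_θ law under P_θ. -/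
/-!
The law of `C_B` given `U = u₀` is the law of `Z_B` given `U_I = u₀, T = t`, under `P` and hence
under `P_θ`, whose density `θ^{U_I}` is constant on that event; the tilted law of `C_B` is the
law of `Z_B` under `P_θ` given `T = t`. Since `(U_I, T) = (U_B, R_B) + (a function of Z_{I∖B})`
and `Z_B` is independent of `Z_{I∖B}`, both laws have the form `b ↦ P(Z_B = b) · H((U_B, R_B)(b))`.
So `(U_B, R_B)` is a sufficient statistic for the pair, and pushing two such laws forward along it
does not change their total variation distance.
-/

open MeasureTheory ProbabilityTheory
open scoped ENNReal

lemma ENNReal.ofReal_abs_toReal_mul_sub_toReal_mul {c : ℝ≥0∞} (hc : c ≠ ∞) (x y : ℝ≥0∞) :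
    ENNReal.ofReal |(c * x).toReal - (c * y).toReal|
      = c * ENNReal.ofReal |x.toReal - y.toReal| := by
  rw [ENNReal.toReal_mul, ENNReal.toReal_mul, ← mul_sub, abs_mul,
    abs_of_nonneg ENNReal.toReal_nonneg, ENNReal.ofReal_mul ENNReal.toReal_nonneg,
    ENNReal.ofReal_toReal hc]

lemma dTV_toReal_eq_tsum_ofReal {X : Type*} (p q : X → ℝ≥0∞) :
    dTV (fun x => (p x).toReal) (fun x => (q x).toReal)
      = 1 / 2 * (∑' x, ENNReal.ofReal |(p x).toReal - (q x).toReal|).toReal := by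
  rw [dTV, ENNReal.tsum_toReal_eq fun _ => ENNReal.ofReal_ne_top]
  simp only [ENNReal.toReal_ofReal (abs_nonneg _)]

theorem dTV_mul_comp_eq_dTV_tsum_fiber_s17 {X Y : Type*} (φ : X → Y) (g : X → ℝ≥0∞) (H K : Y → ℝ≥0∞)
    (hg : ∀ y, ∑' x : φ ⁻¹' {y}, g x ≠ ∞) :
    dTV (fun x => (g x * H (φ x)).toReal) (fun x => (g x * K (φ x)).toReal)
      = dTV (fun y => (∑' x : φ ⁻¹' {y}, g x * H (φ x)).toReal)
          (fun y => (∑' x : φ ⁻¹' {y}, g x * K (φ x)).toReal) := by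
  set G : Y → ℝ≥0∞ := fun y => ∑' x : φ ⁻¹' {y}, g x
  set d : Y → ℝ≥0∞ := fun y => ENNReal.ofReal |(H y).toReal - (K y).toReal|
  have hfiber : ∀ (L : Y → ℝ≥0∞) y, ∑' x : φ ⁻¹' {y}, g x * L (φ x) = G y * L y := fun L y => by
    rw [← ENNReal.tsum_mul_right]
    exact tsum_congr fun x => by rw [x.2]
  have hgx : ∀ x, g x ≠ ∞ := fun x =>
    ne_top_of_le_ne_top (hg (φ x)) (ENNReal.le_tsum (⟨x, rfl⟩ : φ ⁻¹' {φ x}))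
  -- Both sides equal `∑' y, G y * d y`, because `|c a - c b| = c |a - b|` for finite `c`.
  simp only [hfiber, dTV_toReal_eq_tsum_ofReal,
    ENNReal.ofReal_abs_toReal_mul_sub_toReal_mul (hgx _)]
  rw [← ENNReal.tsum_fiberwise _ φ]
  congr 2
  exact tsum_congr fun y =>
    (hfiber d y).trans (ENNReal.ofReal_abs_toReal_mul_sub_toReal_mul (hg y) _ _).symm

section Conditioning

variable {Ω X : Type*} [MeasurableSpace Ω] {μ : Measure Ω}

lemma measure_inter_div_eq_cond {s : Set Ω} (hs : MeasurableSet s) (t : Set Ω) :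
    μ (t ∩ s) / μ s = μ[t | s] := by
  rw [cond_apply hs, Set.inter_comm, ENNReal.div_eq_inv_mul]

lemma cond_withDensity_eq_cond_of_const {f : Ω → ℝ≥0∞} {s : Set Ω} (hs : MeasurableSet s) {c : ℝ≥0∞}
    (hc₀ : c ≠ 0) (hc : c ≠ ∞) (hf : ∀ ω ∈ s, f ω = c) : (μ.withDensity f)[|s] = μ[|s] := by
  have hconst : ∀ t, MeasurableSet t → (μ.withDensity f) (t ∩ s) = c * μ (t ∩ s) := fun t ht => by
    rw [withDensity_apply _ (ht.inter hs), setLIntegral_congr_fun (ht.inter hs)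
      fun ω hω => hf ω hω.2, setLIntegral_const]
  ext t ht
  rw [← measure_inter_div_eq_cond hs, ← measure_inter_div_eq_cond hs, hconst t ht,
    ← Set.univ_inter s, hconst _ MeasurableSet.univ, ENNReal.mul_div_mul_left _ _ hc₀ hc]

lemma cond_withDensity {f : Ω → ℝ≥0∞} (hf : Measurable f) {s : Set Ω} (hs : MeasurableSet s) :
    (μ.withDensity f)[|s] = μ.withDensity (s.indicator fun ω => ((μ.withDensity f) s)⁻¹ * f ω) := by
  rw [ProbabilityTheory.cond, restrict_withDensity hs, ← withDensity_indicator hs,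
    ← withDensity_smul _ (hf.indicator hs)]
  congr 1
  ext ω
  by_cases h : ω ∈ s <;> simp [h]

lemma withDensity_ofReal_div_integral_apply {f : Ω → ℝ} (hf₀ : 0 ≤ f) (hf : Measurable f)
    (hfin : ∫⁻ ω, ENNReal.ofReal (f ω) ∂μ ≠ ∞) {s : Set Ω} (hs : MeasurableSet s) :
    (μ.withDensity fun ω => ENNReal.ofReal (f ω / ∫ ω, f ω ∂μ)) s
      = (∫⁻ ω in s, ENNReal.ofReal (f ω) ∂μ) / ∫⁻ ω, ENNReal.ofReal (f ω) ∂μ := by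
  rw [withDensity_apply _ hs, integral_eq_lintegral_of_nonneg_ae (ae_of_all _ hf₀)
    hf.aestronglyMeasurable]
  rcases eq_or_ne (∫⁻ ω, ENNReal.ofReal (f ω) ∂μ) 0 with h₀ | h₀
  · have hs₀ : ∫⁻ ω in s, ENNReal.ofReal (f ω) ∂μ = 0 :=
      le_antisymm (h₀ ▸ setLIntegral_le_lintegral s _) bot_le
    simp [h₀, hs₀]
  · simp_rw [ENNReal.ofReal_div_of_pos (ENNReal.toReal_pos h₀ hfin), ENNReal.ofReal_toReal hfin,
      div_eq_mul_inv]
    exact lintegral_mul_const' _ _ (ENNReal.inv_ne_top.mpr h₀)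

variable [MeasurableSpace X] [Countable X] [MeasurableSingletonClass X]

lemma map_eq_map_cond_of_law {C V : Ω → X} (hC : Measurable C) (hV : Measurable V) {A : Set Ω}
    (hA : MeasurableSet A) (hlaw : ∀ a, μ {ω | C ω = a} = μ ({ω | V ω = a} ∩ A) / μ A) :
    μ.map C = (μ[|A]).map V := by
  refine Measure.ext_of_singleton fun a => ?_
  rw [Measure.map_apply hC (measurableSet_singleton a), Measure.map_apply hV
    (measurableSet_singleton a), ← measure_inter_div_eq_cond hA]
  exact hlaw a

lemma setLIntegral_preimage_eq_of_law {C V : Ω → X} (hC : Measurable C) (hV : Measurable V)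
    {A : Set Ω} (hA : MeasurableSet A) (hlaw : ∀ a, μ {ω | C ω = a} = μ ({ω | V ω = a} ∩ A) / μ A)
    (h : X → ℝ≥0∞) (S : Set X) :
    ∫⁻ ω in C ⁻¹' S, h (C ω) ∂μ = (μ A)⁻¹ * ∫⁻ ω in V ⁻¹' S ∩ A, h (V ω) ∂μ := by
  have hS : MeasurableSet S := S.to_countable.measurableSet
  rw [← setLIntegral_map hS (measurable_of_countable h) hC, map_eq_map_cond_of_law hC hV hA hlaw,
    setLIntegral_map hS (measurable_of_countable h) hV, ProbabilityTheory.cond,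
    Measure.restrict_smul, lintegral_smul_measure, Measure.restrict_restrict (hV hS), smul_eq_mul]

lemma measure_preimage_inter_div_eq_cond_of_law [IsFiniteMeasure μ] {C V : Ω → X}
    (hC : Measurable C) (hV : Measurable V) {A : Set Ω} (hA : MeasurableSet A)
    (hlaw : ∀ a, μ {ω | C ω = a} = μ ({ω | V ω = a} ∩ A) / μ A) (S E : Set X) :
    μ (C ⁻¹' (S ∩ E)) / μ (C ⁻¹' E) = μ[V ⁻¹' S | V ⁻¹' E ∩ A] := by
  have hlaw' : ∀ S : Set X, μ (C ⁻¹' S) = μ[V ⁻¹' S | A] := fun S => by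
    rw [← Measure.map_apply hC S.to_countable.measurableSet, map_eq_map_cond_of_law hC hV hA hlaw,
      Measure.map_apply hV S.to_countable.measurableSet]
  have hE : MeasurableSet (V ⁻¹' E) := hV E.to_countable.measurableSet
  rw [hlaw', hlaw', Set.inter_comm (V ⁻¹' E) A, ← cond_cond_eq_cond_inter hA hE,
    ← measure_inter_div_eq_cond hE]
  rfl

lemma withDensity_preimage_eq_cond_of_law [IsFiniteMeasure μ] {C V : Ω → X} (hC : Measurable C)
    (hV : Measurable V) {A : Set Ω} (hA : MeasurableSet A) (hA₀ : μ A ≠ 0)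
    (hlaw : ∀ a, μ {ω | C ω = a} = μ ({ω | V ω = a} ∩ A) / μ A) {g : X → ℝ} (hg : 0 ≤ g)
    (hgV : ∫⁻ ω, ENNReal.ofReal (g (V ω)) ∂μ ≠ ∞) {c : ℝ} (hc : 0 < c) (S : Set X) :
    (μ.withDensity fun ω => ENNReal.ofReal (g (C ω) / ∫ ω', g (C ω') ∂μ)) (C ⁻¹' S)
      = (μ.withDensity fun ω => ENNReal.ofReal (g (V ω) / c))[V ⁻¹' S | A] := by
  have htransfer := setLIntegral_preimage_eq_of_law hC hV hA hlaw (fun x => ENNReal.ofReal (g x))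
  have hC_univ := htransfer Set.univ
  simp only [Set.preimage_univ, Set.univ_inter, Measure.restrict_univ] at hC_univ
  have hfin : ∫⁻ ω, ENNReal.ofReal (g (C ω)) ∂μ ≠ ∞ := by
    rw [hC_univ]
    exact ENNReal.mul_ne_top (ENNReal.inv_ne_top.mpr hA₀)
      (ne_top_of_le_ne_top hgV (setLIntegral_le_lintegral _ _))
  have hS : MeasurableSet (V ⁻¹' S) := hV S.to_countable.measurableSet
  have hscale : ∀ t, MeasurableSet t → (μ.withDensity fun ω => ENNReal.ofReal (g (V ω) / c)) t
      = (∫⁻ ω in t, ENNReal.ofReal (g (V ω)) ∂μ) * (ENNReal.ofReal c)⁻¹ := fun t ht => by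
    simp_rw [withDensity_apply _ ht, ENNReal.ofReal_div_of_pos hc, div_eq_mul_inv]
    exact lintegral_mul_const' _ _ (ENNReal.inv_ne_top.mpr (ENNReal.ofReal_pos.mpr hc).ne')
  rw [withDensity_ofReal_div_integral_apply (f := fun ω => g (C ω)) (fun ω => hg _)
    ((measurable_of_countable g).comp hC) hfin (hC S.to_countable.measurableSet), htransfer,
    hC_univ, ENNReal.mul_div_mul_left _ _
    (ENNReal.inv_ne_zero.mpr (measure_ne_top μ A)) (ENNReal.inv_ne_top.mpr hA₀),
    ← measure_inter_div_eq_cond hA, hscale _ (hS.inter hA), hscale _ hA,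
    ENNReal.mul_div_mul_right _ _ (ENNReal.inv_ne_zero.mpr ENNReal.ofReal_ne_top)
      (ENNReal.inv_ne_top.mpr (ENNReal.ofReal_pos.mpr hc).ne')]

end Conditioning

section Independence

variable {Ω X₁ X₂ : Type*} [MeasurableSpace Ω] {μ : Measure Ω}
  [MeasurableSpace X₁] [MeasurableSingletonClass X₁]
  [MeasurableSpace X₂] [Countable X₂] [MeasurableSingletonClass X₂]

lemma setLIntegral_preimage_singleton_eq_mul_of_indepFun {V₁ : Ω → X₁} {V₂ : Ω → X₂}
    (hV₁ : Measurable V₁) (hV₂ : Measurable V₂) (hind : IndepFun V₁ V₂ μ)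
    (F : X₁ → X₂ → ℝ≥0∞) (b : X₁) :
    ∫⁻ ω in V₁ ⁻¹' {b}, F (V₁ ω) (V₂ ω) ∂μ = μ (V₁ ⁻¹' {b}) * ∫⁻ ω, F b (V₂ ω) ∂μ := by
  have hb : MeasurableSet (V₁ ⁻¹' {b}) := hV₁ (measurableSet_singleton b)
  have h1 : Measurable (({b} : Set X₁).indicator (1 : X₁ → ℝ≥0∞)) :=
    measurable_one.indicator (measurableSet_singleton b)
  have h2 : Measurable (F b) := measurable_of_countable _
  calc ∫⁻ ω in V₁ ⁻¹' {b}, F (V₁ ω) (V₂ ω) ∂μ = ∫⁻ ω in V₁ ⁻¹' {b}, F b (V₂ ω) ∂μ :=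
        setLIntegral_congr_fun hb fun ω hω => by rw [Set.mem_preimage.mp hω]
    _ = ∫⁻ ω, (((V₁ ⁻¹' {b}).indicator 1 * (F b ∘ V₂) : Ω → ℝ≥0∞)) ω ∂μ := by
        rw [← lintegral_indicator hb]
        congr 1
        funext ω
        by_cases h : V₁ ω = b <;> simp [h]
    _ = μ (V₁ ⁻¹' {b}) * ∫⁻ ω, F b (V₂ ω) ∂μ := by
        have hindep : IndepFun ((V₁ ⁻¹' {b}).indicator 1) (F b ∘ V₂) μ := hind.comp h1 h2
        rw [lintegral_mul_eq_lintegral_mul_lintegral_of_indepFun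
          (measurable_one.indicator hb) (h2.comp hV₂) hindep, lintegral_indicator_one hb]
        rfl

theorem dTV_law_eq_dTV_law_comp_of_indepFun [IsFiniteMeasure μ] [Countable X₁] {Y : Type*}
    {V₁ : Ω → X₁} {V₂ : Ω → X₂} (hV₁ : Measurable V₁) (hV₂ : Measurable V₂)
    (hind : IndepFun V₁ V₂ μ) (φ : X₁ → Y) {ν₁ ν₂ : Measure Ω} (G₁ G₂ : Y → X₂ → ℝ≥0∞)
    (hν₁ : ν₁ = μ.withDensity fun ω => G₁ (φ (V₁ ω)) (V₂ ω))
    (hν₂ : ν₂ = μ.withDensity fun ω => G₂ (φ (V₁ ω)) (V₂ ω)) :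
    dTV (fun b => (ν₁ (V₁ ⁻¹' {b})).toReal) (fun b => (ν₂ (V₁ ⁻¹' {b})).toReal)
      = dTV (fun y => (ν₁ ((φ ∘ V₁) ⁻¹' {y})).toReal)
          (fun y => (ν₂ ((φ ∘ V₁) ⁻¹' {y})).toReal) := by
  have hfactor : ∀ (G : Y → X₂ → ℝ≥0∞) b, (μ.withDensity fun ω => G (φ (V₁ ω)) (V₂ ω))
      (V₁ ⁻¹' {b}) = μ (V₁ ⁻¹' {b}) * ∫⁻ ω, G (φ b) (V₂ ω) ∂μ := fun G b => by
    rw [withDensity_apply _ (hV₁ (measurableSet_singleton b)),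
      setLIntegral_preimage_singleton_eq_mul_of_indepFun hV₁ hV₂ hind (fun b => G (φ b)) b]
  have hfiber : ∀ (ν : Measure Ω) y,
      ν ((φ ∘ V₁) ⁻¹' {y}) = ∑' b : φ ⁻¹' {y}, ν (V₁ ⁻¹' {(b : X₁)}) := fun ν y =>
    (tsum_measure_preimage_singleton (μ := ν) (Set.to_countable (φ ⁻¹' {y}))
      fun b _ => hV₁ (measurableSet_singleton b)).symm
  simp only [hfiber, hν₁, hν₂, hfactor]
  refine dTV_mul_comp_eq_dTV_tsum_fiber_s17 φ (fun b => μ (V₁ ⁻¹' {b}))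
    (fun y => ∫⁻ ω, G₁ y (V₂ ω) ∂μ) (fun y => ∫⁻ ω, G₂ y (V₂ ω) ∂μ) fun y => ?_
  rw [tsum_measure_preimage_singleton (Set.to_countable _)
    fun b _ => hV₁ (measurableSet_singleton b)]
  exact measure_ne_top μ _

theorem dTV_cond_eq_dTV_cond_comp_of_indepFun [IsFiniteMeasure μ] [Countable X₁] {Y : Type*} [Add Y]
    [MeasurableSpace Y] [Countable Y] [MeasurableSingletonClass Y]
    {V₁ : Ω → X₁} {V₂ : Ω → X₂} (hV₁ : Measurable V₁) (hV₂ : Measurable V₂)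
    (hind : IndepFun V₁ V₂ μ) (φ : X₁ → Y) (ψ : X₂ → Y) {S : Ω → Y}
    (hS : ∀ ω, S ω = φ (V₁ ω) + ψ (V₂ ω)) (k : Y → ℝ≥0∞) (E₁ E₂ : Set Y) :
    dTV (fun b => ((μ.withDensity fun ω => k (S ω))[V₁ ⁻¹' {b} | S ⁻¹' E₁]).toReal)
        (fun b => ((μ.withDensity fun ω => k (S ω))[V₁ ⁻¹' {b} | S ⁻¹' E₂]).toReal)
      = dTV (fun y => ((μ.withDensity fun ω => k (S ω))[(φ ∘ V₁) ⁻¹' {y} | S ⁻¹' E₁]).toReal)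
          (fun y => ((μ.withDensity fun ω => k (S ω))[(φ ∘ V₁) ⁻¹' {y} | S ⁻¹' E₂]).toReal) := by
  have hSm : Measurable S := by
    rw [funext hS]
    exact (measurable_of_countable fun p : X₁ × X₂ => φ p.1 + ψ p.2).comp (hV₁.prodMk hV₂)
  set P := μ.withDensity fun ω => k (S ω)
  set G : Set Y → Y → X₂ → ℝ≥0∞ :=
    fun E y c => E.indicator (fun z => (P (S ⁻¹' E))⁻¹ * k z) (y + ψ c)
  have hcond : ∀ E, P[|S ⁻¹' E] = μ.withDensity fun ω => G E (φ (V₁ ω)) (V₂ ω) := fun E => by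
    rw [cond_withDensity (f := fun ω => k (S ω)) ((measurable_of_countable k).comp hSm)
      (hSm E.to_countable.measurableSet)]
    congr 1
    funext ω
    simp only [G, ← hS ω]
    by_cases hω : S ω ∈ E <;> simp [hω, P]
  exact dTV_law_eq_dTV_law_comp_of_indepFun hV₁ hV₂ hind φ (G E₁) (G E₂) (hcond E₁) (hcond E₂)

end Independence

theorem stmt17_general
    {Ω : Type*} [MeasurableSpace Ω] (μ : Measure Ω) [IsProbabilityMeasure μ]
    {I : Type*} [Fintype I]
    (Z : I → Ω → ℕ) (hZmeas : ∀ α, Measurable (Z α))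
    (hindep : iIndepFun Z μ)
    (w u : I → ℤ) (t : ℤ)
    (T UI : Ω → ℤ)
    (hT : T = fun ω => ∑ α, w α * (Z α ω : ℤ))
    (hUI : UI = fun ω => ∑ α, u α * (Z α ω : ℤ))
    (hpos : μ {ω | T ω = t} ≠ 0)
    (C : Ω → I → ℕ) (hCmeas : Measurable C)
    (hC : ∀ a : I → ℕ,
      μ {ω | C ω = a}
        = μ ({ω | (fun α => Z α ω) = a} ∩ {ω | T ω = t}) / μ {ω | T ω = t})
    (U : Ω → ℤ) (hU : U = fun ω => ∑ α, u α * (C ω α : ℤ))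
    (θ : ℝ) (hθ : 0 < θ)
    (hint : Integrable (fun ω => θ ^ (∑ α, u α * (Z α ω : ℤ))) μ)
    (EZ EU : ℝ)
    (hEZ : EZ = ∫ ω, θ ^ (∑ α, u α * (Z α ω : ℤ)) ∂μ)
    (hEU : EU = ∫ ω, θ ^ (U ω) ∂μ)
    (Pθ PθC : Measure Ω)
    (hPθ : Pθ = μ.withDensity (fun ω => ENNReal.ofReal (θ ^ (UI ω) / EZ)))
    (hPθC : PθC = μ.withDensity (fun ω => ENNReal.ofReal (θ ^ (U ω) / EU)))
    (B : Finset I)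
    (UB RB : Ω → ℤ)
    (hUB : UB = fun ω => ∑ α ∈ B, u α * (Z α ω : ℤ))
    (hRB : RB = fun ω => ∑ α ∈ B, w α * (Z α ω : ℤ))
    (u₀ : ℤ) :
    dTV (fun b : B → ℕ =>
           (μ ({ω | (fun α : B => C ω α) = b} ∩ {ω | U ω = u₀})
              / μ {ω | U ω = u₀}).toReal)
        (fun b : B → ℕ => (PθC {ω | (fun α : B => C ω α) = b}).toReal)
      = dTV (fun pr : ℤ × ℤ =>
               (Pθ ({ω | (UB ω, RB ω) = pr} ∩ {ω | UI ω = u₀ ∧ T ω = t})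
                  / Pθ {ω | UI ω = u₀ ∧ T ω = t}).toReal)
            (fun pr : ℤ × ℤ =>
               (Pθ ({ω | (UB ω, RB ω) = pr} ∩ {ω | T ω = t})
                  / Pθ {ω | T ω = t}).toReal) := by
  classical
  set ZB : Ω → B → ℕ := fun ω α => Z α ω
  set Zc : Ω → (Bᶜ : Finset I) → ℕ := fun ω α => Z α ω
  set φ : (B → ℕ) → ℤ × ℤ := fun b => ∑ α : B, (u α * (b α : ℤ), w α * (b α : ℤ))
  set ψ : ((Bᶜ : Finset I) → ℕ) → ℤ × ℤ :=
    fun c => ∑ α : (Bᶜ : Finset I), (u α * (c α : ℤ), w α * (c α : ℤ))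
  have hsplit : ∀ ω, (UI ω, T ω) = φ (ZB ω) + ψ (Zc ω) := fun ω => by
    rw [hUI, hT, prod_mk_sum, ← Finset.sum_add_sum_compl B, ← Finset.sum_coe_sort B,
      ← Finset.sum_coe_sort Bᶜ]
  have hevent : ∀ y, {ω | (UB ω, RB ω) = y} = (φ ∘ ZB) ⁻¹' {y} := fun y => by
    simp only [hUB, hRB, prod_mk_sum, ← Finset.sum_coe_sort B]
    rfl
  have hZ : Measurable fun ω α => Z α ω := measurable_pi_lambda _ hZmeas
  have hUIm : Measurable UI :=
    hUI ▸ (measurable_of_countable fun a : I → ℕ => ∑ α, u α * (a α : ℤ)).comp hZ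
  have hTm : Measurable T :=
    hT ▸ (measurable_of_countable fun a : I → ℕ => ∑ α, w α * (a α : ℤ)).comp hZ
  set A : Set Ω := {ω | T ω = t}
  set D : Set Ω := {ω | UI ω = u₀ ∧ T ω = t}
  have hA : MeasurableSet A := hTm (measurableSet_singleton t)
  have hD : MeasurableSet D := (hUIm (measurableSet_singleton u₀)).inter hA
  have hEZ₀ : 0 < EZ := by
    rw [hEZ]
    refine (integral_pos_iff_support_of_nonneg (fun ω => (zpow_pos hθ _).le) hint).mpr ?_
    simp [Function.support, (zpow_pos hθ _).ne']
  have hL1 : ∀ b, μ ({ω | (fun α : B => C ω α) = b} ∩ {ω | U ω = u₀}) / μ {ω | U ω = u₀}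
      = Pθ[ZB ⁻¹' {b} | D] := fun b => by
    rw [hPθ, cond_withDensity_eq_cond_of_const hD
      (ENNReal.ofReal_pos.mpr (div_pos (zpow_pos hθ _) hEZ₀)).ne' ENNReal.ofReal_ne_top
      fun ω hω => by rw [hω.1]]
    subst hU hUI
    exact measure_preimage_inter_div_eq_cond_of_law hCmeas hZ hA hC
      {a | (fun α : B => a α) = b} {a | ∑ α, u α * (a α : ℤ) = u₀}
  have hL2 : ∀ b, PθC {ω | (fun α : B => C ω α) = b} = Pθ[ZB ⁻¹' {b} | A] := fun b => by
    subst hPθC hEU hU hPθ hUI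
    exact withDensity_preimage_eq_cond_of_law hCmeas hZ hA hpos hC
      (g := fun a => θ ^ ∑ α, u α * (a α : ℤ)) (fun a => (zpow_pos hθ _).le)
      hint.lintegral_lt_top.ne hEZ₀ {a | (fun α : B => a α) = b}
  simp only [hL1, hL2, hevent, measure_inter_div_eq_cond hA, measure_inter_div_eq_cond hD]
  subst hPθ
  exact dTV_cond_eq_dTV_cond_comp_of_indepFun (V₁ := ZB) (V₂ := Zc)
    (measurable_pi_lambda _ fun α => hZmeas α) (measurable_pi_lambda _ fun α => hZmeas α)
    (hindep.indepFun_finset B Bᶜ disjoint_compl_right hZmeas) φ ψ hsplit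
    (fun p : ℤ × ℤ => ENNReal.ofReal (θ ^ p.1 / EZ)) {p | p.1 = u₀ ∧ p.2 = t} {p | p.2 = t}

/-- Large deviations, third leg of the triangle: with
`C ≝ (Z | T = t)`, `U = Σ u(α) C_α`, `P_θ` the tilted law of `Z` (density
`θ^{u·Z}/E[θ^{u·Z}]`) and the tilted law of `C` (density `θ^U/E[θ^U]`), for `B ⊆ I`,
`d_TV( L(C_B | U = u₀), L_θ(C_B) )
  = d_TV( L_θ((U_B,R_B) | U_I = u₀, T = t), L_θ((U_B,R_B) | T = t) )`. -/
theorem stmt17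
    {Ω : Type*} [MeasurableSpace Ω] (μ : Measure Ω) [IsProbabilityMeasure μ]
    {I : Type*} [Fintype I]
    (Z : I → Ω → ℕ) (hZmeas : ∀ α, Measurable (Z α))
    (hindep : iIndepFun Z μ)
    (w u : I → ℤ) (t : ℤ)
    (T UI : Ω → ℤ)
    (hT : T = fun ω => ∑ α, w α * (Z α ω : ℤ))
    (hUI : UI = fun ω => ∑ α, u α * (Z α ω : ℤ))
    (hpos : μ {ω | T ω = t} ≠ 0)
    (C : Ω → I → ℕ) (hCmeas : Measurable C)
    (hC : ∀ a : I → ℕ,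
      μ {ω | C ω = a}
        = μ ({ω | (fun α => Z α ω) = a} ∩ {ω | T ω = t}) / μ {ω | T ω = t})
    (U : Ω → ℤ) (hU : U = fun ω => ∑ α, u α * (C ω α : ℤ))
    (θ : ℝ) (hθ : 0 < θ)
    (hint : Integrable (fun ω => θ ^ (∑ α, u α * (Z α ω : ℤ))) μ)
    (EZ EU : ℝ)
    (hEZ : EZ = ∫ ω, θ ^ (∑ α, u α * (Z α ω : ℤ)) ∂μ)
    (hEU : EU = ∫ ω, θ ^ (U ω) ∂μ)
    (Pθ PθC : Measure Ω)
    (hPθ : Pθ = μ.withDensity (fun ω => ENNReal.ofReal (θ ^ (UI ω) / EZ)))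
    (hPθC : PθC = μ.withDensity (fun ω => ENNReal.ofReal (θ ^ (U ω) / EU)))
    (B : Finset I)
    (UB RB : Ω → ℤ)
    (hUB : UB = fun ω => ∑ α ∈ B, u α * (Z α ω : ℤ))
    (hRB : RB = fun ω => ∑ α ∈ B, w α * (Z α ω : ℤ))
    (u₀ : ℤ) (hu₀ : μ {ω | U ω = u₀} ≠ 0) :
    dTV (fun b : B → ℕ =>
           (μ ({ω | (fun α : B => C ω α) = b} ∩ {ω | U ω = u₀})
              / μ {ω | U ω = u₀}).toReal)
        (fun b : B → ℕ => (PθC {ω | (fun α : B => C ω α) = b}).toReal)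
      = dTV (fun pr : ℤ × ℤ =>
               (Pθ ({ω | (UB ω, RB ω) = pr} ∩ {ω | UI ω = u₀ ∧ T ω = t})
                  / Pθ {ω | UI ω = u₀ ∧ T ω = t}).toReal)
            (fun pr : ℤ × ℤ =>
               (Pθ ({ω | (UB ω, RB ω) = pr} ∩ {ω | T ω = t})
                  / Pθ {ω | T ω = t}).toReal) :=
  stmt17_general μ Z hZmeas hindep w u t T UI hT hUI hpos C hCmeas hC U hU θ hθ hint EZ EU hEZ hEU
    Pθ PθC hPθ hPθC B UB RB hUB hRB u₀
end

section
/- Fix n ≥ 1, θ > 0, x > 0, and nonnegative integers m_1, ..., m_n. Define p_θ(n) = n! x^{−n} Σ_{a ∈ ℕ^n : Σ_{j=1}^n j a_j = n} Π_{j=1}^n (θ m_j x^j / j!)^{a_j} / a_j!, and more generally p_θ(k) for 0 ≤ k ≤ n by the same formula with n replaced by k in the constraint and the prefactor (with p_θ(0) = 1); assume p_θ(n) > 0. Let C = (C_1,...,C_n) be a random element of ℕ^n with P_θ(C = a) = 1(Σ_{j=1}^n j a_j = n) · (n!/(x^n p_θ(n))) · Π_{j=1}^n (θ m_j x^j/j!)^{a_j}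 / a_j!. Then for any b ≤ n and (r_1, ..., r_b) ∈ ℕ^b with m = r_1 + 2r_2 + ... + b r_b, the joint falling factorial moments satisfy E_θ[ Π_{j=1}^b (C_j)_{[r_j]} ] = 1(m ≤ n) · x^{−m} · (n!/p_θ(n)) · (p_θ(n−m)/(n−m)!) · Π_{j=1}^b (θ m_j x^j / j!)^{r_j}, where y_{[r]} = y(y−1)···(y−r+1) denotes the falling factorial and y_{[0]} = 1. -/
open MeasureTheory ProbabilityTheory

@[to_additive]
lemma prodCastLE {M : Type*} [CommMonoid M] {n b : ℕ} (hb : b ≤ n) (f : Fin n → M)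
    (hf : ∀ j : Fin n, b ≤ j.val → f j = 1) :
    ∏ j : Fin n, f j = ∏ j : Fin b, f (Fin.castLE hb j) := by
  classical
  calc ∏ j : Fin n, f j = ∏ j ∈ Finset.univ.map (Fin.castLEEmb hb), f j := by
        refine (Finset.prod_subset (Finset.subset_univ _) ?_).symm
        intro j _ hj
        apply hf
        by_contra h
        push_neg at h
        exact hj (Finset.mem_map.2 ⟨⟨j.val, h⟩, Finset.mem_univ _, by simp [Fin.castLEEmb]⟩)
    _ = ∏ j : Fin b, f (Fin.castLE hb j) := by rw [Finset.prod_map]; rfl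

/-- Falling factorial moments for assemblies under the
`θ`-biased measure.  With `p_θ(k) = k! x^{-k} Σ_{a : Σ j a_j = k} Π_j
(θ m_j x^j/j!)^{a_j}/a_j!` and `C` distributed by
`P_θ(C = a) = 1(Σ j a_j = n)·(n!/(x^n p_θ(n)))·Π_j (θ m_j x^j/j!)^{a_j}/a_j!`,
for `b ≤ n`, `r ∈ ℕ^b` and `M = Σ_{j=1}^b j r_j`:
`E_θ[Π_{j=1}^b (C_j)_{[r_j]}] = 1(M ≤ n)·x^{-M}·(n!/p_θ(n))·(p_θ(n-M)/(n-M)!)·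
Π_{j=1}^b (θ m_j x^j/j!)^{r_j}`.
(Coordinates are indexed by `j : Fin n`, coordinate `j` having size `j+1`; the
expectation of the discrete functional is written as a sum over `a ∈ ℕ^n`.) -/
theorem stmt18
    {Ω : Type*} [MeasurableSpace Ω] (μ : Measure Ω) [IsProbabilityMeasure μ]
    (n : ℕ) (hn : 1 ≤ n)
    (θ x : ℝ) (hθ : 0 < θ) (hx : 0 < x)
    (m : Fin n → ℕ)
    (pθ : ℕ → ℝ)
    (hpθ : ∀ k : ℕ, pθ k
      = (k.factorial : ℝ) * x ^ (-(k : ℤ)) *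
          ∑' a : Fin n → ℕ,
            (if (∑ j, (j.val + 1) * a j) = k
              then ∏ j, (θ * m j * x ^ (j.val + 1) / ((j.val + 1).factorial : ℝ)) ^ (a j)
                      / ((a j).factorial : ℝ)
              else 0))
    (hpos : 0 < pθ n)
    (C : Ω → Fin n → ℕ) (hCmeas : Measurable C)
    (hC : ∀ a : Fin n → ℕ,
      (μ {ω | C ω = a}).toReal
        = (if (∑ j, (j.val + 1) * a j) = n then (1 : ℝ) else 0)
            * ((n.factorial : ℝ) / (x ^ n * pθ n))
            * ∏ j, (θ * m j * x ^ (j.val + 1) / ((j.val + 1).factorial : ℝ)) ^ (a j)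
                / ((a j).factorial : ℝ))
    (b : ℕ) (hb : b ≤ n) (r : Fin b → ℕ)
    (M : ℕ) (hM : M = ∑ j : Fin b, (j.val + 1) * r j) :
    (∑' a : Fin n → ℕ,
        (μ {ω | C ω = a}).toReal
          * ∏ j : Fin b, ((a (Fin.castLE hb j)).descFactorial (r j) : ℝ))
      = if M ≤ n then
          x ^ (-(M : ℤ)) * ((n.factorial : ℝ) / pθ n)
            * (pθ (n - M) / ((n - M).factorial : ℝ))
            * ∏ j : Fin b,
                (θ * m (Fin.castLE hb j) * x ^ (j.val + 1)
                  / ((j.val + 1).factorial : ℝ)) ^ (r j)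
        else 0 := by
  classical
  -- abbreviate the weights
  set w : Fin n → ℝ := fun j => θ * m j * x ^ (j.val + 1) / ((j.val + 1).factorial : ℝ)
    with hw
  have hC' : ∀ a : Fin n → ℕ,
      (μ {ω | C ω = a}).toReal
        = (if (∑ j, (j.val + 1) * a j) = n then (1 : ℝ) else 0)
            * ((n.factorial : ℝ) / (x ^ n * pθ n))
            * ∏ j, w j ^ (a j) / ((a j).factorial : ℝ) := hC
  have hpθ' : ∀ k : ℕ, pθ k
      = (k.factorial : ℝ) * x ^ (-(k : ℤ)) *
          ∑' a : Fin n → ℕ,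
            (if (∑ j, (j.val + 1) * a j) = k
              then ∏ j, w j ^ (a j) / ((a j).factorial : ℝ)
              else 0) := hpθ
  -- sum of b coordinates bounded by full sum
  have hsumle : ∀ a : Fin n → ℕ,
      (∑ j : Fin b, (j.val + 1) * a (Fin.castLE hb j)) ≤ ∑ j : Fin n, (j.val + 1) * a j := by
    intro a
    calc (∑ j : Fin b, (j.val + 1) * a (Fin.castLE hb j))
        = ∑ j ∈ Finset.univ.map (Fin.castLEEmb hb), (j.val + 1) * a j := by
          rw [Finset.sum_map]; rfl
      _ ≤ ∑ j : Fin n, (j.val + 1) * a j :=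
          Finset.sum_le_sum_of_subset (Finset.subset_univ _)
  by_cases hMn : M ≤ n
  · rw [if_pos hMn]
    set rbar : Fin n → ℕ := fun j => if h : j.val < b then r ⟨j.val, h⟩ else 0 with hrbar
    have hrbar0 : ∀ j : Fin n, b ≤ j.val → rbar j = 0 := by
      intro j hj; simp [hrbar, Nat.not_lt.2 hj]
    have hrbarc : ∀ j : Fin b, rbar (Fin.castLE hb j) = r j := by
      intro j; simp [hrbar, j.isLt]
    have hMsum : ∑ j : Fin n, (j.val + 1) * rbar j = M := by
      rw [hM, sumCastLE hb (f := fun j => (j.val + 1) * rbar j)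
        (fun j hj => by simp [hrbar0 j hj])]
      exact Finset.sum_congr rfl fun j _ => by simp [hrbarc]
    set e : (Fin n → ℕ) → (Fin n → ℕ) := fun a j => a j + rbar j with he
    have hinj : Function.Injective e := by
      intro a a' h
      funext j
      have := congrFun h j
      simpa [he] using this
    set F : (Fin n → ℕ) → ℝ := fun a =>
      (μ {ω | C ω = a}).toReal
        * ∏ j : Fin b, ((a (Fin.castLE hb j)).descFactorial (r j) : ℝ) with hF
    have hFdef : ∀ a : Fin n → ℕ, F a =
      (μ {ω | C ω = a}).toReal
        * ∏ j : Fin b, ((a (Fin.castLE hb j)).descFactorial (r j) : ℝ) := fun _ => rfl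
    have hsupp : Function.support F ⊆ Set.range e := by
      intro a ha
      have hge : ∀ j : Fin n, rbar j ≤ a j := by
        intro j
        by_cases hjb : j.val < b
        · by_contra hlt
          push_neg at hlt
          have hlt' : a (Fin.castLE hb ⟨j.val, hjb⟩) < r ⟨j.val, hjb⟩ := by
            have hcj : Fin.castLE hb ⟨j.val, hjb⟩ = j := by ext; rfl
            rw [hcj]
            simpa [hrbar, hjb] using hlt
          apply ha
          rw [hFdef]
          have hz : ((a (Fin.castLE hb ⟨j.val, hjb⟩)).descFactorial (r ⟨j.val, hjb⟩) : ℝ) = 0 := by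
            rw [Nat.descFactorial_eq_zero_iff_lt.2 hlt']; simp
          rw [Finset.prod_eq_zero (Finset.mem_univ ⟨j.val, hjb⟩) hz, mul_zero]
        · rw [hrbar0 j (Nat.not_lt.1 hjb)]; exact Nat.zero_le _
      refine ⟨fun j => a j - rbar j, funext fun j => ?_⟩
      have := hge j
      show a j - rbar j + rbar j = a j
      omega
    rw [← hinj.tsum_eq hsupp]
    -- value of F on shifted configurations
    set K : ℝ := ((n.factorial : ℝ) / (x ^ n * pθ n)) * ∏ j : Fin b, w (Fin.castLE hb j) ^ r j
      with hK
    have hkey : ∀ a : Fin n → ℕ,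
        F (e a) = K * (if (∑ j, (j.val + 1) * a j) = n - M
          then ∏ j, w j ^ a j / ((a j).factorial : ℝ) else 0) := by
      intro a
      have hsum : (∑ j, (j.val + 1) * (e a j)) = (∑ j, (j.val + 1) * a j) + M := by
        simp only [he, Nat.mul_add, Finset.sum_add_distrib, hMsum]
      have hcond : ((∑ j, (j.val + 1) * (e a j)) = n) ↔ ((∑ j, (j.val + 1) * a j) = n - M) := by
        rw [hsum]; omega
      -- product identity
      have h2 : (∏ j : Fin n, (((e a j)).descFactorial (rbar j) : ℝ))
          = ∏ j : Fin b, (((e a (Fin.castLE hb j))).descFactorial (r j) : ℝ) := by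
        rw [prodCastLE hb (f := fun j => (((e a j)).descFactorial (rbar j) : ℝ))
          (fun j hj => by simp [hrbar0 j hj])]
        exact Finset.prod_congr rfl fun j _ => by rw [hrbarc]
      have h3 : (∏ j : Fin n, w j ^ rbar j) = ∏ j : Fin b, w (Fin.castLE hb j) ^ r j := by
        rw [prodCastLE hb (f := fun j => w j ^ rbar j)
          (fun j hj => by simp [hrbar0 j hj])]
        exact Finset.prod_congr rfl fun j _ => by rw [hrbarc]
      have hprod :
          (∏ j, w j ^ (e a j) / (((e a j)).factorial : ℝ))
            * ∏ j : Fin b, (((e a (Fin.castLE hb j))).descFactorial (r j) : ℝ)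
          = (∏ j : Fin b, w (Fin.castLE hb j) ^ r j)
            * ∏ j, w j ^ a j / ((a j).factorial : ℝ) := by
        rw [← h2, ← h3, ← Finset.prod_mul_distrib, ← Finset.prod_mul_distrib]
        refine Finset.prod_congr rfl fun j _ => ?_
        have hfac : ((e a j).factorial : ℝ)
            = ((a j).factorial : ℝ) * ((e a j).descFactorial (rbar j) : ℝ) := by
          have h := Nat.factorial_mul_descFactorial
            (n := e a j) (k := rbar j) (by show rbar j ≤ a j + rbar j; omega)
          have hsub : e a j - rbar j = a j := by show a j + rbar j - rbar j = a j; omega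
          rw [hsub] at h
          exact_mod_cast h.symm
        have hd0 : (e a j).descFactorial (rbar j) ≠ 0 := by
          rw [Ne, Nat.descFactorial_eq_zero_iff_lt]
          show ¬ (a j + rbar j < rbar j)
          omega
        have hdpos : (0 : ℝ) < ((e a j).descFactorial (rbar j) : ℝ) := by
          exact_mod_cast Nat.pos_of_ne_zero hd0
        have hfpos : (0 : ℝ) < ((a j).factorial : ℝ) := by
          exact_mod_cast (a j).factorial_pos
        have hpow : w j ^ (e a j) = w j ^ rbar j * w j ^ a j := by
          rw [← pow_add]
          show w j ^ (a j + rbar j) = w j ^ (rbar j + a j)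
          rw [Nat.add_comm]
        rw [hfac, hpow]
        field_simp
      rw [hFdef, hC' (e a)]
      by_cases hc : (∑ j, (j.val + 1) * (e a j)) = n
      · rw [if_pos hc, if_pos (hcond.1 hc), hK, one_mul, mul_assoc, hprod]
        ring
      · rw [if_neg hc, if_neg fun h => hc (hcond.2 h)]
        ring
    rw [tsum_congr hkey, tsum_mul_left]
    -- identify the remaining tsum via hpθ
    have hT : (∑' a : Fin n → ℕ,
        (if (∑ j, (j.val + 1) * a j) = n - M
          then ∏ j, w j ^ a j / ((a j).factorial : ℝ) else 0))
        = pθ (n - M) * x ^ (n - M) / ((n - M).factorial : ℝ) := by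
      have h := hpθ' (n - M)
      have hxz : x ^ (-((n - M : ℕ) : ℤ)) = (x ^ (n - M))⁻¹ := by
        rw [zpow_neg, zpow_natCast]
      rw [hxz] at h
      have hfpos : (0 : ℝ) < ((n - M).factorial : ℝ) := by
        exact_mod_cast (n - M).factorial_pos
      rw [h]
      field_simp
    rw [hT, hK]
    have hR : (∏ j : Fin b,
        (θ * m (Fin.castLE hb j) * x ^ (j.val + 1) / ((j.val + 1).factorial : ℝ)) ^ (r j))
        = ∏ j : Fin b, w (Fin.castLE hb j) ^ r j := rfl
    rw [hR]
    have hxpow : x ^ (n - M) * x ^ M = x ^ n := by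
      rw [← pow_add]; congr 1; omega
    have hxM : x ^ (-(M : ℤ)) = (x ^ M)⁻¹ := by rw [zpow_neg, zpow_natCast]
    have hxn0 : x ^ n ≠ 0 := pow_ne_zero _ hx.ne'
    have hxM0 : x ^ M ≠ 0 := pow_ne_zero _ hx.ne'
    have hp0 : pθ n ≠ 0 := hpos.ne'
    have hf0 : ((n - M).factorial : ℝ) ≠ 0 := by
      exact_mod_cast (n - M).factorial_ne_zero
    rw [hxM, ← hxpow]
    generalize (∏ j : Fin b, w (Fin.castLE hb j) ^ r j) = P
    field_simp
  · rw [if_neg hMn]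
    have hzero : ∀ a : Fin n → ℕ,
        (μ {ω | C ω = a}).toReal
          * ∏ j : Fin b, ((a (Fin.castLE hb j)).descFactorial (r j) : ℝ) = 0 := by
      intro a
      by_cases hsum : (∑ j, (j.val + 1) * a j) = n
      · have hex : ∃ j : Fin b, a (Fin.castLE hb j) < r j := by
          by_contra h
          push_neg at h
          have h1 : M ≤ ∑ j : Fin b, (j.val + 1) * a (Fin.castLE hb j) := by
            rw [hM]
            exact Finset.sum_le_sum fun j _ => Nat.mul_le_mul_left _ (h j)
          have h2 := hsumle a
          omega
        obtain ⟨j, hj⟩ := hex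
        have hz : ((a (Fin.castLE hb j)).descFactorial (r j) : ℝ) = 0 := by
          rw [Nat.descFactorial_eq_zero_iff_lt.2 hj]; simp
        rw [Finset.prod_eq_zero (Finset.mem_univ j) hz, mul_zero]
      · rw [hC a, if_neg hsum]; ring
    rw [tsum_congr hzero, tsum_zero]
end

section
/- Let n ≥ 1, B ⊆ {1, ..., n}, θ > 0, and λ_1, ..., λ_n ≥ 0. Let Z_1, ..., Z_n be independent Poisson random variables with E Z_i = θ λ_i, and let R_B = Σ_{i∈B} i Z_i. Set p_B(k) = P(R_B = k) for k ∈ ℕ and g_B(i) = θ i λ_i 1(i ∈ B). Then p_B(0) = exp(−Σ_{i∈B} θ λ_i), and for every k ≥ 1, k · p_B(k) = Σ_{i=1}^k g_B(i) p_B(k − i). -/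
open MeasureTheory ProbabilityTheory PowerSeries Finset

/-!
By independence, the generating function `P(x) = ∑ₖ p_B(k) xᵏ` of `R_B` is the product over
`i ∈ B` of the generating functions of `i Zᵢ`, namely `exp (θ λᵢ (xⁱ - 1))`. Each factor `F`
satisfies `x F' = θ i λᵢ xⁱ F`, and an equation of the shape `x F' = G F` is multiplicative in `F`
and additive in `G`, so `x P' = (∑_{i ∈ B} θ i λᵢ xⁱ) P`. Comparing coefficients of `xᵏ` gives the
recursion; the constant term gives `p_B(0)`.
-/

theorem Derivation.mul_map_prod_eq_sum_mul_prod {R A ι : Type*} [CommSemiring R] [CommSemiring A]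
    [Algebra R A] (D : Derivation R A A) (x : A) {F G : ι → A} (s : Finset ι)
    (h : ∀ i ∈ s, x * D (F i) = G i * F i) :
    x * D (∏ i ∈ s, F i) = (∑ i ∈ s, G i) * ∏ i ∈ s, F i := by
  classical
  induction s using Finset.induction_on with
  | empty => simp
  | insert a s ha ih =>
    rw [prod_insert ha, sum_insert ha, D.leibniz, smul_eq_mul, smul_eq_mul, mul_add,
      mul_left_comm, ih fun i hi => h i (mem_insert_of_mem hi), mul_left_comm x,
      h a (mem_insert_self a s)]
    ring

namespace PowerSeries

variable {R : Type*}

theorem coeff_X_mul_derivative [CommSemiring R] (F : R⟦X⟧) (k : ℕ) :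
    coeff k (X * d⁄dX R F) = k * coeff k F := by
  cases k with
  | zero => simp
  | succ k => rw [coeff_succ_X_mul, coeff_derivative, mul_comm]; push_cast; rfl

theorem natCast_mul_coeff_eq_sum_of_X_mul_derivative [CommSemiring R] {P G : R⟦X⟧}
    (h : X * d⁄dX R P = G * P) (hG : constantCoeff G = 0) (k : ℕ) :
    k * coeff k P = ∑ i ∈ Icc 1 k, coeff i G * coeff (k - i) P := by
  rw [← coeff_X_mul_derivative, h, coeff_mul,
    Nat.sum_antidiagonal_eq_sum_range_succ (fun i j => coeff i G * coeff j P),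
    Nat.range_succ_eq_Icc_zero, Icc_eq_cons_Ioc (Nat.zero_le k), sum_cons,
    ← Icc_add_one_left_eq_Ioc, zero_add]
  simp [hG]

theorem X_mul_derivative_expand [CommRing R] {F G : R⟦X⟧} (a : ℕ) (ha : a ≠ 0)
    (h : X * d⁄dX R F = G * F) :
    X * d⁄dX R (expand a ha F) = ((a : R⟦X⟧) * expand a ha G) * expand a ha F := by
  have hX : X * X ^ (a - 1) = (X ^ a : R⟦X⟧) := by
    rw [← pow_succ', Nat.sub_add_cancel (Nat.one_le_iff_ne_zero.2 ha)]
  calc X * d⁄dX R (expand a ha F)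
      = (a : R⟦X⟧) * (expand a ha X * expand a ha (d⁄dX R F)) := by
        -- chain rule for `F (Xᵃ)`
        rw [expand_X, expand_apply a ha F, derivative_subst (HasSubst.X_pow ha), derivative_pow,
          derivative_X, ← expand_apply a ha, ← hX]
        ring
    _ = ((a : R⟦X⟧) * expand a ha G) * expand a ha F := by
        rw [← map_mul, h, map_mul, mul_assoc]

end PowerSeries

namespace ProbabilityTheory

variable {Ω : Type*} [MeasurableSpace Ω] {μ : Measure Ω}

noncomputable def pmfSeries (μ : Measure Ω) (U : Ω → ℕ) : ℝ⟦X⟧ :=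
  PowerSeries.mk fun k => μ.real {ω | U ω = k}

@[simp]
theorem coeff_pmfSeries (U : Ω → ℕ) (k : ℕ) : coeff k (pmfSeries μ U) = μ.real {ω | U ω = k} :=
  coeff_mk _ _

theorem pmfSeries_zero [IsProbabilityMeasure μ] : pmfSeries μ (fun _ => 0) = 1 := by
  ext k
  rcases eq_or_ne k 0 with rfl | hk
  · simp
  · simp [coeff_one, hk, hk.symm]

theorem IndepFun.pmfSeries_add [IsFiniteMeasure μ] {U V : Ω → ℕ} (hU : Measurable U)
    (hV : Measurable V) (h : IndepFun U V μ) :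
    pmfSeries μ (fun ω => U ω + V ω) = pmfSeries μ U * pmfSeries μ V := by
  ext k
  have hunion : {ω | U ω + V ω = k}
      = ⋃ x ∈ antidiagonal k, {ω | U ω = x.1} ∩ {ω | V ω = x.2} := by
    ext ω
    simp
  have hdisj : Set.PairwiseDisjoint (antidiagonal k : Set (ℕ × ℕ))
      fun x => {ω | U ω = x.1} ∩ {ω | V ω = x.2} := by
    intro x _ y _ hxy
    refine Set.disjoint_left.2 fun ω hx hy => hxy ?_
    exact Prod.ext (hx.1.symm.trans hy.1) (hx.2.symm.trans hy.2)
  rw [coeff_mul, coeff_pmfSeries, hunion, measureReal_biUnion_finset hdisj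
    fun x _ => (hU (measurableSet_singleton _)).inter (hV (measurableSet_singleton _))]
  refine sum_congr rfl fun x _ => ?_
  rw [coeff_pmfSeries, coeff_pmfSeries, measureReal_def, measureReal_def, measureReal_def,
    ← ENNReal.toReal_mul]
  exact congrArg _ (h.measure_inter_preimage_eq_mul _ _
    (measurableSet_singleton x.1) (measurableSet_singleton x.2))

theorem iIndepFun.pmfSeries_sum {ι : Type*} {Y : ι → Ω → ℕ} (h : iIndepFun Y μ)
    (hY : ∀ i, Measurable (Y i)) (s : Finset ι) :
    pmfSeries μ (fun ω => ∑ i ∈ s, Y i ω) = ∏ i ∈ s, pmfSeries μ (Y i) := by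
  have : IsProbabilityMeasure μ := h.isProbabilityMeasure
  classical
  induction s using Finset.induction_on with
  | empty => simpa using pmfSeries_zero
  | insert a s ha ih =>
    have hindep : IndepFun (Y a) (fun ω => ∑ i ∈ s, Y i ω) μ := by
      simpa only [← Finset.sum_apply] using (h.indepFun_finsetSum_of_notMem hY ha).symm
    simp_rw [sum_insert ha, prod_insert ha,
      hindep.pmfSeries_add (hY a) (Finset.measurable_fun_sum s fun i _ => hY i), ih]

theorem pmfSeries_zero_mul {U : Ω → ℕ} (a : ℕ) (ha : a ≠ 0) :
    pmfSeries μ (fun ω => a * U ω) = expand a ha (pmfSeries μ U) := by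
  ext m
  rw [coeff_expand, coeff_pmfSeries]
  split_ifs with hdvd
  · obtain ⟨j, rfl⟩ := hdvd
    simp [Nat.mul_div_cancel_left _ (Nat.pos_of_ne_zero ha), ha]
  · convert measureReal_empty (μ := μ)
    exact Set.eq_empty_of_forall_notMem fun ω hω => hdvd ⟨U ω, hω.symm⟩

theorem X_mul_derivative_pmfSeries_of_poisson {U : Ω → ℕ} {l : ℝ}
    (hU : ∀ k, μ.real {ω | U ω = k} = Real.exp (-l) * l ^ k / k.factorial) :
    X * d⁄dX ℝ (pmfSeries μ U) = (C l * X) * pmfSeries μ U := by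
  ext k
  cases k with
  | zero => simp [mul_comm (C l), mul_assoc]
  | succ k =>
    rw [coeff_succ_X_mul, coeff_derivative, mul_comm (C l), mul_assoc, coeff_succ_X_mul,
      coeff_C_mul, coeff_pmfSeries, coeff_pmfSeries, hU, hU, Nat.factorial_succ]
    push_cast
    field_simp
    ring

section PoissonWeightedSum

variable {ι : Type*} {Z : ι → Ω → ℕ} {s : Finset ι} {w : ι → ℕ} {l : ι → ℝ}

theorem iIndepFun.pmfSeries_weighted_sum (h : iIndepFun Z μ) (hZ : ∀ i, Measurable (Z i)) :
    pmfSeries μ (fun ω => ∑ i ∈ s, w i * Z i ω) = ∏ i ∈ s, pmfSeries μ fun ω => w i * Z i ω :=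
  (h.comp (fun i k => w i * k) fun _ => measurable_from_top).pmfSeries_sum
    (fun i => measurable_from_top.comp (hZ i)) s

theorem iIndepFun.X_mul_derivative_pmfSeries_poisson_weighted_sum (h : iIndepFun Z μ)
    (hZ : ∀ i, Measurable (Z i)) (hw : ∀ i ∈ s, w i ≠ 0)
    (hpois : ∀ i ∈ s, ∀ k, μ.real {ω | Z i ω = k} = Real.exp (-l i) * l i ^ k / k.factorial) :
    X * d⁄dX ℝ (pmfSeries μ fun ω => ∑ i ∈ s, w i * Z i ω)
      = (∑ i ∈ s, C (w i * l i) * X ^ w i) * pmfSeries μ fun ω => ∑ i ∈ s, w i * Z i ω := by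
  rw [h.pmfSeries_weighted_sum hZ]
  refine (d⁄dX ℝ).mul_map_prod_eq_sum_mul_prod X s fun i hi => ?_
  rw [pmfSeries_zero_mul (w i) (hw i hi), X_mul_derivative_expand (w i) (hw i hi)
    (X_mul_derivative_pmfSeries_of_poisson (hpois i hi)), map_mul, expand_C, expand_X, map_mul,
    ← map_natCast C, ← mul_assoc, ← map_mul]

theorem iIndepFun.measureReal_poisson_weighted_sum_eq_zero (h : iIndepFun Z μ)
    (hZ : ∀ i, Measurable (Z i)) (hw : ∀ i ∈ s, w i ≠ 0)
    (hpois : ∀ i ∈ s, ∀ k, μ.real {ω | Z i ω = k} = Real.exp (-l i) * l i ^ k / k.factorial) :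
    μ.real {ω | ∑ i ∈ s, w i * Z i ω = 0} = Real.exp (-∑ i ∈ s, l i) := by
  rw [← coeff_pmfSeries, h.pmfSeries_weighted_sum hZ, coeff_zero_eq_constantCoeff, map_prod,
    ← sum_neg_distrib, Real.exp_sum]
  refine prod_congr rfl fun i hi => ?_
  rw [pmfSeries_zero_mul (w i) (hw i hi), constantCoeff_expand, ← coeff_zero_eq_constantCoeff,
    coeff_pmfSeries, hpois i hi]
  simp

end PoissonWeightedSum

end ProbabilityTheory

theorem stmt19_general
    {Ω : Type*} [MeasurableSpace Ω] (μ : Measure Ω)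
    (n : ℕ)
    (B : Finset ℕ) (hB : B ⊆ Finset.Icc 1 n)
    (θ : ℝ)
    (lam : ℕ → ℝ)
    (Z : ℕ → Ω → ℕ) (hZmeas : ∀ i, Measurable (Z i))
    (hpois : ∀ i ∈ Finset.Icc 1 n, ∀ k : ℕ,
      (μ {ω | Z i ω = k}).toReal
        = Real.exp (-(θ * lam i)) * (θ * lam i) ^ k / (k.factorial : ℝ))
    (hindep : iIndepFun
        (fun i : (Finset.Icc 1 n) => Z i) μ)
    (R : Ω → ℕ) (hR : R = fun ω => ∑ i ∈ B, i * Z i ω)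
    (p : ℕ → ℝ) (hp : ∀ k, p k = (μ {ω | R ω = k}).toReal)
    (g : ℕ → ℝ) (hg : ∀ i, g i = θ * i * lam i * (if i ∈ B then 1 else 0)) :
    p 0 = Real.exp (-(∑ i ∈ B, θ * lam i))
    ∧ ∀ k : ℕ, 1 ≤ k → (k : ℝ) * p k = ∑ i ∈ Finset.Icc 1 k, g i * p (k - i) := by
  let s := B.subtype (· ∈ Finset.Icc 1 n)
  have hR' : R = fun ω => ∑ i ∈ s, (i : ℕ) * Z i ω := by
    rw [hR]
    exact funext fun ω => (sum_subtype_of_mem (fun i => i * Z i ω) hB).symm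
  have hZ : ∀ i : Finset.Icc 1 n, Measurable (Z i) := fun i => hZmeas i
  have hw : ∀ i ∈ s, (i : ℕ) ≠ 0 := fun i _ => Nat.one_le_iff_ne_zero.1 (mem_Icc.1 i.2).1
  have hpois' : ∀ i ∈ s, ∀ k, μ.real {ω | Z i ω = k}
      = Real.exp (-(θ * lam i)) * (θ * lam i) ^ k / k.factorial := fun i _ => hpois i i.2
  have hp' : ∀ j, p j = coeff j (pmfSeries μ R) := fun j => by rw [coeff_pmfSeries, hp]; rfl
  constructor
  · rw [hp', coeff_pmfSeries, hR', hindep.measureReal_poisson_weighted_sum_eq_zero hZ hw hpois',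
      sum_subtype_of_mem (fun i => θ * lam i) hB]
  · intro k _
    have hcoeff : ∀ j, coeff j (∑ i ∈ s, C ((i : ℕ) * (θ * lam i)) * X ^ (i : ℕ)) = g j := by
      intro j
      simp_rw [map_sum, coeff_C_mul_X_pow]
      rw [sum_subtype_of_mem (fun i => if j = i then i * (θ * lam i) else 0) hB, sum_ite_eq, hg]
      split_ifs <;> ring
    simp_rw [hp', ← hcoeff]
    refine natCast_mul_coeff_eq_sum_of_X_mul_derivative ?_ ?_ k
    · rw [hR']
      exact hindep.X_mul_derivative_pmfSeries_poisson_weighted_sum hZ hw hpois'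
    · rw [← coeff_zero_eq_constantCoeff, hcoeff, hg]
      simp

/-- Recursion for the density of a weighted sum of independent
Poisson variables: with `Z_i` independent Poisson of mean `θ λ_i` (for
`1 ≤ i ≤ n`), `R_B = Σ_{i∈B} i Z_i`, `p_B(k) = P(R_B = k)` and
`g_B(i) = θ i λ_i 1(i ∈ B)`, one has `p_B(0) = exp(-Σ_{i∈B} θ λ_i)` and
`k p_B(k) = Σ_{i=1}^k g_B(i) p_B(k-i)` for all `k ≥ 1`. -/
theorem stmt19
    {Ω : Type*} [MeasurableSpace Ω] (μ : Measure Ω) [IsProbabilityMeasure μ]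
    (n : ℕ) (hn : 1 ≤ n)
    (B : Finset ℕ) (hB : B ⊆ Finset.Icc 1 n)
    (θ : ℝ) (hθ : 0 < θ)
    (lam : ℕ → ℝ) (hlam : ∀ i ∈ Finset.Icc 1 n, 0 ≤ lam i)
    (Z : ℕ → Ω → ℕ) (hZmeas : ∀ i, Measurable (Z i))
    (hpois : ∀ i ∈ Finset.Icc 1 n, ∀ k : ℕ,
      (μ {ω | Z i ω = k}).toReal
        = Real.exp (-(θ * lam i)) * (θ * lam i) ^ k / (k.factorial : ℝ))
    (hindep : iIndepFun
        (fun i : (Finset.Icc 1 n) => Z i) μ)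
    (R : Ω → ℕ) (hR : R = fun ω => ∑ i ∈ B, i * Z i ω)
    (p : ℕ → ℝ) (hp : ∀ k, p k = (μ {ω | R ω = k}).toReal)
    (g : ℕ → ℝ) (hg : ∀ i, g i = θ * i * lam i * (if i ∈ B then 1 else 0)) :
    p 0 = Real.exp (-(∑ i ∈ B, θ * lam i))
    ∧ ∀ k : ℕ, 1 ≤ k → (k : ℝ) * p k = ∑ i ∈ Finset.Icc 1 k, g i * p (k - i) :=
  stmt19_general μ n B hB θ lam Z hZmeas hpois hindep R hR p hp g hg
end
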